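/- arXiv:2201.06911 — 8 statements merged into one kernel-verified Lean document; each statement's English description precedes it below -/
import Mathlib

section
/- Let G be a generalized dicyclic group generated by A and t, let S be an inverse-closed subset of G∖{1} with ⟨S⟩ = G, t ∈ S, and H = ⟨S∖{t,t⁻¹}⟩ ≠ G. Then in the Cayley graph Cay(G,S), for every g ∈ G, each vertex x ∈ gH has exactly two neighbors outside the coset gH, namely xt and xt⁻¹. -/
open SimpleGraph Pointwise

/-- The Cayley graph of a group `G` with respect to a connection set `S`.
For an inverse-closed `S ⊆ G \ {1}` this agrees with the usual definition:
`g` and `h` are adjacent iff `g = h * s` for some `s ∈ S`. -/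
def cayleyGraph (G : Type*) [Group G] (S : Set G) : SimpleGraph G where
  Adj g h := g ≠ h ∧ (h⁻¹ * g ∈ S ∨ g⁻¹ * h ∈ S)
  symm := ⟨fun g h hgh => ⟨hgh.1.symm, hgh.2.symm⟩⟩
  loopless := ⟨fun g hg => hg.1 rfl⟩

/-- A connected graph is distance-regular if, for every `i`, the numbers
`cᵢ = |N(v) ∩ N_{i-1}(u)|`, `aᵢ = |N(v) ∩ N_i(u)|` and `bᵢ = |N(v) ∩ N_{i+1}(u)|`
do not depend on the choice of vertices `u, v` at distance `i`. -/
def SimpleGraph.IsDistRegular {V : Type*} (Γ : SimpleGraph V) : Prop :=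
  Γ.Connected ∧ ∀ i : ℕ, ∃ c a b : ℕ, ∀ u v : V, Γ.dist u v = i →
    (Γ.neighborSet v ∩ {w | Γ.dist u w = i - 1}).ncard = c ∧
    (Γ.neighborSet v ∩ {w | Γ.dist u w = i}).ncard = a ∧
    (Γ.neighborSet v ∩ {w | Γ.dist u w = i + 1}).ncard = b

/-- `G` is the generalized dicyclic group on the abelian subgroup `A` (of order
`2n`, `n > 1`, with unique involution `a = t ^ 2`) and the element `t`, i.e.
`G = ⟨A, t⟩` with `t² = a` and `t⁻¹ x t = x⁻¹` for all `x ∈ A`. -/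
structure IsGenDicyclic {G : Type*} [Group G] (A : Subgroup G) (t : G) : Prop where
  comm : ∀ x ∈ A, ∀ y ∈ A, x * y = y * x
  card : ∃ n : ℕ, 1 < n ∧ Nat.card A = 2 * n
  t_sq_mem : t ^ 2 ∈ A
  t_sq_order : orderOf (t ^ 2) = 2
  unique_involution : ∀ x ∈ A, orderOf x = 2 → x = t ^ 2
  gen : Subgroup.closure ((A : Set G) ∪ {t}) = ⊤
  conj : ∀ x ∈ A, t⁻¹ * x * t = x⁻¹

/-- Lemma 2.2: every vertex of the coset `gH` has exactly two neighbours
outside `gH`, namely `x * t` and `x * t⁻¹`. -/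
theorem neighbors_outside_coset_case_t
    {G : Type*} [Group G] (A : Subgroup G) (t : G) (hG : IsGenDicyclic A t)
    (S : Set G) (hS1 : (1 : G) ∉ S) (hSinv : ∀ x ∈ S, x⁻¹ ∈ S)
    (hSgen : Subgroup.closure S = ⊤) (htS : t ∈ S)
    (H : Subgroup G) (hHdef : H = Subgroup.closure (S \ {t, t⁻¹})) (hH : H ≠ ⊤)
    (g x : G) (hx : x ∈ g • (H : Set G)) :
    (cayleyGraph G S).neighborSet x ∩ {y | y ∉ g • (H : Set G)} = {x * t, x * t⁻¹}
      ∧ x * t ≠ x * t⁻¹ := by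

  have ht1 : t ≠ 1 := fun h => hS1 (h ▸ htS)
  have htinvS : t⁻¹ ∈ S := hSinv t htS
  have htsq : t * t ≠ 1 := by
    intro h
    have h2 := hG.t_sq_order
    rw [pow_two, h, orderOf_one] at h2
    omega
  have hSub : S \ {t, t⁻¹} ⊆ H := hHdef ▸ Subgroup.subset_closure
  have htH : t ∉ H := by
    intro ht
    apply hH
    rw [eq_top_iff, ← hSgen, Subgroup.closure_le]
    intro s hs
    by_cases hst : s = t
    · exact hst ▸ ht
    by_cases hst' : s = t⁻¹
    · exact hst' ▸ (inv_mem ht)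
    · exact hSub ⟨hs, by simp [hst, hst']⟩
  have htH' : t⁻¹ ∉ H := fun h => htH (by simpa using inv_mem h)
  have hcoset : ∀ y : G, y ∈ g • (H : Set G) ↔ g⁻¹ * y ∈ H := by
    intro y
    rw [Set.mem_smul_set_iff_inv_smul_mem]
    simp
  have hgx : g⁻¹ * x ∈ H := (hcoset x).mp hx
  constructor
  · ext y
    have adj_iff : y ∈ (cayleyGraph G S).neighborSet x ↔
        x ≠ y ∧ (y⁻¹ * x ∈ S ∨ x⁻¹ * y ∈ S) := Iff.rfl
    simp only [Set.mem_inter_iff, adj_iff, Set.mem_setOf_eq, Set.mem_insert_iff,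
      Set.mem_singleton_iff]
    constructor
    · rintro ⟨⟨hne, hadj⟩, hout⟩
      have hs : x⁻¹ * y ∈ S := by
        rcases hadj with h | h
        · simpa using hSinv _ h
        · exact h
      rcases eq_or_ne (x⁻¹ * y) t with h | h1
      · left; rw [← h, mul_inv_cancel_left]
      rcases eq_or_ne (x⁻¹ * y) t⁻¹ with h | h2
      · right; rw [← h, mul_inv_cancel_left]
      exfalso
      apply hout
      apply (hcoset y).mpr
      have heq : g⁻¹ * y = (g⁻¹ * x) * (x⁻¹ * y) := by group
      rw [heq]
      exact mul_mem hgx (hSub ⟨hs, by simp [h1, h2]⟩)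
    · rintro (rfl | rfl)
      · refine ⟨⟨fun h => ht1 (left_eq_mul.mp h), Or.inr (by simpa using htS)⟩, ?_⟩
        intro hmem
        apply htH
        have hm := (hcoset _).mp hmem
        have h2 : (g⁻¹ * x)⁻¹ * (g⁻¹ * (x * t)) = t := by group
        rw [← h2]; exact mul_mem (inv_mem hgx) hm
      · refine ⟨⟨fun h => ht1 (by simpa using left_eq_mul.mp h),
          Or.inr (by simpa using htinvS)⟩, ?_⟩
        intro hmem
        apply htH'
        have hm := (hcoset _).mp hmem
        have h2 : (g⁻¹ * x)⁻¹ * (g⁻¹ * (x * t⁻¹)) = t⁻¹ := by group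
        rw [← h2]; exact mul_mem (inv_mem hgx) hm
  · intro h
    have := mul_left_cancel h
    apply htsq
    nth_rewrite 2 [this]
    simp
end

section
/- Let G be a generalized dicyclic group generated by A and t, and let S be an inverse-closed subset of G∖{1} with ⟨S⟩ = G, t ∈ S, H = ⟨S∖{t,t⁻¹}⟩ ≠ G, and t² = a ∈ H. Suppose S∖{t,t⁻¹} ⊆ A and t² ∉ S. If the Cayley graph Γ = Cay(G,S) is distance-regular, then there exists x ∈ A with x² = a such that S = {x, x⁻¹, t, t⁻¹}, and Γ is isomorphic to K₄,₄. -/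
open SimpleGraph Pointwise

section Aux

lemma cay_adj {G : Type*} [Group G] {S : Set G} (hS1 : (1:G) ∉ S)
    (hSinv : ∀ x ∈ S, x⁻¹ ∈ S) {g h : G} :
    (cayleyGraph G S).Adj g h ↔ g⁻¹ * h ∈ S := by
  constructor
  · rintro ⟨hne, h1 | h2⟩
    · have := hSinv _ h1; rwa [mul_inv_rev, inv_inv] at this
    · exact h2
  · intro h
    refine ⟨fun he => ?_, Or.inr h⟩
    subst he; rw [inv_mul_cancel] at h; exact hS1 h

lemma dist_two_of {V : Type*} {Γ : SimpleGraph V} (hconn : Γ.Connected) {u v w : V}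
    (h1 : Γ.Adj u w) (h2 : Γ.Adj w v) (hne : u ≠ v) (hnadj : ¬ Γ.Adj u v) :
    Γ.dist u v = 2 := by
  have hle : Γ.dist u v ≤ 2 := by
    have := Γ.dist_le (SimpleGraph.Walk.cons h1 (SimpleGraph.Walk.cons h2 SimpleGraph.Walk.nil))
    simpa using this
  have h0 : Γ.dist u v ≠ 0 := fun h => hne (hconn.dist_eq_zero_iff.mp h)
  have h1' : Γ.dist u v ≠ 1 := fun h => hnadj (SimpleGraph.dist_eq_one_iff_adj.mp h)
  omega

def S8 : Set (QuaternionGroup 2) :=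
  {q | q = .a 1 ∨ q = .a 3 ∨ q = .xa 0 ∨ q = .xa 2}

instance S8.decMem : ∀ q, Decidable (q ∈ S8) := fun q =>
  inferInstanceAs (Decidable (q = .a 1 ∨ q = .a 3 ∨ q = .xa 0 ∨ q = .xa 2))

instance cayQ8.decAdj : DecidableRel (cayleyGraph (QuaternionGroup 2) S8).Adj := fun p q =>
  inferInstanceAs (Decidable (p ≠ q ∧ (q⁻¹ * p ∈ S8 ∨ p⁻¹ * q ∈ S8)))

lemma hS8_one : (1 : QuaternionGroup 2) ∉ S8 := by decide

lemma hS8_inv : ∀ x ∈ S8, x⁻¹ ∈ S8 := by decide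

def psiFun : QuaternionGroup 2 → Fin 4 ⊕ Fin 4 := fun q =>
  match q with
  | .a i => if i = 0 then .inl 0 else if i = 2 then .inl 1 else if i = 1 then .inr 0 else .inr 1
  | .xa i => if i = 1 then .inl 2 else if i = 3 then .inl 3 else if i = 0 then .inr 2 else .inr 3

lemma psi_bij : Function.Bijective psiFun := by decide

instance cbp.decAdj : DecidableRel (completeBipartiteGraph (Fin 4) (Fin 4)).Adj :=
  fun _ _ => inferInstanceAs (Decidable (_ ∨ _))

lemma q8_adj : ∀ p q : QuaternionGroup 2,
    (completeBipartiteGraph (Fin 4) (Fin 4)).Adj (psiFun p) (psiFun q) ↔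
      (cayleyGraph (QuaternionGroup 2) S8).Adj p q := by decide

noncomputable def iso2 : cayleyGraph (QuaternionGroup 2) S8 ≃g completeBipartiteGraph (Fin 4) (Fin 4) :=
  ⟨Equiv.ofBijective psiFun psi_bij, fun {p q} => q8_adj p q⟩

end Aux

/-- Subcase A.1 with `t² ∉ S`: the Cayley graph must be `K_{4,4}`. -/
theorem subcaseA1_not_mem
    {G : Type*} [Group G] (A : Subgroup G) (t : G) (hG : IsGenDicyclic A t)
    (S : Set G) (hS1 : (1 : G) ∉ S) (hSinv : ∀ x ∈ S, x⁻¹ ∈ S)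
    (hSgen : Subgroup.closure S = ⊤) (htS : t ∈ S)
    (H : Subgroup G) (hHdef : H = Subgroup.closure (S \ {t, t⁻¹})) (hH : H ≠ ⊤)
    (haH : t ^ 2 ∈ H) (hSA : S \ {t, t⁻¹} ⊆ (A : Set G)) (ht2 : t ^ 2 ∉ S)
    (hdrg : (cayleyGraph G S).IsDistRegular) :
    ∃ x : G, x ∈ A ∧ x ^ 2 = t ^ 2 ∧ S = {x, x⁻¹, t, t⁻¹} ∧
      Nonempty (cayleyGraph G S ≃g completeBipartiteGraph (Fin 4) (Fin 4)) := by
  classical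
  -- basic facts about t and A
  have ht2A : t ^ 2 ∈ A := hG.t_sq_mem
  have ht2sq : t ^ 2 * t ^ 2 = 1 := by
    have := pow_orderOf_eq_one (t ^ 2); rw [hG.t_sq_order, pow_two] at this; exact this
  have ht2ne1 : t ^ 2 ≠ 1 := by
    intro h
    have := hG.t_sq_order; rw [h, orderOf_one] at this; omega
  have ht2inv : (t ^ 2)⁻¹ = t ^ 2 := inv_eq_of_mul_eq_one_right ht2sq
  have htinv3 : t⁻¹ = t ^ 2 * t := by
    apply inv_eq_of_mul_eq_one_right
    calc t * (t ^ 2 * t) = t ^ 2 * t ^ 2 := by group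
    _ = 1 := ht2sq
  have L2 : ∀ v ∈ A, v * t = t * v⁻¹ := by
    intro v hv
    have h := hG.conj v hv
    calc v * t = t * (t⁻¹ * v * t) := by group
    _ = t * v⁻¹ := by rw [h]
  have L1 : ∀ v ∈ A, t * v = v⁻¹ * t := by
    intro v hv
    have := L2 v⁻¹ (A.inv_mem hv)
    rw [inv_inv] at this; exact this.symm
  have L3 : ∀ v ∈ A, t⁻¹ * v = v⁻¹ * t⁻¹ := by
    intro v hv
    have h := hG.conj v hv
    calc t⁻¹ * v = (t⁻¹ * v * t) * t⁻¹ := by group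
    _ = v⁻¹ * t⁻¹ := by rw [h]
  have htA : t ∉ A := by
    intro h
    have hc := hG.conj t h
    rw [inv_mul_cancel, one_mul] at hc
    have h2 : t * t = 1 := by nth_rewrite 1 [hc]; exact inv_mul_cancel t
    exact ht2ne1 (by rw [pow_two]; exact h2)
  have htinvA : t⁻¹ ∉ A := fun h => htA (by simpa using A.inv_mem h)
  -- T
  set T : Set G := S \ {t, t⁻¹} with hTdef
  have hTS : ∀ s ∈ T, s ∈ S := fun s hs => hs.1
  have hTA : ∀ s ∈ T, s ∈ A := fun s hs => hSA hs
  have hmemS : ∀ w, w ∈ S ↔ w ∈ T ∨ w = t ∨ w = t⁻¹ := by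
    intro w
    constructor
    · intro hw
      by_cases h1 : w = t
      · exact Or.inr (Or.inl h1)
      by_cases h2 : w = t⁻¹
      · exact Or.inr (Or.inr h2)
      · exact Or.inl ⟨hw, by simp [h1, h2]⟩
    · rintro (h | rfl | rfl)
      · exact hTS _ h
      · exact htS
      · exact hSinv t htS
  have hTinv : ∀ s ∈ T, s⁻¹ ∈ T := by
    intro s hs
    have hsA : s⁻¹ ∈ A := A.inv_mem (hTA s hs)
    refine ⟨hSinv s (hTS s hs), ?_⟩
    simp only [Set.mem_insert_iff, Set.mem_singleton_iff]
    push_neg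
    exact ⟨fun h => htA (h ▸ hsA), fun h => htinvA (h ▸ hsA)⟩
  have haTn : t ^ 2 ∉ T := fun h => ht2 (hTS _ h)
  have h1T : (1 : G) ∉ T := fun h => hS1 (hTS _ h)
  have hAS : ∀ v ∈ A, (v ∈ S ↔ v ∈ T) := by
    intro v hv
    rw [hmemS v]
    constructor
    · rintro (h | rfl | rfl)
      · exact h
      · exact absurd hv htA
      · exact absurd hv htinvA
    · exact Or.inl
  have hAtS : ∀ v ∈ A, (v * t ∈ S ↔ v = 1 ∨ v = t ^ 2) := by
    intro v hv
    constructor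
    · intro h
      rcases (hmemS _).1 h with h' | h' | h'
      · exact absurd (hTA _ h') (fun hm => htA (by
          have : t = v⁻¹ * (v * t) := by group
          rw [this]; exact A.mul_mem (A.inv_mem hv) hm))
      · refine Or.inl (mul_right_cancel (b := t) ?_)
        rw [one_mul]; exact h'
      · refine Or.inr ?_
        rw [htinv3] at h'
        exact mul_right_cancel h'
    · rintro (rfl | rfl)
      · simpa using htS
      · rw [← htinv3]; exact hSinv t htS
  -- Finiteness of G
  have hAfin : Finite (A : Set G) := by
    obtain ⟨n, hn, hcard⟩ := hG.card
    have : Nat.card A ≠ 0 := by omega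
    exact (Nat.card_ne_zero.mp this).2
  have hGfin : Finite G := by
    set N : Subgroup G :=
      { carrier := {g | g ∈ A ∨ ∃ v ∈ A, g = v * t}
        one_mem' := Or.inl A.one_mem
        mul_mem' := by
          rintro g h (hg | ⟨v, hv, rfl⟩) (hh | ⟨w, hw, rfl⟩)
          · exact Or.inl (A.mul_mem hg hh)
          · exact Or.inr ⟨g * w, A.mul_mem hg hw, by group⟩
          · refine Or.inr ⟨v * h⁻¹, A.mul_mem hv (A.inv_mem hh), ?_⟩
            rw [mul_assoc, L1 h hh, ← mul_assoc]
          · refine Or.inl ?_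
            have : v * t * (w * t) = v * w⁻¹ * (t * t) := by
              rw [mul_assoc v t, ← mul_assoc t w, L1 w hw]; group
            rw [this, ← pow_two]
            exact A.mul_mem (A.mul_mem hv (A.inv_mem hw)) ht2A
        inv_mem' := by
          rintro g (hg | ⟨v, hv, rfl⟩)
          · exact Or.inl (A.inv_mem hg)
          · refine Or.inr ⟨v * (t ^ 2)⁻¹, A.mul_mem hv (A.inv_mem ht2A), ?_⟩
            rw [mul_inv_rev, L3 v⁻¹ (A.inv_mem hv), inv_inv, htinv3, ht2inv, mul_assoc] } with hN
    have htop : ∀ g : G, g ∈ N := by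
      have hle : (⊤ : Subgroup G) ≤ N := by
        rw [← hG.gen]
        apply (Subgroup.closure_le N).2
        rintro g (hg | rfl)
        · exact Or.inl hg
        · exact Or.inr ⟨1, A.one_mem, by rw [one_mul]⟩
      exact fun g => hle (Subgroup.mem_top g)
    have : (Set.univ : Set G).Finite := by
      apply Set.Finite.subset (Set.Finite.union (A : Set G).toFinite
        (Set.Finite.image (fun v => v * t) (A : Set G).toFinite))
      intro g _
      rcases htop g with hg | ⟨v, hv, rfl⟩
      · exact Or.inl hg
      · exact Or.inr ⟨v, hv, rfl⟩
    exact Set.finite_univ_iff.mp this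
  haveI : Finite G := hGfin
  -- graph basics
  have hconn : (cayleyGraph G S).Connected := hdrg.1
  have hadj : ∀ g h : G, (cayleyGraph G S).Adj g h ↔ g⁻¹ * h ∈ S :=
    fun g h => cay_adj hS1 hSinv
  have hdist1 : ∀ s, s ∈ S → (cayleyGraph G S).dist 1 s = 1 := by
    intro s hs
    rw [SimpleGraph.dist_eq_one_iff_adj, hadj]
    simpa using hs
  have hD1 : {w | (cayleyGraph G S).dist 1 w = 1} = S := by
    ext w
    simp only [Set.mem_setOf_eq, SimpleGraph.dist_eq_one_iff_adj, hadj, inv_one, one_mul]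
  have hEdef : ∀ v : G, (cayleyGraph G S).neighborSet v ∩ {w | (cayleyGraph G S).dist 1 w = 1}
      = {w | v⁻¹ * w ∈ S ∧ w ∈ S} := by
    intro v
    rw [hD1]
    ext w
    simp only [Set.mem_inter_iff, SimpleGraph.mem_neighborSet, hadj, Set.mem_setOf_eq]
  -- Step 1 : a₁ = 0, i.e. S·S ∩ S = ∅
  have hstep1 : ∀ s ∈ S, ∀ u ∈ S, s * u ∉ S := by
    obtain ⟨c1, a1, b1, h1⟩ := hdrg.2 1
    have hEt : ({w | t⁻¹ * w ∈ S ∧ w ∈ S} : Set G) = ∅ := by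
      ext w
      simp only [Set.mem_setOf_eq, Set.mem_empty_iff_false, iff_false, not_and]
      intro h1w h2w
      rcases (hmemS _).1 h1w with hu | hu | hu
      · have hvA : t⁻¹ * w ∈ A := hTA _ hu
        have hw : w = (t⁻¹ * w)⁻¹ * t := by
          rw [← L1 _ hvA, mul_inv_cancel_left]
        rw [hw] at h2w
        rcases (hAtS _ (A.inv_mem hvA)).1 h2w with h | h
        · rw [inv_eq_one] at h
          rw [h] at hu; exact h1T hu
        · rw [inv_eq_iff_eq_inv, ht2inv] at h
          rw [h] at hu; exact haTn hu
      · have : w = t * t := by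
          have := congrArg (fun z => t * z) hu
          simpa [← mul_assoc] using this
        rw [this, ← pow_two] at h2w; exact ht2 h2w
      · have : w = 1 := by
          have := congrArg (fun z => t * z) hu
          simpa [← mul_assoc] using this
        rw [this] at h2w; exact hS1 h2w
    have ha1 : a1 = 0 := by
      have := (h1 1 t (hdist1 t htS)).2.1
      rw [hEdef, hEt] at this
      simpa using this.symm
    intro s hs u hu hsu
    have h := (h1 1 s (hdist1 s hs)).2.1
    rw [hEdef, ha1, Set.ncard_eq_zero (Set.toFinite _)] at h
    have : s * u ∈ ({w | s⁻¹ * w ∈ S ∧ w ∈ S} : Set G) :=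
      ⟨by rwa [inv_mul_cancel_left], hsu⟩
    rw [h] at this
    exact this
  have hs2ne1 : ∀ s ∈ T, s * s ≠ 1 := by
    intro s hs h
    have hsne1 : s ≠ 1 := fun h' => h1T (h' ▸ hs)
    have : orderOf s = 2 := by
      apply orderOf_eq_prime _ hsne1
      rw [pow_two]; exact h
    exact haTn (hG.unique_involution s (hTA s hs) this ▸ hs)
  have hdist2 : ∀ p ∈ S, ∀ q ∈ S, p * q ≠ 1 → (cayleyGraph G S).dist 1 (p * q) = 2 := by
    intro p hp q hq hne
    apply dist_two_of hconn (w := p)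
    · rw [hadj]; simpa using hp
    · rw [hadj, inv_mul_cancel_left]; exact hq
    · exact fun h => hne h.symm
    · rw [hadj, inv_one, one_mul]; exact hstep1 p hp q hq
  -- distance-2 counting
  obtain ⟨c2, a2, b2, h2⟩ := hdrg.2 2
  have hC2 : ∀ v : G, (cayleyGraph G S).dist 1 v = 2 →
      ({w | v⁻¹ * w ∈ S ∧ w ∈ S} : Set G).ncard = c2 := by
    intro v hv
    have := (h2 1 v hv).1
    rwa [show (2:ℕ) - 1 = 1 from rfl, hEdef] at this
  have hdistst : ∀ s ∈ T, (cayleyGraph G S).dist 1 (s * t) = 2 := by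
    intro s hs
    apply hdist2 s (hTS s hs) t htS
    intro h
    rw [mul_eq_one_iff_eq_inv] at h
    exact htinvA (h ▸ hTA s hs)
  -- computations of (s*t)⁻¹ * w
  have hstinv : ∀ (s w : G), (s*t)⁻¹ * w = t⁻¹ * s⁻¹ * w := by
    intro s w; rw [mul_inv_rev]
  have comp_t : ∀ s ∈ T, (s*t)⁻¹ * t = s := by
    intro s hs
    rw [hstinv, hG.conj s⁻¹ (A.inv_mem (hTA s hs)), inv_inv]
  have comp_s : ∀ s ∈ T, (s*t)⁻¹ * s = t⁻¹ := by
    intro s hs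
    rw [hstinv, mul_assoc, inv_mul_cancel, mul_one]
  have comp_tinv : ∀ s ∈ T, (s*t)⁻¹ * t⁻¹ = s * t ^ 2 := by
    intro s hs
    rw [hstinv, L3 s⁻¹ (A.inv_mem (hTA s hs)), inv_inv, mul_assoc, ← mul_inv_rev,
      ← pow_two, ht2inv]
  have comp_as : ∀ s ∈ T, (s*t)⁻¹ * (t ^ 2 * s) = t := by
    intro s hs
    rw [hstinv, mul_assoc, hG.comm (t^2) ht2A s (hTA s hs), ← mul_assoc s⁻¹,
      inv_mul_cancel, one_mul, pow_two, inv_mul_cancel_left]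
  have comp_T : ∀ s ∈ T, ∀ w ∈ T, (s*t)⁻¹ * w = (w⁻¹ * s * t ^ 2) * t := by
    intro s hs w hw
    rw [hstinv, mul_assoc, L3 _ (A.mul_mem (A.inv_mem (hTA s hs)) (hTA w hw)),
      mul_inv_rev, inv_inv, htinv3, ← mul_assoc]
  -- forward classification of common neighbours of 1 and s*t
  have hEstFwd : ∀ s ∈ T, ∀ w, ((s*t)⁻¹ * w ∈ S ∧ w ∈ S) →
      (w = t ∨ w = s ∨ (t ^ 2 * s ∈ T ∧ (w = t⁻¹ ∨ w = t ^ 2 * s))) := by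
    intro s hs w ⟨h1w, h2w⟩
    rcases (hmemS w).1 h2w with hw | rfl | rfl
    · -- w ∈ T
      rw [comp_T s hs w hw] at h1w
      have hvA : w⁻¹ * s * t ^ 2 ∈ A :=
        A.mul_mem (A.mul_mem (A.inv_mem (hTA w hw)) (hTA s hs)) ht2A
      rcases (hAtS _ hvA).1 h1w with h | h
      · rw [mul_assoc, inv_mul_eq_one] at h
        have hw2 : w = t ^ 2 * s := h.trans (hG.comm s (hTA s hs) (t^2) ht2A)
        exact Or.inr (Or.inr ⟨hw2 ▸ hw, Or.inr hw2⟩)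
      · have h' : w⁻¹ * s * t ^ 2 = 1 * t ^ 2 := by rw [one_mul]; exact h
        have := mul_right_cancel h'
        rw [inv_mul_eq_one] at this
        exact Or.inr (Or.inl this)
    · exact Or.inl rfl
    · -- w = t⁻¹
      rw [comp_tinv s hs] at h1w
      have hmem : s * t ^ 2 ∈ T := (hAS _ (A.mul_mem (hTA s hs) ht2A)).1 h1w
      rw [hG.comm s (hTA s hs) (t^2) ht2A] at hmem
      exact Or.inr (Or.inr ⟨hmem, Or.inl rfl⟩)
  have htnes : ∀ v ∈ A, t ≠ v := fun v hv h => htA (h ▸ hv)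
  have htinvnes : ∀ v ∈ A, t⁻¹ ≠ v := fun v hv h => htinvA (h ▸ hv)
  have httinv : t ≠ t⁻¹ := by
    intro h
    apply ht2ne1
    rw [pow_two]; nth_rewrite 2 [h]; exact mul_inv_cancel t
  -- the two shapes of the common neighbourhood of 1 and s*t
  have hEstB : ∀ s ∈ T, t ^ 2 * s ∉ T →
      ({w | (s*t)⁻¹ * w ∈ S ∧ w ∈ S} : Set G) = {t, s} := by
    intro s hs hns
    ext w
    simp only [Set.mem_setOf_eq, Set.mem_insert_iff, Set.mem_singleton_iff]
    constructor
    · intro hw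
      rcases hEstFwd s hs w hw with h | h | ⟨h, _⟩
      · exact Or.inl h
      · exact Or.inr h
      · exact absurd h hns
    · rintro (h | h) <;> rw [h]
      · exact ⟨by rw [comp_t s hs]; exact hTS s hs, htS⟩
      · exact ⟨by rw [comp_s s hs]; exact hSinv t htS, hTS s hs⟩
  have hEstA : ∀ s ∈ T, t ^ 2 * s ∈ T →
      ({w | (s*t)⁻¹ * w ∈ S ∧ w ∈ S} : Set G) = {t, s, t⁻¹, t ^ 2 * s} := by
    intro s hs has
    ext w
    simp only [Set.mem_setOf_eq, Set.mem_insert_iff, Set.mem_singleton_iff]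
    constructor
    · intro hw
      rcases hEstFwd s hs w hw with h | h | ⟨_, h | h⟩
      · exact Or.inl h
      · exact Or.inr (Or.inl h)
      · exact Or.inr (Or.inr (Or.inl h))
      · exact Or.inr (Or.inr (Or.inr h))
    · rintro (h | h | h | h) <;> rw [h]
      · exact ⟨by rw [comp_t s hs]; exact hTS s hs, htS⟩
      · exact ⟨by rw [comp_s s hs]; exact hSinv t htS, hTS s hs⟩
      · refine ⟨?_, hSinv t htS⟩
        rw [comp_tinv s hs]
        have has' := has
        rw [hG.comm (t^2) ht2A s (hTA s hs)] at has'
        exact hTS _ has'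
      · exact ⟨by rw [comp_as s hs]; exact htS, hTS _ has⟩
  by_cases hcase : ∃ s ∈ T, t ^ 2 * s ∈ T
  · -- CASE A
    obtain ⟨s0, hs0T, has0⟩ := hcase
    have hc4 : c2 = 4 := by
      have hcount := hC2 _ (hdistst s0 hs0T)
      rw [hEstA s0 hs0T has0] at hcount
      have hs0A := hTA s0 hs0T
      have hasA : t ^ 2 * s0 ∈ A := A.mul_mem ht2A hs0A
      have hsnas : s0 ≠ t ^ 2 * s0 := by
        intro h
        exact ht2ne1 (mul_right_cancel (b := s0) (by rw [one_mul]; exact h)).symm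
      rw [Set.ncard_insert_of_notMem (by
            simp only [Set.mem_insert_iff, Set.mem_singleton_iff]
            push_neg
            exact ⟨htnes s0 hs0A, httinv, htnes _ hasA⟩) (Set.toFinite _),
          Set.ncard_insert_of_notMem (by
            simp only [Set.mem_insert_iff, Set.mem_singleton_iff]
            push_neg
            exact ⟨fun h => htinvnes s0 hs0A h.symm, hsnas⟩) (Set.toFinite _),
          Set.ncard_insert_of_notMem (by
            simp only [Set.mem_singleton_iff]
            exact htinvnes _ hasA) (Set.toFinite _),
          Set.ncard_singleton] at hcount
      omega
    have haTall : ∀ s ∈ T, t ^ 2 * s ∈ T := by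
      intro s hs
      by_contra hns
      have hcount := hC2 _ (hdistst s hs)
      rw [hEstB s hs hns, Set.ncard_pair (htnes s (hTA s hs))] at hcount
      omega
    have hEa : ({w | (t ^ 2)⁻¹ * w ∈ S ∧ w ∈ S} : Set G) = insert t (insert t⁻¹ T) := by
      ext w
      simp only [Set.mem_setOf_eq, Set.mem_insert_iff]
      constructor
      · intro ⟨_, h2w⟩
        rcases (hmemS w).1 h2w with hw | rfl | rfl
        · exact Or.inr (Or.inr hw)
        · exact Or.inl rfl
        · exact Or.inr (Or.inl rfl)
      · rintro (h | h | hw)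
        · rw [h]
          refine ⟨?_, htS⟩
          rw [ht2inv, ← htinv3]
          exact hSinv t htS
        · rw [h]
          refine ⟨?_, hSinv t htS⟩
          rw [ht2inv, pow_two, mul_assoc, mul_inv_cancel, mul_one]
          exact htS
        · refine ⟨?_, hTS _ hw⟩
          rw [ht2inv]
          exact hTS _ (haTall w hw)
    have hdista : (cayleyGraph G S).dist 1 (t ^ 2) = 2 := by
      have := hdist2 t htS t htS (by rw [← pow_two]; exact ht2ne1)
      rwa [← pow_two] at this
    have hT2 : T.ncard = 2 := by
      have hcount := hC2 _ hdista
      rw [hEa,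
        Set.ncard_insert_of_notMem (by
          simp only [Set.mem_insert_iff]
          push_neg
          exact ⟨httinv, fun h => htA (hTA t h)⟩) (Set.toFinite _),
        Set.ncard_insert_of_notMem (fun h => htinvA (hTA _ h)) (Set.toFinite _)] at hcount
      omega
    obtain ⟨x, y, hxy, hTeq⟩ := Set.ncard_eq_two.mp hT2
    have hxT : x ∈ T := by rw [hTeq]; exact Set.mem_insert x _
    have hxiT : x⁻¹ ∈ T := hTinv x hxT
    have hyx : y = x⁻¹ := by
      rw [hTeq] at hxiT
      rcases hxiT with h | h
      · exfalso
        apply hs2ne1 x hxT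
        nth_rewrite 2 [← h]
        exact mul_inv_cancel x
      · exact (Set.mem_singleton_iff.mp h).symm
    subst hyx
    have hax : t ^ 2 * x ∈ T := haTall x hxT
    have hxx : x * x = t ^ 2 := by
      rw [hTeq] at hax
      rcases hax with h | h
      · exfalso
        exact ht2ne1 (mul_right_cancel (b := x) (by rw [one_mul]; exact h))
      · rw [Set.mem_singleton_iff] at h
        have hxA := hTA x hxT
        have h3 : t ^ 2 * (x * x) = 1 := by
          calc t ^ 2 * (x * x) = (t ^ 2 * x) * x := by rw [mul_assoc]
          _ = x⁻¹ * x := by rw [h]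
          _ = 1 := inv_mul_cancel x
        have h4 := inv_eq_of_mul_eq_one_right h3
        rw [ht2inv] at h4
        exact h4.symm
    have hSeq : S = {x, x⁻¹, t, t⁻¹} := by
      ext w
      rw [hmemS w, hTeq]
      simp only [Set.mem_insert_iff, Set.mem_singleton_iff]
      tauto
    refine ⟨x, hTA x hxT, by rw [pow_two]; exact hxx, hSeq, ?_⟩
    -- ===== isomorphism with K_{4,4} =====
    haveI hNZ : NeZero (2*2) := ⟨by norm_num⟩
    have hxA : x ∈ A := hTA x hxT
    have hx2 : x ^ 2 = t ^ 2 := by rw [pow_two]; exact hxx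
    have hx4 : x ^ 4 = 1 := by
      rw [show (4:ℕ) = 2+2 from rfl, pow_add, hx2]; exact ht2sq
    have hx1 : x ≠ 1 := fun h => h1T (h ▸ hxT)
    have hx2ne : x ^ 2 ≠ 1 := by rw [hx2]; exact ht2ne1
    have horderx : orderOf x = 4 := by
      have hdvd : orderOf x ∣ 4 := orderOf_dvd_of_pow_eq_one hx4
      have h14 : orderOf x ∈ Nat.divisors 4 := Nat.mem_divisors.mpr ⟨hdvd, by norm_num⟩
      have hdiv : Nat.divisors 4 = {1, 2, 4} := by decide
      rw [hdiv] at h14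
      simp only [Finset.mem_insert, Finset.mem_singleton] at h14
      rcases h14 with h | h | h
      · exact absurd (orderOf_eq_one_iff.mp h) hx1
      · exfalso
        apply hx2ne
        have := pow_orderOf_eq_one x
        rwa [h] at this
      · exact h
    have hxpowA : ∀ m : ℕ, x ^ m ∈ A := fun m => pow_mem hxA m
    have hpowmod : ∀ m : ℕ, x ^ m = x ^ (m % 4) := by
      intro m
      conv_lhs => rw [← Nat.div_add_mod m 4]
      rw [pow_add, pow_mul, hx4, one_pow, one_mul]
    have hpowmod4 : ∀ m : ℕ, x ^ (m % (2*2)) = x ^ m := by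
      intro m
      rw [show (2:ℕ)*2 = 4 from by norm_num]
      exact (hpowmod m).symm
    have hinvpow : ∀ m : ℕ, (x ^ m)⁻¹ = x ^ (3 * m) := by
      intro m
      apply inv_eq_of_mul_eq_one_right
      rw [← pow_add, show m + 3*m = 4*m by ring, pow_mul, hx4, one_pow]
    have hxinv3 : x⁻¹ = x ^ 3 := by
      have := hinvpow 1
      rwa [pow_one, mul_one] at this
    have hxkt : ∀ m : ℕ, x ^ m * t = t * x ^ (3 * m) := by
      intro m
      rw [L2 _ (hxpowA m), hinvpow]
    have htinvx : t⁻¹ = t * x ^ 2 := by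
      rw [htinv3, ← hx2, hxkt 2, hpowmod (3*2)]
    have hprod : ∀ k m : ℕ, (t * x ^ k) * (t * x ^ m) = x ^ (2 + 3*k + m) := by
      intro k m
      conv_rhs => rw [pow_add, pow_add]
      rw [mul_assoc t, ← mul_assoc (x ^ k), hxkt k, ← mul_assoc, ← mul_assoc, ← pow_two,
        ← hx2]
    have hMtop : ∀ g : G, (∃ k : ℕ, g = x ^ k ∨ g = t * x ^ k) := by
      set M : Subgroup G :=
        { carrier := {g | ∃ k : ℕ, g = x ^ k ∨ g = t * x ^ k}
          one_mem' := ⟨0, Or.inl (by rw [pow_zero])⟩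
          mul_mem' := by
            rintro g h ⟨k, rfl | rfl⟩ ⟨m, rfl | rfl⟩
            · exact ⟨k + m, Or.inl (pow_add x k m).symm⟩
            · exact ⟨3 * k + m, Or.inr (by rw [← mul_assoc, hxkt k, mul_assoc, ← pow_add])⟩
            · exact ⟨k + m, Or.inr (by rw [mul_assoc, ← pow_add])⟩
            · exact ⟨2 + 3*k + m, Or.inl (hprod k m)⟩
          inv_mem' := by
            rintro g ⟨k, rfl | rfl⟩
            · exact ⟨3*k, Or.inl (hinvpow k)⟩
            · refine ⟨3*(3*k) + 2, Or.inr ?_⟩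
              rw [mul_inv_rev, hinvpow, htinvx, ← mul_assoc, hxkt (3*k), mul_assoc,
                ← pow_add] } with hM
      intro g
      have hle : (⊤ : Subgroup G) ≤ M := by
        rw [← hSgen]
        apply (Subgroup.closure_le M).2
        rw [hSeq]
        rintro w (h | h | h | h) <;> rw [h]
        · exact ⟨1, Or.inl (pow_one x).symm⟩
        · exact ⟨3, Or.inl hxinv3⟩
        · exact ⟨0, Or.inr (by rw [pow_zero, mul_one])⟩
        · exact ⟨2, Or.inr htinvx⟩
      exact hle (Subgroup.mem_top g)
    set φ : QuaternionGroup 2 → G := fun q =>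
      QuaternionGroup.rec (fun i => x ^ i.val) (fun i => t * x ^ i.val) q with hφ
    have hva : ∀ m : ℕ, x ^ ((m : ZMod (2*2)).val) = x ^ m := by
      intro m
      rw [ZMod.val_natCast]
      exact hpowmod4 m
    have hvv : ∀ m : ZMod (2*2), ((m.val : ℕ) : ZMod (2*2)) = m :=
      fun m => ZMod.natCast_rightInverse m
    have h40 : ((4:ℕ) : ZMod (2*2)) = 0 := by decide
    have e1 : ∀ i j : ZMod (2*2), x ^ ((i + j).val) = x ^ i.val * x ^ j.val := by
      intro i j
      rw [ZMod.val_add, hpowmod4, pow_add]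
    have hsub : ∀ i j : ZMod (2*2), x ^ ((j - i).val) = x ^ (3 * i.val) * x ^ j.val := by
      intro i j
      have hcast : ((3 * i.val + j.val : ℕ) : ZMod (2*2)) = j - i := by
        push_cast
        rw [hvv, hvv]
        have h0 : ((4:ℕ) : ZMod (2*2)) = 0 := h40
        push_cast at h0
        linear_combination i * h0
      rw [← hcast, hva, pow_add]
    have hc2' : ∀ i j : ZMod (2*2),
        ((2 + 3 * i.val + j.val : ℕ) : ZMod (2*2)) = ((2:ℕ) : ZMod (2*2)) + j - i := by
      intro i j
      push_cast
      rw [hvv, hvv]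
      have h0 : ((4:ℕ) : ZMod (2*2)) = 0 := h40
      push_cast at h0
      linear_combination i * h0
    have hφmul : ∀ p q, φ (p * q) = φ p * φ q := by
      rintro (i | i) (j | j)
      · exact e1 i j
      · show t * x ^ ((j - i).val) = x ^ i.val * (t * x ^ j.val)
        rw [hsub i j]
        calc t * (x ^ (3*i.val) * x ^ j.val)
            = (t * x ^ (3*i.val)) * x ^ j.val := by rw [mul_assoc]
          _ = (x ^ i.val * t) * x ^ j.val := by rw [hxkt i.val]
          _ = x ^ i.val * (t * x ^ j.val) := by rw [mul_assoc]
      · show t * x ^ ((i + j).val) = (t * x ^ i.val) * x ^ j.val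
        rw [e1 i j, mul_assoc]
      · show x ^ ((((2:ℕ) : ZMod (2*2)) + j - i).val) = (t * x ^ i.val) * (t * x ^ j.val)
        rw [← hc2' i j, hva, hprod]
    have hvlt : ∀ i : ZMod (2*2), i.val ∈ Set.Iio (orderOf x) := by
      intro i
      rw [horderx]
      exact ZMod.val_lt i
    have hφinj : Function.Injective φ := by
      have hpow_inj : ∀ i j : ZMod (2*2), x ^ i.val = x ^ j.val → i = j := by
        intro i j h
        exact ZMod.val_injective _ (pow_injOn_Iio_orderOf (hvlt i) (hvlt j) h)
      rintro (i | i) (j | j) h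
      · exact congrArg _ (hpow_inj i j h)
      · exfalso
        apply htA
        have h' : x ^ i.val = t * x ^ j.val := h
        have ht' : t = x ^ i.val * (x ^ j.val)⁻¹ := by
          rw [h', mul_inv_cancel_right]
        rw [ht']
        exact A.mul_mem (hxpowA _) (A.inv_mem (hxpowA _))
      · exfalso
        apply htA
        have h' : t * x ^ i.val = x ^ j.val := h
        have ht' : t = x ^ j.val * (x ^ i.val)⁻¹ := by
          rw [← h', mul_inv_cancel_right]
        rw [ht']
        exact A.mul_mem (hxpowA _) (A.inv_mem (hxpowA _))
      · have h' : t * x ^ i.val = t * x ^ j.val := h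
        exact congrArg _ (hpow_inj i j (mul_left_cancel h'))
    have hφsurj : Function.Surjective φ := by
      intro g
      obtain ⟨k, hk | hk⟩ := hMtop g
      · exact ⟨QuaternionGroup.a (k : ZMod (2*2)), by
          show x ^ ((k : ZMod (2*2)).val) = g
          rw [hva, hk]⟩
      · exact ⟨QuaternionGroup.xa (k : ZMod (2*2)), by
          show t * x ^ ((k : ZMod (2*2)).val) = g
          rw [hva, hk]⟩
    have hφ1 : φ 1 = 1 := by
      show x ^ (0 : ZMod (2*2)).val = 1
      rw [ZMod.val_zero, pow_zero]
    have hφinv : ∀ p, φ p⁻¹ = (φ p)⁻¹ := by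
      intro p
      have h := hφmul p⁻¹ p
      rw [inv_mul_cancel, hφ1] at h
      exact eq_inv_of_mul_eq_one_left h.symm
    have hv1 : φ (QuaternionGroup.a 1) = x := by
      show x ^ (1 : ZMod (2*2)).val = x
      rw [show (1 : ZMod (2*2)) = ((1:ℕ) : ZMod (2*2)) from by norm_num, hva, pow_one]
    have hv2 : φ (QuaternionGroup.a 3) = x⁻¹ := by
      show x ^ (3 : ZMod (2*2)).val = x⁻¹
      rw [show (3 : ZMod (2*2)) = ((3:ℕ) : ZMod (2*2)) from by norm_num, hva, hxinv3]
    have hv3 : φ (QuaternionGroup.xa 0) = t := by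
      show t * x ^ (0 : ZMod (2*2)).val = t
      rw [ZMod.val_zero, pow_zero, mul_one]
    have hv4 : φ (QuaternionGroup.xa 2) = t⁻¹ := by
      show t * x ^ (2 : ZMod (2*2)).val = t⁻¹
      rw [show (2 : ZMod (2*2)) = ((2:ℕ) : ZMod (2*2)) from by norm_num, hva, htinvx]
    have hφS : ∀ q, (φ q ∈ S ↔ q ∈ S8) := by
      intro q
      constructor
      · intro hq
        rw [hSeq] at hq
        rcases hq with h | h | h | h
        · exact Or.inl (hφinj (by rw [hv1]; exact h))
        · exact Or.inr (Or.inl (hφinj (by rw [hv2]; exact h)))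
        · exact Or.inr (Or.inr (Or.inl (hφinj (by rw [hv3]; exact h))))
        · exact Or.inr (Or.inr (Or.inr (hφinj (by rw [hv4]; exact h))))
      · rintro (rfl | rfl | rfl | rfl)
        · rw [hv1, hSeq]; exact Set.mem_insert _ _
        · rw [hv2, hSeq]; simp
        · rw [hv3, hSeq]; simp
        · rw [hv4, hSeq]; simp
    have hbij : Function.Bijective φ := ⟨hφinj, hφsurj⟩
    refine ⟨?_⟩
    have iso1 : cayleyGraph (QuaternionGroup 2) S8 ≃g cayleyGraph G S := by
      refine ⟨Equiv.ofBijective φ hbij, ?_⟩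
      intro p q
      show (cayleyGraph G S).Adj (φ p) (φ q) ↔ (cayleyGraph (QuaternionGroup 2) S8).Adj p q
      rw [hadj, cay_adj hS8_one hS8_inv, ← hφinv, ← hφmul, hφS]
    exact iso1.symm.trans iso2
  · -- CASE B : contradiction
    exfalso
    push_neg at hcase
    obtain ⟨s, hsT⟩ : T.Nonempty := by
      rw [Set.nonempty_iff_ne_empty]
      intro hemp
      rw [hHdef, hemp, Subgroup.closure_empty, Subgroup.mem_bot] at haH
      exact ht2ne1 haH
    have hcval : c2 = 2 := by
      have hcount := hC2 _ (hdistst s hsT)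
      rw [hEstB s hsT (hcase s hsT), Set.ncard_pair (htnes s (hTA s hsT))] at hcount
      omega
    have hEss : ({w | (s*s)⁻¹ * w ∈ S ∧ w ∈ S} : Set G)
        = {w | w ∈ T ∧ (s*s)⁻¹ * w ∈ T} := by
      have hssA : s * s ∈ A := A.mul_mem (hTA s hsT) (hTA s hsT)
      have hssne : s * s ≠ t ^ 2 := by
        intro h
        apply hcase s⁻¹ (hTinv s hsT)
        have : t ^ 2 * s⁻¹ = s := by
          rw [← h, mul_assoc, mul_inv_cancel, mul_one]
        rw [this]; exact hsT
      ext w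
      simp only [Set.mem_setOf_eq]
      constructor
      · intro ⟨h1w, h2w⟩
        rcases (hmemS w).1 h2w with hw | rfl | rfl
        · exact ⟨hw, (hAS _ (A.mul_mem (A.inv_mem hssA) (hTA w hw))).1 h1w⟩
        · exfalso
          rcases (hAtS _ (A.inv_mem hssA)).1 h1w with h | h
          · rw [inv_eq_one] at h
            exact hs2ne1 s hsT h
          · rw [inv_eq_iff_eq_inv, ht2inv] at h
            exact hssne h
        · exfalso
          rw [htinv3, ← mul_assoc] at h1w
          rcases (hAtS _ (A.mul_mem (A.inv_mem hssA) ht2A)).1 h1w with h | h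
          · rw [mul_eq_one_iff_eq_inv, ht2inv] at h
            exact hssne (by rw [← inv_inv (s*s), h, ht2inv])
          · have := mul_right_cancel (a := (s*s)⁻¹) (b := t^2) (by rw [one_mul]; exact h)
            exact hs2ne1 s hsT (by rw [← inv_inv (s*s), this, inv_one])
      · intro ⟨hw, hsw⟩
        exact ⟨hTS _ hsw, hTS _ hw⟩
    have hdss : (cayleyGraph G S).dist 1 (s * s) = 2 :=
      hdist2 s (hTS s hsT) s (hTS s hsT) (hs2ne1 s hsT)
    have hcount := hC2 _ hdss
    rw [hEss, hcval] at hcount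
    obtain ⟨u1, u2, hu12, hCeq⟩ := Set.ncard_eq_two.mp hcount
    have hsC : s ∈ ({w | w ∈ T ∧ (s*s)⁻¹ * w ∈ T} : Set G) := by
      refine ⟨hsT, ?_⟩
      rw [mul_inv_rev, mul_assoc, inv_mul_cancel, mul_one]
      exact hTinv s hsT
    have hpC : ∀ w ∈ ({w | w ∈ T ∧ (s*s)⁻¹ * w ∈ T} : Set G),
        s * s * w⁻¹ ∈ ({w | w ∈ T ∧ (s*s)⁻¹ * w ∈ T} : Set G) := by
      rintro w ⟨hwT, hwsT⟩
      constructor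
      · have h1 : s * s * w⁻¹ = ((s*s)⁻¹ * w)⁻¹ := by
          rw [mul_inv_rev, inv_inv, hG.comm w⁻¹ (A.inv_mem (hTA w hwT))
            (s*s) (A.mul_mem (hTA s hsT) (hTA s hsT))]
        rw [h1]
        exact hTinv _ hwsT
      · show (s*s)⁻¹ * (s * s * w⁻¹) ∈ T
        rw [inv_mul_cancel_left]
        exact hTinv _ hwT
    have hmemC : ∀ w ∈ ({w | w ∈ T ∧ (s*s)⁻¹ * w ∈ T} : Set G), w = u1 ∨ w = u2 := by
      intro w hw
      rw [hCeq] at hw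
      simpa using hw
    obtain ⟨u, huC, hus⟩ : ∃ u, u ∈ ({w | w ∈ T ∧ (s*s)⁻¹ * w ∈ T} : Set G) ∧ u ≠ s := by
      rcases hmemC s hsC with rfl | rfl
      · exact ⟨u2, by rw [hCeq]; simp, fun h => hu12 h.symm⟩
      · exact ⟨u1, by rw [hCeq]; simp, hu12⟩
    have hpu := hpC u huC
    have hpu_ne : s * s * u⁻¹ ≠ s := by
      intro h
      have h' : s * (s * u⁻¹) = s * 1 := by rw [mul_one, ← mul_assoc]; exact h
      have := mul_left_cancel h'
      rw [mul_inv_eq_one] at this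
      exact hus this.symm
    have hpu_eq : s * s * u⁻¹ = u := by
      rcases hmemC s hsC with h1 | h1 <;> rcases hmemC u huC with h2 | h2 <;>
        rcases hmemC _ hpu with h3 | h3 <;>
        first
          | (exfalso; exact hus (h2.trans h1.symm))
          | (exfalso; exact hpu_ne (h3.trans h1.symm))
          | exact h3.trans h2.symm
    have h2eq : u * u = s * s := by
      have hc := congrArg (fun z => z * u) hpu_eq
      simp only [inv_mul_cancel_right] at hc
      exact hc.symm
    have heA : u * s⁻¹ ∈ A := A.mul_mem (hTA u huC.1) (A.inv_mem (hTA s hsT))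
    have hene : u * s⁻¹ ≠ 1 := by
      intro h; rw [mul_inv_eq_one] at h; exact hus h
    have hee : u * s⁻¹ * (u * s⁻¹) = 1 := by
      have hcm : s⁻¹ * u = u * s⁻¹ :=
        hG.comm s⁻¹ (A.inv_mem (hTA s hsT)) u (hTA u huC.1)
      calc u * s⁻¹ * (u * s⁻¹) = u * (s⁻¹ * u) * s⁻¹ := by group
      _ = u * (u * s⁻¹) * s⁻¹ := by rw [hcm]
      _ = (u * u) * (s⁻¹ * s⁻¹) := by group
      _ = (s * s) * (s⁻¹ * s⁻¹) := by rw [h2eq]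
      _ = 1 := by group
    have horder : orderOf (u * s⁻¹) = 2 :=
      orderOf_eq_prime (by rw [pow_two]; exact hee) hene
    have hust2 := hG.unique_involution _ heA horder
    apply hcase s hsT
    have hu_eq : u = t ^ 2 * s := by
      rw [← hust2, mul_assoc, inv_mul_cancel, mul_one]
    rw [← hu_eq]
    exact huC.1
end

section
/- Let G be a generalized dicyclic group generated by A and t, and let S be an inverse-closed subset of G∖{1} with ⟨S⟩ = G, t ∈ S, H = ⟨S∖{t,t⁻¹}⟩ ≠ G, and t² = a ∈ H. If S∖{t,t⁻¹} ⊆ A and t² ∈ S, then the Cayley graph Cay(G,S) is not distance-regular. -/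
open SimpleGraph Pointwise

/-- Subcase A.1 with `t² ∈ S`: the Cayley graph is not distance-regular. -/
theorem subcaseA1_mem
    {G : Type*} [Group G] (A : Subgroup G) (t : G) (hG : IsGenDicyclic A t)
    (S : Set G) (hS1 : (1 : G) ∉ S) (hSinv : ∀ x ∈ S, x⁻¹ ∈ S)
    (hSgen : Subgroup.closure S = ⊤) (htS : t ∈ S)
    (H : Subgroup G) (hHdef : H = Subgroup.closure (S \ {t, t⁻¹})) (hH : H ≠ ⊤)
    (haH : t ^ 2 ∈ H) (hSA : S \ {t, t⁻¹} ⊆ (A : Set G)) (ht2 : t ^ 2 ∈ S) :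
    ¬ (cayleyGraph G S).IsDistRegular := by
  intro hDR
  obtain ⟨hconn, hreg⟩ := hDR
  haveI : Fact (Nat.Prime 2) := ⟨Nat.prime_two⟩
  -- basic group facts
  have haa : t ^ 2 * t ^ 2 = 1 := by
    have h := pow_orderOf_eq_one (t ^ 2)
    rwa [hG.t_sq_order, pow_two] at h
  have e4 : t * t * t * t = 1 := by
    calc t * t * t * t = t ^ 2 * t ^ 2 := by rw [pow_two, ← mul_assoc]
    _ = 1 := haa
  have ha_ne1 : t ^ 2 ≠ 1 := by
    intro h
    have h2 := hG.t_sq_order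
    rw [h, orderOf_one] at h2
    omega
  have ht_ne1 : t ≠ 1 := fun h => ha_ne1 (by rw [h, one_pow])
  have hainv : (t ^ 2)⁻¹ = t ^ 2 := inv_eq_of_mul_eq_one_right haa
  have haA : t ^ 2 ∈ A := hG.t_sq_mem
  have htA : t ∉ A := by
    intro h
    have hc := hG.conj t h
    simp only [inv_mul_cancel, one_mul] at hc
    apply ha_ne1
    rw [pow_two]
    nth_rewrite 2 [hc]
    simp
  have hconj' : ∀ x ∈ A, t * x = x⁻¹ * t := by
    intro x hx
    have h := hG.conj x⁻¹ (A.inv_mem hx)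
    rw [inv_inv] at h
    calc t * x = t * (t⁻¹ * x⁻¹ * t) := by rw [h]
    _ = x⁻¹ * t := by group

  -- subgroup facts
  have hHA : H ≤ A := by
    rw [hHdef]
    exact (Subgroup.closure_le A).mpr hSA
  have hS0H : S \ {t, t⁻¹} ⊆ (H : Set G) := by
    rw [hHdef]; exact Subgroup.subset_closure
  have hScases : ∀ s ∈ S, s ∈ S \ {t, t⁻¹} ∨ s = t ∨ s = t⁻¹ := by
    intro s hs
    by_cases h1 : s = t
    · exact Or.inr (Or.inl h1)
    by_cases h2 : s = t⁻¹
    · exact Or.inr (Or.inr h2)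
    · exact Or.inl ⟨hs, by simp [h1, h2]⟩
  have htH : t ∉ H := by
    intro htH
    apply hH
    rw [eq_top_iff, ← hSgen, Subgroup.closure_le]
    intro s hs
    rcases hScases s hs with h | rfl | rfl
    · exact hS0H h
    · exact htH
    · exact H.inv_mem htH
  have htinv2H : t⁻¹ * t⁻¹ ∈ H := by
    have : t⁻¹ * t⁻¹ = (t ^ 2)⁻¹ := by group
    rw [this]
    exact H.inv_mem haH
  -- the subgroup H ∪ Ht is everything
  have hconjH : ∀ h ∈ H, t * h = h⁻¹ * t := fun h hh => hconj' h (hHA hh)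
  let W : Subgroup G :=
    { carrier := {g | g ∈ H ∨ g * t⁻¹ ∈ H}
      one_mem' := Or.inl H.one_mem
      mul_mem' := by
        rintro x y (hx | hx) (hy | hy)
        · exact Or.inl (H.mul_mem hx hy)
        · refine Or.inr ?_
          have : x * y * t⁻¹ = x * (y * t⁻¹) := by group
          rw [this]
          exact H.mul_mem hx hy
        · refine Or.inr ?_
          have heq : x * y * t⁻¹ = (x * t⁻¹) * (t * y) * t⁻¹ := by group
          rw [heq, hconjH y hy]
          have heq2 : x * t⁻¹ * (y⁻¹ * t) * t⁻¹ = (x * t⁻¹) * y⁻¹ := by group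
          rw [heq2]
          exact H.mul_mem hx (H.inv_mem hy)
        · refine Or.inl ?_
          have heq : x * y = (x * t⁻¹) * (t * (y * t⁻¹)) * t := by group
          rw [heq, hconjH _ hy]
          have heq2 : x * t⁻¹ * ((y * t⁻¹)⁻¹ * t) * t = (x * t⁻¹) * (y * t⁻¹)⁻¹ * (t * t) := by
            group
          rw [heq2]
          have htt : t * t ∈ H := by rw [← pow_two]; exact haH
          exact H.mul_mem (H.mul_mem hx (H.inv_mem hy)) htt
      inv_mem' := by
        rintro x (hx | hx)
        · exact Or.inl (H.inv_mem hx)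
        · refine Or.inr ?_
          have h := hG.conj ((x * t⁻¹)⁻¹) (A.inv_mem (hHA hx))
          rw [inv_inv] at h
          have heq : x⁻¹ * t⁻¹ = (t⁻¹ * (x * t⁻¹)⁻¹ * t) * (t⁻¹ * t⁻¹) := by group
          rw [heq, h]
          exact H.mul_mem hx htinv2H }
  have hWtop : ∀ g : G, g ∈ H ∨ g * t⁻¹ ∈ H := by
    have hle : (⊤ : Subgroup G) ≤ W := by
      rw [← hSgen]
      apply Subgroup.closure_le W |>.mpr
      intro s hs
      rcases hScases s hs with h | rfl | rfl
      · exact Or.inl (hS0H h)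
      · exact Or.inr (by simp [H.one_mem])
      · exact Or.inr htinv2H
    exact fun g => hle (Subgroup.mem_top g)
  have hAH : A ≤ H := by
    intro x hx
    rcases hWtop x with h | h
    · exact h
    · exfalso
      apply htA
      have hxt : x * t⁻¹ ∈ A := hHA h
      have : t⁻¹ = x⁻¹ * (x * t⁻¹) := by group
      have ht' : t⁻¹ ∈ A := this ▸ A.mul_mem (A.inv_mem hx) hxt
      simpa using A.inv_mem ht'
  have hHAeq : H = A := le_antisymm hHA hAH
  -- finiteness
  have hAfin : Finite A := by
    obtain ⟨n, hn1, hcard⟩ := hG.card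
    exact Nat.finite_of_card_ne_zero (by omega)
  haveI hGfin : Finite G := by
    apply Finite.of_surjective (f := fun p : A × Bool => if p.2 then (p.1 : G) * t else (p.1 : G))
    intro g
    rcases hWtop g with h | h
    · exact ⟨(⟨g, hHA h⟩, false), by simp⟩
    · exact ⟨(⟨g * t⁻¹, hHA h⟩, true), by simp⟩
  -- coset helpers
  have hnotA : ∀ x : G, x ∈ A → x ≠ t ∧ x ≠ t⁻¹ := by
    intro x hx
    constructor
    · rintro rfl; exact htA hx
    · rintro rfl; exact htA (by simpa using A.inv_mem hx)
  have hmemS0 : ∀ x, x ∈ S → x ∈ A → x ∈ S \ {t, t⁻¹} := by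
    intro x hxS hxA
    refine ⟨hxS, ?_⟩
    obtain ⟨h1, h2⟩ := hnotA x hxA
    simp [h1, h2]
  have hS0inv : ∀ x, x ∈ S \ {t, t⁻¹} → x⁻¹ ∈ S \ {t, t⁻¹} := by
    intro x hx
    exact hmemS0 _ (hSinv x hx.1) (by simpa using A.inv_mem (hSA hx))
  -- graph lemmas
  have hadj : ∀ g h : G, (cayleyGraph G S).Adj g h ↔ g ≠ h ∧ g⁻¹ * h ∈ S := by
    intro g h
    constructor
    · rintro ⟨hne, h1 | h1⟩
      · refine ⟨hne, ?_⟩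
        have := hSinv _ h1
        simpa [mul_inv_rev] using this
      · exact ⟨hne, h1⟩
    · rintro ⟨hne, h1⟩
      exact ⟨hne, Or.inr h1⟩
  have hdistone : ∀ v, ((cayleyGraph G S).dist 1 v = 1 ↔ v ∈ S) := by
    intro v
    rw [SimpleGraph.dist_eq_one_iff_adj, hadj]
    constructor
    · rintro ⟨hne, h⟩; simpa using h
    · intro hv
      refine ⟨fun h => hS1 (h ▸ hv), by simpa using hv⟩
  have hTinter : ∀ v, ((cayleyGraph G S).neighborSet v ∩ {w | (cayleyGraph G S).dist 1 w = 1})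
      = {w | w ∈ S ∧ v⁻¹ * w ∈ S} := by
    intro v
    ext w
    simp only [Set.mem_inter_iff, SimpleGraph.mem_neighborSet, hadj, Set.mem_setOf_eq, hdistone]
    constructor
    · rintro ⟨⟨hne, h⟩, hw⟩; exact ⟨hw, h⟩
    · rintro ⟨hw, h⟩
      refine ⟨⟨?_, h⟩, hw⟩
      rintro rfl
      exact hS1 (by simpa using h)
  have hdist2 : ∀ v, v ≠ 1 → v ∉ S → ∀ u, u ∈ S → u⁻¹ * v ∈ S →
      (cayleyGraph G S).dist 1 v = 2 := by
    intro v hv1 hvS u huS huv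
    have hd1 : (cayleyGraph G S).dist 1 u = 1 := (hdistone u).mpr huS
    have hd2 : (cayleyGraph G S).dist u v = 1 := by
      rw [SimpleGraph.dist_eq_one_iff_adj, hadj]
      refine ⟨?_, huv⟩
      rintro rfl
      exact hS1 (by simpa using huv)
    have hle := hconn.dist_triangle (u := (1 : G)) (v := u) (w := v)
    rw [hd1, hd2] at hle
    have hne0 : (cayleyGraph G S).dist 1 v ≠ 0 := by
      exact fun h => hv1 ((hconn.dist_eq_zero_iff).mp h).symm
    have hne1 : (cayleyGraph G S).dist 1 v ≠ 1 := fun h => hvS ((hdistone v).mp h)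
    omega
  -- distance-regularity specializations
  obtain ⟨c1, a1, b1, h1⟩ := hreg 1
  obtain ⟨c2, a2, b2, h2⟩ := hreg 2
  have hT1 : ∀ v ∈ S, {w | w ∈ S ∧ v⁻¹ * w ∈ S}.ncard = a1 := by
    intro v hv
    have h := (h1 1 v ((hdistone v).mpr hv)).2.1
    rwa [hTinter] at h
  have hT2 : ∀ v, (cayleyGraph G S).dist 1 v = 2 → {w | w ∈ S ∧ v⁻¹ * w ∈ S}.ncard = c2 := by
    intro v hv
    have h := (h2 1 v hv).1
    rwa [show (2 : ℕ) - 1 = 1 from rfl, hTinter] at h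
  -- T t = {t^2, t⁻¹}
  have ht2net : t ^ 2 ≠ t⁻¹ := by
    intro h
    apply ht_ne1
    have e3 : t * t * t = 1 := by
      calc t * t * t = t ^ 2 * t := by rw [pow_two]
      _ = t⁻¹ * t := by rw [h]
      _ = 1 := by group
    calc t = (t * t * t * t) * (t * t * t)⁻¹ := by group
    _ = 1 := by rw [e4, e3]; group
  have htnetinv : t ≠ t⁻¹ := by
    intro h
    apply ha_ne1
    rw [pow_two]
    nth_rewrite 2 [h]
    simp
  have hTt : {w | w ∈ S ∧ t⁻¹ * w ∈ S} = {t ^ 2, t⁻¹} := by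
    ext w
    simp only [Set.mem_setOf_eq, Set.mem_insert_iff, Set.mem_singleton_iff]
    constructor
    · rintro ⟨hwS, hw⟩
      rcases hScases w hwS with hw0 | rfl | rfl
      · have hwA : w ∈ A := hSA hw0
        rcases hScases _ hw with h2 | h2 | h2
        · exfalso
          apply htA
          have : t⁻¹ ∈ A := by
            have heq : t⁻¹ = (t⁻¹ * w) * w⁻¹ := by group
            exact heq ▸ A.mul_mem (hSA h2) (A.inv_mem hwA)
          simpa using A.inv_mem this
        · left
          have : w = t * t := by
            calc w = t * (t⁻¹ * w) := by group
            _ = t * t := by rw [h2]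
          rw [this, pow_two]
        · exfalso
          apply hS1
          have : w = 1 := by
            have := mul_left_cancel (a := t⁻¹) (by rw [mul_one]; exact h2 : t⁻¹ * w = t⁻¹ * 1)
            simpa using this
          exact this ▸ hwS
      · exfalso; exact hS1 (by simpa using hw)
      · right; rfl
    · rintro (rfl | rfl)
      · refine ⟨ht2, ?_⟩
        have : t⁻¹ * t ^ 2 = t := by group
        rw [this]; exact htS
      · refine ⟨hSinv t htS, ?_⟩
        have : t⁻¹ * t⁻¹ = (t * t * t * t)⁻¹ * (t * t) := by group
        rw [this, e4]
        simpa [← pow_two] using ht2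
  have ha1 : a1 = 2 := by
    rw [← hT1 t htS, hTt]
    exact Set.ncard_pair ht2net
  -- T (t^2) = {t, t⁻¹} and the key consequence hB
  have hTa : {w | w ∈ S ∧ (t ^ 2)⁻¹ * w ∈ S} = {t, t⁻¹} := by
    refine (Set.eq_of_subset_of_ncard_le ?_ ?_ (Set.toFinite _)).symm
    · refine Set.insert_subset_iff.mpr ⟨?_, Set.singleton_subset_iff.mpr ?_⟩
      · refine ⟨htS, ?_⟩
        have heq : (t ^ 2)⁻¹ * t = t⁻¹ := by group
        rw [heq]; exact hSinv t htS
      · refine ⟨hSinv t htS, ?_⟩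
        have heq : (t ^ 2)⁻¹ * t⁻¹ = (t * t * t * t)⁻¹ * t := by group
        rw [heq, e4]
        simpa using htS
    · rw [hT1 _ ht2, ha1, Set.ncard_pair htnetinv]
  have hB : ∀ x, x ∈ S \ {t, t⁻¹} → t ^ 2 * x ∉ S := by
    intro x hx hax
    have hw : t ^ 2 * x ∈ {w | w ∈ S ∧ (t ^ 2)⁻¹ * w ∈ S} := by
      refine ⟨hax, ?_⟩
      have : (t ^ 2)⁻¹ * (t ^ 2 * x) = x := by group
      rw [this]; exact hx.1
    rw [hTa] at hw
    have hxA : t ^ 2 * x ∈ A := A.mul_mem haA (hSA hx)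
    obtain ⟨hn1, hn2⟩ := hnotA _ hxA
    rcases hw with h | h
    · exact hn1 h
    · exact hn2 h
  -- existence of s ∈ S₀, s ≠ t^2
  have hexs : ∃ s, s ∈ S \ {t, t⁻¹} ∧ s ≠ t ^ 2 := by
    by_contra hcon
    push_neg at hcon
    have hle : H ≤ Subgroup.zpowers (t ^ 2) := by
      rw [hHdef, Subgroup.zpowers_eq_closure]
      apply Subgroup.closure_mono
      intro x hx
      rw [hcon x hx]
      rfl
    have hAle : A ≤ Subgroup.zpowers (t ^ 2) := hHAeq ▸ hle
    have hcard := Subgroup.card_le_of_le hAle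
    rw [Nat.card_zpowers, hG.t_sq_order] at hcard
    obtain ⟨n, hn1, hcA⟩ := hG.card
    omega
  obtain ⟨s, hsS0, hsna⟩ := hexs
  have hsS : s ∈ S := hsS0.1
  have hsA : s ∈ A := hSA hsS0
  have hs1 : s ≠ 1 := fun h => hS1 (h ▸ hsS)
  -- case s * s = 1
  by_cases hg1 : s * s = 1
  · apply hsna
    exact hG.unique_involution s hsA (orderOf_eq_prime (by rwa [pow_two]) hs1)
  by_cases hga : s * s = t ^ 2
  · -- then t^2 * s⁻¹ = s ∈ S, contradicting hB s⁻¹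
    apply hB s⁻¹ (hS0inv s hsS0)
    have heq : t ^ 2 * s⁻¹ = s := by
      rw [← hga]; group
    rw [heq]; exact hsS
  -- main case: g := s * s ∉ {1, t^2}
  have hgA : s * s ∈ A := A.mul_mem hsA hsA
  have hconjs : s * t = t * s⁻¹ := by
    calc s * t = t * (t⁻¹ * s * t) := by group
    _ = t * s⁻¹ := by rw [hG.conj s hsA]
  have hconjs' : s⁻¹ * t = t * s := by
    calc s⁻¹ * t = t * (t⁻¹ * s⁻¹ * t) := by group
    _ = t * s := by rw [hG.conj s⁻¹ (A.inv_mem hsA), inv_inv]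
  have hTg : {w | w ∈ S ∧ (s * s)⁻¹ * w ∈ S}.ncard = 2 := by
    by_cases hgS : s * s ∈ S
    · rw [hT1 _ hgS, ha1]
    · -- dist 1 (s*s) = 2; and c2 = 2 via the vertex t*s
      have hts_ne1 : t * s ≠ 1 := by
        intro h
        apply htA
        have : t = s⁻¹ := by
          calc t = (t * s) * s⁻¹ := by group
          _ = s⁻¹ := by rw [h]; group
        exact this ▸ A.inv_mem hsA
      have hts_nS : t * s ∉ S := by
        intro h
        rcases hScases _ h with h0 | h0 | h0
        · apply htA
          have : t = (t * s) * s⁻¹ := by group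
          exact this ▸ A.mul_mem (hSA h0) (A.inv_mem hsA)
        · exact hs1 (mul_left_cancel (a := t) (by rw [mul_one]; exact h0))
        · apply hsna
          have hs' : s = t⁻¹ * t⁻¹ := by
            calc s = t⁻¹ * (t * s) := by group
            _ = t⁻¹ * t⁻¹ := by rw [h0]
          rw [hs']
          calc t⁻¹ * t⁻¹ = (t * t) * (t * t * t * t)⁻¹ := by group
          _ = t ^ 2 := by rw [e4, pow_two]; group
      have hdist_ts : (cayleyGraph G S).dist 1 (t * s) = 2 := by
        apply hdist2 _ hts_ne1 hts_nS t htS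
        have : t⁻¹ * (t * s) = s := by group
        rw [this]; exact hsS
      have hTts : {w | w ∈ S ∧ (t * s)⁻¹ * w ∈ S} = {t, s⁻¹} := by
        ext w
        simp only [Set.mem_setOf_eq, Set.mem_insert_iff, Set.mem_singleton_iff]
        constructor
        · rintro ⟨hwS, hw⟩
          rcases hScases w hwS with hw0 | rfl | rfl
          · have hwA : w ∈ A := hSA hw0
            rcases hScases _ hw with h2 | h2 | h2
            · exfalso
              apply htA
              have : t⁻¹ = s * ((t * s)⁻¹ * w) * w⁻¹ := by group
              have ht' : t⁻¹ ∈ A := this ▸ A.mul_mem (A.mul_mem hsA (hSA h2)) (A.inv_mem hwA)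
              simpa using A.inv_mem ht'
            · exfalso
              apply hB s⁻¹ (hS0inv s hsS0)
              have hw' : w = t ^ 2 * s⁻¹ := by
                have h3 : w = t * s * t := by
                  calc w = (t * s) * ((t * s)⁻¹ * w) := by group
                  _ = t * s * t := by rw [h2]
                rw [h3]
                calc t * s * t = t * (s * t) := by group
                _ = t * (t * s⁻¹) := by rw [hconjs]
                _ = t ^ 2 * s⁻¹ := by rw [pow_two]; group
              exact hw' ▸ hwS
            · right
              have h3 : w = t * s * t⁻¹ := by
                calc w = (t * s) * ((t * s)⁻¹ * w) := by group
                _ = t * s * t⁻¹ := by rw [h2]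
              rw [h3]
              calc t * s * t⁻¹ = (s⁻¹ * t) * t⁻¹ := by rw [← hconjs']
              _ = s⁻¹ := by group
          · left; rfl
          · exfalso
            apply hB s⁻¹ (hS0inv s hsS0)
            have heq : (t * s)⁻¹ * t⁻¹ = t ^ 2 * s⁻¹ := by
              have h4 : (t * t)⁻¹ = t ^ 2 := by rw [← hainv, pow_two]
              calc (t * s)⁻¹ * t⁻¹ = s⁻¹ * (t * t)⁻¹ := by group
              _ = s⁻¹ * t ^ 2 := by rw [h4]
              _ = t ^ 2 * s⁻¹ := hG.comm s⁻¹ (A.inv_mem hsA) (t ^ 2) haA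
            rw [heq] at hw
            exact hw
        · intro hw
          rcases hw with h | h <;> rw [h]
          · refine ⟨htS, ?_⟩
            have : (t * s)⁻¹ * t = s⁻¹ * 1 := by rw [← inv_mul_cancel t]; group
            rw [this, mul_one]
            exact hSinv s hsS
          · refine ⟨hSinv s hsS, ?_⟩
            have : (t * s)⁻¹ * s⁻¹ = s⁻¹ * (t⁻¹ * s⁻¹) := by group
            rw [this]
            have h5 : t⁻¹ * s⁻¹ = s * t⁻¹ := by
              calc t⁻¹ * s⁻¹ = (s * t)⁻¹ := by group
              _ = (t * s⁻¹)⁻¹ := by rw [hconjs]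
              _ = s * t⁻¹ := by group
            rw [h5]
            have : s⁻¹ * (s * t⁻¹) = t⁻¹ := by group
            rw [this]
            exact hSinv t htS
      have hc2 : c2 = 2 := by
        rw [← hT2 _ hdist_ts, hTts]
        apply Set.ncard_pair
        intro h
        exact htA (h ▸ A.inv_mem hsA)
      have hdist_g : (cayleyGraph G S).dist 1 (s * s) = 2 := by
        apply hdist2 _ hg1 hgS s hsS
        have : s⁻¹ * (s * s) = s := by group
        rw [this]; exact hsS
      rw [hT2 _ hdist_g, hc2]
  -- the involution argument
  have hsT : s ∈ {w | w ∈ S ∧ (s * s)⁻¹ * w ∈ S} := by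
    refine ⟨hsS, ?_⟩
    have : (s * s)⁻¹ * s = s⁻¹ := by group
    rw [this]; exact hSinv s hsS
  have key : ∀ x : G, {w | w ∈ S ∧ (s * s)⁻¹ * w ∈ S} = {s, x} → x ≠ s → False := by
    intro x hTeq hxs
    have hxT : x ∈ {w | w ∈ S ∧ (s * s)⁻¹ * w ∈ S} := by
      rw [hTeq]; right; rfl
    obtain ⟨hxS, hgxS⟩ := hxT
    -- x ∈ A
    have hxA : x ∈ A := by
      rcases hScases x hxS with h0 | hxt | hxt
      · exact hSA h0
      · exfalso
        rw [hxt] at hgxS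
        rcases hScases _ hgxS with h0 | h0 | h0
        · apply htA
          have : t = (s * s) * ((s * s)⁻¹ * t) := by group
          exact this ▸ A.mul_mem hgA (hSA h0)
        · apply hg1
          have : (s * s)⁻¹ = 1 := mul_right_cancel (b := t) (by rw [one_mul]; exact h0)
          simpa using congrArg (·⁻¹) this
        · apply hga
          have h3 : (s * s)⁻¹ = t⁻¹ * t⁻¹ := mul_right_cancel (b := t)
            (by rw [mul_assoc, inv_mul_cancel, mul_one]; exact h0)
          have := congrArg (·⁻¹) h3
          simp only [inv_inv, mul_inv_rev] at this
          rw [this, pow_two]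
      · exfalso
        rw [hxt] at hgxS
        rcases hScases _ hgxS with h0 | h0 | h0
        · apply htA
          have ht' : t⁻¹ = (s * s) * ((s * s)⁻¹ * t⁻¹) := by group
          have : t⁻¹ ∈ A := ht' ▸ A.mul_mem hgA (hSA h0)
          simpa using A.inv_mem this
        · apply hga
          have h3 : (s * s)⁻¹ = t * t := by
            calc (s * s)⁻¹ = ((s * s)⁻¹ * t⁻¹) * t := by group
            _ = t * t := by rw [h0]
          have := congrArg (·⁻¹) h3
          simp only [inv_inv, mul_inv_rev] at this
          rw [this]
          calc t⁻¹ * t⁻¹ = (t * t) * (t * t * t * t)⁻¹ := by group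
          _ = t ^ 2 := by rw [e4, pow_two]; group
        · apply hg1
          have h3 : (s * s)⁻¹ = 1 := by
            calc (s * s)⁻¹ = ((s * s)⁻¹ * t⁻¹) * t := by group
            _ = t⁻¹ * t := by rw [h0]
            _ = 1 := by group
          simpa using congrArg (·⁻¹) h3
    -- y := s*s*x⁻¹ is in T
    have hyS : s * s * x⁻¹ ∈ S := by
      have h' := hSinv _ hgxS
      have heq : ((s * s)⁻¹ * x)⁻¹ = x⁻¹ * (s * s) := by rw [mul_inv_rev, inv_inv]
      rw [heq] at h'
      rwa [hG.comm x⁻¹ (A.inv_mem hxA) (s * s) hgA] at h'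
    have hymem : s * s * x⁻¹ ∈ ({s, x} : Set G) := by
      rw [← hTeq]
      refine ⟨hyS, ?_⟩
      have : (s * s)⁻¹ * (s * s * x⁻¹) = x⁻¹ := by group
      rw [this]; exact hSinv x hxS
    rcases hymem with h | h
    · apply hxs
      have : x⁻¹ = s⁻¹ := by
        calc x⁻¹ = (s * s)⁻¹ * (s * s * x⁻¹) := by group
        _ = (s * s)⁻¹ * s := by rw [h]
        _ = s⁻¹ := by group
      simpa using congrArg (·⁻¹) this
    · -- s*s = x*x
      have hxx : x * x = s * s := by
        calc x * x = (s * s * x⁻¹) * x := by rw [h]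
        _ = s * s := by group
      have hz1 : x * s⁻¹ ≠ 1 := fun h' => hxs (by
        have : x = s := by
          calc x = (x * s⁻¹) * s := by group
          _ = s := by rw [h']; group
        exact this)
      have hz2 : (x * s⁻¹) ^ 2 = 1 := by
        have hc := hG.comm s⁻¹ (A.inv_mem hsA) x hxA
        rw [pow_two]
        calc x * s⁻¹ * (x * s⁻¹) = x * (s⁻¹ * x) * s⁻¹ := by group
        _ = x * (x * s⁻¹) * s⁻¹ := by rw [hc]
        _ = (x * x) * (s * s)⁻¹ := by group
        _ = (s * s) * (s * s)⁻¹ := by rw [hxx]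
        _ = 1 := by group
      have hz := hG.unique_involution _ (A.mul_mem hxA (A.inv_mem hsA))
        (orderOf_eq_prime hz2 hz1)
      apply hB s hsS0
      have : t ^ 2 * s = x := by
        rw [← hz]; group
      rw [this]; exact hxS
  -- finish
  obtain ⟨p, q, hpq, hTeq⟩ := Set.ncard_eq_two.mp hTg
  have hsmem : s ∈ ({p, q} : Set G) := hTeq ▸ hsT
  rcases hsmem with rfl | rfl
  · exact key q (by rw [hTeq]) hpq.symm
  · exact key p (by rw [hTeq, Set.pair_comm]) hpq
end

section
/- Let G be a generalized dicyclic group generated by A and t, and let S be an inverse-closed subset of G∖{1} with ⟨S⟩ = G, t ∈ S, and H = ⟨S∖{t,t⁻¹}⟩ ≠ G. Suppose (S∖{t,t⁻¹}) ∩ tA ≠ ∅. If the Cayley graph Γ = Cay(G,S) is distance-regular, then t² ∉ S, S ∩ A = ∅, and there exists x ∈ A with x² = t² = a (so x has order 4) such that S = {t, t⁻¹, tx, tx⁻¹}; moreover Γ is isomorphic to K₄,₄. -/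
open SimpleGraph Pointwise

/-- Subcase A.2: if `(S \ {t, t⁻¹}) ∩ tA ≠ ∅` and the Cayley graph is
distance-regular, then `S = {t, t⁻¹, tx, tx⁻¹}` with `x² = t² = a`, and the
graph is `K_{4,4}`. -/
theorem subcaseA2
    {G : Type*} [Group G] (A : Subgroup G) (t : G) (hG : IsGenDicyclic A t)
    (S : Set G) (hS1 : (1 : G) ∉ S) (hSinv : ∀ x ∈ S, x⁻¹ ∈ S)
    (hSgen : Subgroup.closure S = ⊤) (htS : t ∈ S)
    (H : Subgroup G) (hHdef : H = Subgroup.closure (S \ {t, t⁻¹})) (hH : H ≠ ⊤)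
    (hmeet : ((S \ {t, t⁻¹}) ∩ (t • (A : Set G))).Nonempty)
    (hdrg : (cayleyGraph G S).IsDistRegular) :
    t ^ 2 ∉ S ∧ S ∩ (A : Set G) = ∅ ∧
      (∃ x : G, x ∈ A ∧ x ^ 2 = t ^ 2 ∧ orderOf x = 4 ∧ S = {t, t⁻¹, t * x, t * x⁻¹}) ∧
      Nonempty (cayleyGraph G S ≃g completeBipartiteGraph (Fin 4) (Fin 4)) := by
  classical
  obtain ⟨a, haDef⟩ : ∃ a : G, a = t ^ 2 := ⟨t ^ 2, rfl⟩
  have haA : a ∈ A := haDef ▸ hG.t_sq_mem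
  have hsq : a * a = 1 := by
    have h := pow_orderOf_eq_one (t ^ 2)
    rw [hG.t_sq_order] at h
    rw [haDef, ← pow_two]; exact h
  have ha1 : a ≠ 1 := by
    intro h
    have := hG.t_sq_order
    rw [← haDef, h, orderOf_one] at this
    omega
  have hainv : a⁻¹ = a := by
    rw [inv_eq_iff_mul_eq_one]; exact hsq
  have hcomm := hG.comm
  -- rewrite rules
  have r1 : ∀ x ∈ A, x * t = t * x⁻¹ := by
    intro x hx
    have h := hG.conj x hx
    calc x * t = t * (t⁻¹ * x * t) := by group
    _ = t * x⁻¹ := by rw [h]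
  have htinv : t⁻¹ = t * a := by
    have h : t * (t * a) = 1 := by
      rw [haDef]
      calc t * (t * t ^ 2) = t ^ 2 * t ^ 2 := by group
      _ = 1 := by rw [← haDef]; exact hsq
    exact inv_eq_of_mul_eq_one_right h
  have r2 : ∀ x ∈ A, (t * x)⁻¹ = t * (x * a) := by
    intro x hx
    have h1 : x⁻¹ * t = t * x := by
      have := r1 x⁻¹ (A.inv_mem hx)
      rwa [inv_inv] at this
    calc (t * x)⁻¹ = x⁻¹ * t⁻¹ := by group
    _ = x⁻¹ * (t * a) := by rw [htinv]
    _ = (x⁻¹ * t) * a := by group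
    _ = (t * x) * a := by rw [h1]
    _ = t * (x * a) := by group
  have r4 : ∀ x ∈ A, ∀ z : G, x * (t * z) = t * (x⁻¹ * z) := by
    intro x hx z
    calc x * (t * z) = (x * t) * z := by group
    _ = (t * x⁻¹) * z := by rw [r1 x hx]
    _ = t * (x⁻¹ * z) := by group
  have ht2 : t * t = a := by rw [haDef, pow_two]
  have r3 : ∀ x ∈ A, ∀ z : G, (t * x) * (t * z) = a * (x⁻¹ * z) := by
    intro x hx z
    have h1 : x * t = t * x⁻¹ := r1 x hx
    calc (t * x) * (t * z) = t * ((x * t) * z) := by group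
    _ = t * ((t * x⁻¹) * z) := by rw [h1]
    _ = (t * t) * (x⁻¹ * z) := by group
    _ = a * (x⁻¹ * z) := by rw [ht2]
  have htA : t ∉ A := by
    intro h
    have hc := hG.conj t h
    have h2 : t⁻¹ = t := by
      have h3 : t⁻¹ * t * t = t := by group
      rw [hc] at h3; exact h3
    refine ha1 ?_
    rw [← ht2]
    nth_rewrite 1 [← h2]
    group
  have htcA : ∀ c ∈ A, t * c ∉ A := by
    intro c hc h
    exact htA (by simpa using A.mul_mem h (A.inv_mem hc))
  have htcA' : ∀ c ∈ A, t * c ≠ 1 := by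
    intro c hc h
    exact htcA c hc (h ▸ A.one_mem)
  have htinvA : t⁻¹ ∉ A := by
    rw [htinv]; exact htcA a haA
  -- decomposition G = A ∪ tA
  have hdec : ∀ g : G, g ∈ A ∨ ∃ c ∈ A, g = t * c := by
    have hM : ∃ M : Subgroup G, (M : Set G) = {g | g ∈ A ∨ ∃ c ∈ A, g = t * c} := by
      refine ⟨⟨⟨⟨{g | g ∈ A ∨ ∃ c ∈ A, g = t * c}, ?_⟩, Or.inl A.one_mem⟩, ?_⟩, rfl⟩
      · rintro g h (hg | ⟨c, hc, rfl⟩) (hh | ⟨d, hd, rfl⟩)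
        · exact Or.inl (A.mul_mem hg hh)
        · exact Or.inr ⟨g⁻¹ * d, A.mul_mem (A.inv_mem hg) hd, r4 g hg d⟩
        · exact Or.inr ⟨c * h, A.mul_mem hc hh, by group⟩
        · exact Or.inl (by rw [r3 c hc d]; exact A.mul_mem haA (A.mul_mem (A.inv_mem hc) hd))
      · rintro g (hg | ⟨c, hc, rfl⟩)
        · exact Or.inl (A.inv_mem hg)
        · exact Or.inr ⟨c * a, A.mul_mem hc haA, r2 c hc⟩
    obtain ⟨M, hMeq⟩ := hM
    have hle : Subgroup.closure ((A : Set G) ∪ {t}) ≤ M := by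
      rw [Subgroup.closure_le]
      rintro g (hg | hg)
      · show g ∈ (M : Set G); rw [hMeq]; exact Or.inl hg
      · show g ∈ (M : Set G); rw [hMeq]
        exact Or.inr ⟨1, A.one_mem, by simp [Set.mem_singleton_iff.mp hg]⟩
    intro g
    have : g ∈ M := by rw [hG.gen] at hle; exact hle trivial
    rw [← Subgroup.mem_carrier] at this
    have h2 : g ∈ (M : Set G) := this
    rw [hMeq] at h2
    exact h2
  -- finiteness
  have hfinA : Finite (A : Set G) := by
    obtain ⟨n, hn1, hncard⟩ := hG.card
    have : Nat.card A ≠ 0 := by omega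
    exact Nat.finite_of_card_ne_zero this
  haveI hfinG : Finite G := by
    rw [← Set.finite_univ_iff]
    apply Set.Finite.subset (((A : Set G).toFinite).union (((A : Set G).toFinite).image (fun c => t * c)))
    intro g _
    rcases hdec g with h | ⟨c, hc, rfl⟩
    · exact Or.inl h
    · exact Or.inr ⟨c, hc, rfl⟩
  -- extraction of y
  obtain ⟨s, hs_mem, hs_tA⟩ := hmeet
  rw [Set.mem_smul_set] at hs_tA
  obtain ⟨y, hyA, hy_eq⟩ := hs_tA
  simp only [smul_eq_mul] at hy_eq
  obtain ⟨hsS, hsnt⟩ := hs_mem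
  subst hy_eq
  have hyS : t * y ∈ S := hsS
  have hsnt' : ¬(t * y = t ∨ t * y = t⁻¹) := by
    intro h; exact hsnt (by rcases h with h | h <;> simp [h])
  push_neg at hsnt'
  obtain ⟨hty_t, hty_tinv⟩ := hsnt'
  have hy1 : y ≠ 1 := by intro h; exact hty_t (by rw [h, mul_one])
  have hyna : y ≠ a := by intro h; exact hty_tinv (by rw [h, ← htinv])
  -- H facts
  have hpair : ∀ g : G, g ∈ ({t, t⁻¹} : Set G) ↔ (g = t ∨ g = t⁻¹) := by
    intro g; simp [Set.mem_insert_iff]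
  have htyH : t * y ∈ H := by
    rw [hHdef]
    apply Subgroup.subset_closure
    exact ⟨hyS, hsnt⟩
  have haH : a ∈ H := by
    have h := r3 y hyA y
    have : (t * y) * (t * y) = a := by rw [h]; group
    rw [← this]
    exact H.mul_mem htyH htyH
  have htH : t ∉ H := by
    intro h
    apply hH
    rw [eq_top_iff, ← hSgen, Subgroup.closure_le]
    intro g hg
    by_cases hgp : g = t ∨ g = t⁻¹
    · rcases hgp with rfl | rfl
      · exact h
      · exact H.inv_mem h
    · rw [hHdef]
      apply Subgroup.subset_closure
      exact ⟨hg, fun hc => hgp ((hpair g).mp hc)⟩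
  have hyH : y ∉ H := by
    intro h
    apply htH
    have : (t * y) * y⁻¹ ∈ H := H.mul_mem htyH (H.inv_mem h)
    simpa using this
  have keyA : ∀ c, c ∈ S → c ∈ A → c ∈ H := by
    intro c hcS hcA
    rw [hHdef]
    apply Subgroup.subset_closure
    refine ⟨hcS, fun hc => ?_⟩
    rcases (hpair c).mp hc with rfl | rfl
    · exact htA hcA
    · exact htA (by simpa using A.inv_mem hcA)
  have key1 : ∀ c ∈ A, t * c ∈ S → c = 1 ∨ c = a ∨ y⁻¹ * c ∈ H := by
    intro c hcA hcS
    by_cases h1 : c = 1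
    · exact Or.inl h1
    by_cases h2 : c = a
    · exact Or.inr (Or.inl h2)
    refine Or.inr (Or.inr ?_)
    have htcH : t * c ∈ H := by
      rw [hHdef]
      apply Subgroup.subset_closure
      refine ⟨hcS, fun hc => ?_⟩
      rcases (hpair _).mp hc with h | h
      · exact h1 (by simpa using mul_left_cancel (a := t) (by rw [h, mul_one]))
      · rw [htinv] at h
        exact h2 (mul_left_cancel (a := t) h)
    have heq : y⁻¹ * c = (t * y)⁻¹ * (t * c) := by
      rw [r2 y hyA, r3 (y * a) (A.mul_mem hyA haA) c]
      group
    rw [heq]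
    exact H.mul_mem (H.inv_mem htyH) htcH
  have hSinv_t : ∀ c ∈ A, t * c ∈ S → t * (c * a) ∈ S := by
    intro c hc h
    have := hSinv _ h
    rwa [r2 c hc] at this
  have htinvS : t⁻¹ ∈ S := hSinv t htS
  have hyH' : y⁻¹ ∉ H := fun h => hyH (by simpa using H.inv_mem h)
  -- graph layer
  have adjS : ∀ g h : G, (cayleyGraph G S).Adj g h ↔ h⁻¹ * g ∈ S := by
    intro g h
    constructor
    · rintro ⟨hne, hm | hm⟩
      · exact hm
      · have := hSinv _ hm
        rwa [mul_inv_rev, inv_inv] at this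
    · intro hm
      refine ⟨fun he => hS1 ?_, Or.inl hm⟩
      rw [he] at hm
      simpa using hm
  have adjS2 : ∀ g h : G, (cayleyGraph G S).Adj g h ↔ g⁻¹ * h ∈ S := by
    intro g h
    rw [SimpleGraph.adj_comm]
    exact adjS h g
  have adj_one : ∀ v : G, (cayleyGraph G S).Adj 1 v ↔ v ∈ S := by
    intro v
    rw [adjS2]
    simp
  have hconn := hdrg.1
  have CNeq : ∀ v : G, (cayleyGraph G S).neighborSet v ∩ {w | (cayleyGraph G S).dist 1 w = 1}
      = {w | v⁻¹ * w ∈ S ∧ w ∈ S} := by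
    intro v
    ext w
    simp only [Set.mem_inter_iff, SimpleGraph.mem_neighborSet, Set.mem_setOf_eq,
      SimpleGraph.dist_eq_one_iff_adj, adj_one, adjS2]
  have dist1 : ∀ v ∈ S, (cayleyGraph G S).dist 1 v = 1 := by
    intro v hv
    rw [SimpleGraph.dist_eq_one_iff_adj, adj_one]
    exact hv
  have dist2 : ∀ v s₀ : G, v ∉ S → v ≠ 1 → s₀ ∈ S → (cayleyGraph G S).Adj s₀ v →
      (cayleyGraph G S).dist 1 v = 2 := by
    intro v s₀ hvS hv1 hs₀ hadj
    have hle : (cayleyGraph G S).dist 1 v ≤ 2 := by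
      have hw := (cayleyGraph G S).dist_le
        (SimpleGraph.Walk.cons ((adj_one s₀).mpr hs₀) (SimpleGraph.Walk.cons hadj SimpleGraph.Walk.nil))
      simpa using hw
    have h0 : (cayleyGraph G S).dist 1 v ≠ 0 :=
      fun h => hv1 ((hconn.dist_eq_zero_iff).mp h).symm
    have h1 : (cayleyGraph G S).dist 1 v ≠ 1 :=
      fun h => hvS ((adj_one v).mp (SimpleGraph.dist_eq_one_iff_adj.mp h))
    omega
  obtain ⟨hconn', hpar⟩ := hdrg
  obtain ⟨c1, a1, b1, hI1⟩ := hpar 1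
  obtain ⟨c2, a2, b2, hI2⟩ := hpar 2
  -- 4-element subset of common neighborhood of 1 and a
  have hsub4 : ({t, t⁻¹, t * y, t * (y * a)} : Set G) ⊆ {w | a⁻¹ * w ∈ S ∧ w ∈ S} := by
    intro w hw
    simp only [Set.mem_insert_iff, Set.mem_singleton_iff] at hw
    rcases hw with h | h | h | h <;> rw [h]
    · refine ⟨?_, htS⟩
      have h : a⁻¹ * t = t⁻¹ := by rw [hainv, r1 a haA, hainv, ← htinv]
      rw [h]; exact htinvS
    · refine ⟨?_, htinvS⟩
      have h : a⁻¹ * t⁻¹ = t := by rw [hainv, htinv, r4 a haA]; group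
      rw [h]; exact htS
    · refine ⟨?_, hyS⟩
      have h : a⁻¹ * (t * y) = t * (y * a) := by
        rw [hainv, r4 a haA, hainv, hcomm a haA y hyA]
      rw [h]; exact hSinv_t y hyA hyS
    · refine ⟨?_, hSinv_t y hyA hyS⟩
      have h : a⁻¹ * (t * (y * a)) = t * y := by
        rw [hainv, r4 a haA, hainv, hcomm a haA (y * a) (A.mul_mem hyA haA), mul_assoc, hsq, mul_one]
      rw [h]; exact hyS
  have hd1 : t ≠ t⁻¹ := by
    intro h
    refine ha1 ?_
    rw [← ht2]
    nth_rewrite 2 [h]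
    group
  have hd2 : t ≠ t * y := fun h => hy1 (mul_left_cancel (show t * 1 = t * y by rw [mul_one]; exact h)).symm
  have hya1 : y * a ≠ 1 := by
    intro h
    refine hyna ?_
    have : y = a⁻¹ := by rw [eq_inv_iff_mul_eq_one]; exact h
    rw [this, hainv]
  have hd3 : t ≠ t * (y * a) := fun h => hya1 (mul_left_cancel (show t * 1 = t * (y * a) by rw [mul_one]; exact h)).symm
  have hd4 : t⁻¹ ≠ t * y := by
    rw [htinv]
    intro h
    exact hyna (mul_left_cancel h).symm
  have hd5 : t⁻¹ ≠ t * (y * a) := by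
    rw [htinv]
    intro h
    have h2 : a = y * a := mul_left_cancel h
    exact hy1 (by have := mul_right_cancel (show 1 * a = y * a by rw [one_mul]; exact h2); exact this.symm)
  have hd6 : t * y ≠ t * (y * a) := by
    intro h
    have h2 : y = y * a := mul_left_cancel h
    exact ha1 (by have := mul_left_cancel (show y * 1 = y * a by rw [mul_one]; exact h2); exact this.symm)
  have h4card : ({t, t⁻¹, t * y, t * (y * a)} : Set G).ncard = 4 := by
    rw [Set.ncard_insert_of_notMem (by simp [hd1, hd2, hd3]),
      Set.ncard_insert_of_notMem (by simp [hd4, hd5]), Set.ncard_pair hd6]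
  have h_at : a ≠ t⁻¹ := fun h => htcA a haA (by rw [← htinv, ← h]; exact haA)
  -- Step A : a ∉ S
  have hanS : a ∉ S := by
    intro haS
    have hset_t : {w | t⁻¹ * w ∈ S ∧ w ∈ S} = ({a, t⁻¹} : Set G) := by
      ext w
      constructor
      · rintro ⟨h1w, h2w⟩
        rcases hdec w with hwA | ⟨c, hcA, rfl⟩
        · rw [show t⁻¹ * w = t * (a * w) by rw [htinv]; group] at h1w
          rcases key1 (a * w) (A.mul_mem haA hwA) h1w with h | h | h
          · have : w = a := by
              have h5 : w = a⁻¹ := by rw [eq_inv_iff_mul_eq_one, hcomm w hwA a haA]; exact h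
              rw [h5, hainv]
            simp [this]
          · exfalso
            have : w = 1 := mul_left_cancel (h.trans (mul_one a).symm)
            exact hS1 (this ▸ h2w)
          · exfalso
            apply hyH'
            have hwH : w ∈ H := keyA w h2w hwA
            have heq : y⁻¹ = (y⁻¹ * (a * w)) * (w⁻¹ * a⁻¹) := by group
            rw [heq]
            exact H.mul_mem h (H.mul_mem (H.inv_mem hwH) (H.inv_mem haH))
        · have hcS : c ∈ S := by rwa [show t⁻¹ * (t * c) = c by group] at h1w
          rcases key1 c hcA h2w with h | h | h
          · exact absurd (h ▸ hcS) hS1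
          · simp only [Set.mem_insert_iff, Set.mem_singleton_iff]
            right; rw [h, ← htinv]
          · exfalso
            apply hyH'
            have hcH : c ∈ H := keyA c hcS hcA
            have heq : y⁻¹ = (y⁻¹ * c) * c⁻¹ := by group
            rw [heq]
            exact H.mul_mem h (H.inv_mem hcH)
      · rintro (rfl | rfl)
        · refine ⟨?_, haS⟩
          rw [show t⁻¹ * w = t by rw [htinv, mul_assoc, hsq, mul_one]]
          exact htS
        · refine ⟨?_, htinvS⟩
          rw [show t⁻¹ * t⁻¹ = a by rw [htinv, r3 a haA a]; group]
          exact haS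
    have e1 := (hI1 1 t (dist1 t htS)).2.1
    rw [CNeq t, hset_t, Set.ncard_pair h_at] at e1
    have e2 := (hI1 1 a (dist1 a haS)).2.1
    rw [CNeq a] at e2
    have hle : 4 ≤ a1 := by
      calc 4 = ({t, t⁻¹, t * y, t * (y * a)} : Set G).ncard := h4card.symm
      _ ≤ ({w | a⁻¹ * w ∈ S ∧ w ∈ S} : Set G).ncard := Set.ncard_le_ncard hsub4 (Set.toFinite _)
      _ = a1 := e2
    omega
  -- distance-2 vertices
  have hadj_ta : (cayleyGraph G S).Adj t a := by
    rw [adjS t a]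
    rw [show a⁻¹ * t = t⁻¹ from by rw [hainv, r1 a haA, hainv, ← htinv]]
    exact htinvS
  have hdista : (cayleyGraph G S).dist 1 a = 2 := dist2 a t hanS ha1 htS hadj_ta
  have hayinv : (a * y⁻¹)⁻¹ = y * a := by rw [mul_inv_rev, inv_inv, hainv]
  have haynS : a * y⁻¹ ∉ S := by
    intro h
    apply hyH'
    have hH1 : a * y⁻¹ ∈ H := keyA _ h (A.mul_mem haA (A.inv_mem hyA))
    rw [show (y⁻¹ : G) = a⁻¹ * (a * y⁻¹) from by group]
    exact H.mul_mem (H.inv_mem haH) hH1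
  have hay1 : a * y⁻¹ ≠ 1 := by
    intro h
    have : a = y := by
      have h2 : a = (y⁻¹)⁻¹ := by rw [eq_inv_iff_mul_eq_one]; exact h
      rwa [inv_inv] at h2
    exact hyna this.symm
  have hadj_ay : (cayleyGraph G S).Adj (t * y) (a * y⁻¹) := by
    rw [adjS (t * y) (a * y⁻¹), hayinv, r4 (y * a) (A.mul_mem hyA haA) y,
      show ((y * a)⁻¹ * y : G) = a⁻¹ from by group, hainv, ← htinv]
    exact htinvS
  have hdistay : (cayleyGraph G S).dist 1 (a * y⁻¹) = 2 :=
    dist2 (a * y⁻¹) (t * y) haynS hay1 hyS hadj_ay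
  have ec_a := (hI2 1 a hdista).1
  have ec_ay := (hI2 1 (a * y⁻¹) hdistay).1
  simp only [show (2 : ℕ) - 1 = 1 from rfl] at ec_a ec_ay
  rw [CNeq a] at ec_a
  rw [CNeq (a * y⁻¹)] at ec_ay
  -- superset computation for a*y⁻¹
  have hsup : {w | (a * y⁻¹)⁻¹ * w ∈ S ∧ w ∈ S} ⊆ ({t, t⁻¹, t * y, t * (y * a)} : Set G) := by
    rintro w ⟨h1w, h2w⟩
    rw [hayinv] at h1w
    rcases hdec w with hwA | ⟨c, hcA, rfl⟩
    · exfalso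
      apply hyH
      have hwH : w ∈ H := keyA w h2w hwA
      have h3 : (y * a) * w ∈ H := keyA _ h1w (A.mul_mem (A.mul_mem hyA haA) hwA)
      rw [show y = ((y * a) * w) * (w⁻¹ * a⁻¹) from by group]
      exact H.mul_mem h3 (H.mul_mem (H.inv_mem hwH) (H.inv_mem haH))
    · rw [r4 (y * a) (A.mul_mem hyA haA) c] at h1w
      simp only [Set.mem_insert_iff, Set.mem_singleton_iff]
      rcases key1 c hcA h2w with hc1 | hc2 | hc3
      · left; rw [hc1, mul_one]
      · right; left; rw [hc2, ← htinv]
      · rcases key1 ((y * a)⁻¹ * c) (A.mul_mem (A.inv_mem (A.mul_mem hyA haA)) hcA) h1w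
          with hd1 | hd2 | hd3
        · right; right; right
          rw [((inv_mul_eq_one).mp hd1).symm]
        · right; right; left
          have hcy : c = y := by
            have h5 : c = (y * a) * ((y * a)⁻¹ * c) := by group
            rw [hd2] at h5
            rwa [mul_assoc, hsq, mul_one] at h5
          rw [hcy]
        · exfalso
          apply hyH'
          rw [show (y⁻¹ : G) = ((y⁻¹ * ((y * a)⁻¹ * c)) * (y⁻¹ * c)⁻¹) * a from by group]
          exact H.mul_mem (H.mul_mem hd3 (H.inv_mem hc3)) haH
  -- pin down c2 = 4 and the two common neighborhoods
  have hge4 : 4 ≤ c2 := by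
    calc 4 = ({t, t⁻¹, t * y, t * (y * a)} : Set G).ncard := h4card.symm
    _ ≤ ({w | a⁻¹ * w ∈ S ∧ w ∈ S} : Set G).ncard := Set.ncard_le_ncard hsub4 (Set.toFinite _)
    _ = c2 := ec_a
  have hle4 : c2 ≤ 4 := by
    calc c2 = ({w | (a * y⁻¹)⁻¹ * w ∈ S ∧ w ∈ S} : Set G).ncard := ec_ay.symm
    _ ≤ ({t, t⁻¹, t * y, t * (y * a)} : Set G).ncard := Set.ncard_le_ncard hsup (Set.toFinite _)
    _ = 4 := h4card
  have hc2 : c2 = 4 := le_antisymm hle4 hge4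
  have hCaEq : {w | a⁻¹ * w ∈ S ∧ w ∈ S} = ({t, t⁻¹, t * y, t * (y * a)} : Set G) := by
    refine (Set.eq_of_subset_of_ncard_le hsub4 ?_ (Set.toFinite _)).symm
    rw [ec_a, h4card]; omega
  have hCayEq : {w | (a * y⁻¹)⁻¹ * w ∈ S ∧ w ∈ S} = ({t, t⁻¹, t * y, t * (y * a)} : Set G) :=
    Set.eq_of_subset_of_ncard_le hsup (by rw [ec_ay, h4card]; omega) (Set.toFinite _)
  -- classification of tA-elements of S
  have Q1 : ∀ c, c ∈ A → t * c ∈ S → (c = 1 ∨ c = a ∨ c = y ∨ c = y * a) := by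
    intro c hcA hcS
    have hm : t * c ∈ {w | a⁻¹ * w ∈ S ∧ w ∈ S} := by
      refine ⟨?_, hcS⟩
      rw [hainv, r4 a haA c, hainv, hcomm a haA c hcA]
      exact hSinv_t c hcA hcS
    rw [hCaEq] at hm
    simp only [Set.mem_insert_iff, Set.mem_singleton_iff] at hm
    rcases hm with h | h | h | h
    · exact Or.inl (mul_left_cancel (h.trans (mul_one t).symm))
    · rw [htinv] at h; exact Or.inr (Or.inl (mul_left_cancel h))
    · exact Or.inr (Or.inr (Or.inl (mul_left_cancel h)))
    · exact Or.inr (Or.inr (Or.inr (mul_left_cancel h)))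
  -- y has square a
  have Q2 : y * y = a := by
    have hmT : t ∈ {w | (a * y⁻¹)⁻¹ * w ∈ S ∧ w ∈ S} := by
      rw [hCayEq]; simp
    obtain ⟨h1w, _⟩ := hmT
    rw [hayinv, r1 (y * a) (A.mul_mem hyA haA)] at h1w
    rcases Q1 ((y * a)⁻¹) (A.inv_mem (A.mul_mem hyA haA)) h1w with h | h | h | h
    · exact absurd (by rwa [inv_eq_one] at h) hya1
    · exfalso
      have h5 : y * a = a := by rw [← inv_inv (y * a), h, hainv]
      exact hy1 (mul_right_cancel (h5.trans (one_mul a).symm))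
    · have h5 : y * a = y⁻¹ := by
        have := congrArg (fun g : G => g⁻¹) h
        simpa using this
      have h6 : (y * y) * a = 1 := by rw [mul_assoc, h5, mul_inv_cancel]
      have h7 : y * y = a⁻¹ := by rw [eq_inv_iff_mul_eq_one]; exact h6
      rw [h7, hainv]
    · exfalso
      have h5 : (y * a) * (y * a) = 1 := by
        rw [show ((1 : G)) = (y * a) * (y * a)⁻¹ from by group, h]
      have hord : orderOf (y * a) = 2 := orderOf_eq_prime (by rwa [pow_two]) hya1
      have h6 := hG.unique_involution (y * a) (A.mul_mem hyA haA) hord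
      rw [← haDef] at h6
      exact hy1 (mul_right_cancel (h6.trans (one_mul a).symm))
  have hnotA4 : ∀ u, u ∈ A → u ∈ ({t, t⁻¹, t * y, t * (y * a)} : Set G) → False := by
    intro u huA hu
    simp only [Set.mem_insert_iff, Set.mem_singleton_iff] at hu
    rcases hu with h | h | h | h
    · exact htA (h ▸ huA)
    · exact htinvA (h ▸ huA)
    · exact htcA y hyA (h ▸ huA)
    · exact htcA (y * a) (A.mul_mem hyA haA) (h ▸ huA)
  have hr0 : ∀ u, u ∈ S → u ∈ A → a * u ∉ S := by
    intro u huS huA hcon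
    have hm : a * u ∈ {w | a⁻¹ * w ∈ S ∧ w ∈ S} := by
      refine ⟨?_, hcon⟩
      rw [show a⁻¹ * (a * u) = u from by group]
      exact huS
    rw [hCaEq] at hm
    exact hnotA4 (a * u) (A.mul_mem haA huA) hm
  -- Step D : S contains no element of A
  have hSA : ∀ w, w ∈ S → w ∈ A → False := by
    intro x hxS hxA
    have hxH : x ∈ H := keyA x hxS hxA
    have htxS : t * x ∉ S := by
      intro h
      rcases Q1 x hxA h with h1 | h1 | h1 | h1
      · exact hS1 (h1 ▸ hxS)
      · exact hanS (h1 ▸ hxS)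
      · exact hyH (h1 ▸ hxH)
      · apply hyH
        have : y * a ∈ H := h1 ▸ hxH
        rw [show y = (y * a) * a⁻¹ from by group]
        exact H.mul_mem this (H.inv_mem haH)
    have hadj_tx : (cayleyGraph G S).Adj t (t * x) := by
      rw [adjS2 t (t * x), show t⁻¹ * (t * x) = x from by group]
      exact hxS
    have hdisttx : (cayleyGraph G S).dist 1 (t * x) = 2 :=
      dist2 (t * x) t htxS (htcA' x hxA) htS hadj_tx
    have ec_tx := (hI2 1 (t * x) hdisttx).1
    simp only [show (2 : ℕ) - 1 = 1 from rfl] at ec_tx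
    rw [CNeq (t * x)] at ec_tx
    have hsubtx : {w | (t * x)⁻¹ * w ∈ S ∧ w ∈ S} ⊆ ({x⁻¹, t} : Set G) := by
      rintro w ⟨h1w, h2w⟩
      rw [r2 x hxA] at h1w
      simp only [Set.mem_insert_iff, Set.mem_singleton_iff]
      rcases hdec w with hwA | ⟨c, hcA, rfl⟩
      · rw [mul_assoc] at h1w
        rcases Q1 ((x * a) * w) (A.mul_mem (A.mul_mem hxA haA) hwA) h1w with h | h | h | h
        · exfalso
          have hw : w = (x * a)⁻¹ := by rw [eq_inv_iff_mul_eq_one, hcomm w hwA (x * a) (A.mul_mem hxA haA)]; exact h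
          apply hr0 x⁻¹ (hSinv x hxS) (A.inv_mem hxA)
          rw [show a * x⁻¹ = (x * a⁻¹)⁻¹ from by group, hainv, ← hw]
          exact h2w
        · left
          have hw : w = (x * a)⁻¹ * a := by
            have h5 : w = (x * a)⁻¹ * ((x * a) * w) := by group
            rw [h] at h5; exact h5
          rw [hw, mul_inv_rev, hainv, mul_assoc, hcomm x⁻¹ (A.inv_mem hxA) a haA, ← mul_assoc, hsq, one_mul]
        · exfalso
          apply hyH
          rw [← h]
          exact H.mul_mem (H.mul_mem hxH haH) (keyA w h2w hwA)
        · exfalso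
          apply hyH
          have h5 : y = ((x * a) * w) * a⁻¹ := by rw [h]; group
          rw [h5]
          exact H.mul_mem (H.mul_mem (H.mul_mem hxH haH) (keyA w h2w hwA)) (H.inv_mem haH)
      · rw [r3 (x * a) (A.mul_mem hxA haA) c] at h1w
        have huA : a * ((x * a)⁻¹ * c) ∈ A :=
          A.mul_mem haA (A.mul_mem (A.inv_mem (A.mul_mem hxA haA)) hcA)
        have huH : a * ((x * a)⁻¹ * c) ∈ H := keyA _ h1w huA
        rcases Q1 c hcA h2w with h | h | h | h
        · right; rw [h, mul_one]
        · exfalso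
          apply hr0 x⁻¹ (hSinv x hxS) (A.inv_mem hxA)
          have h5 : a * ((x * a)⁻¹ * c) = x⁻¹ * a := by rw [h]; group
          rw [h5] at h1w
          rwa [hcomm x⁻¹ (A.inv_mem hxA) a haA] at h1w
        · exfalso
          apply hyH
          have h5 : y = (x * a) * (a⁻¹ * (a * ((x * a)⁻¹ * c))) := by rw [← h]; group
          rw [h5]
          exact H.mul_mem (H.mul_mem hxH haH) (H.mul_mem (H.inv_mem haH) huH)
        · exfalso
          apply hyH
          have h5 : y = ((x * a) * (a⁻¹ * (a * ((x * a)⁻¹ * c)))) * a⁻¹ := by rw [h]; group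
          rw [h5]
          exact H.mul_mem (H.mul_mem (H.mul_mem hxH haH) (H.mul_mem (H.inv_mem haH) huH)) (H.inv_mem haH)
    have hle2 : c2 ≤ 2 := by
      calc c2 = ({w | (t * x)⁻¹ * w ∈ S ∧ w ∈ S} : Set G).ncard := ec_tx.symm
      _ ≤ ({x⁻¹, t} : Set G).ncard := Set.ncard_le_ncard hsubtx (Set.toFinite _)
      _ ≤ 2 := by
          apply le_trans (Set.ncard_insert_le x⁻¹ {t})
          simp
    omega
  have hyinv : y⁻¹ = y * a := by
    have h6 : y * (y * a) = 1 := by rw [← mul_assoc, Q2, hsq]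
    exact inv_eq_of_mul_eq_one_right h6
  have hQ4 : S = ({t, t⁻¹, t * y, t * y⁻¹} : Set G) := by
    ext w
    simp only [Set.mem_insert_iff, Set.mem_singleton_iff]
    constructor
    · intro hw
      rcases hdec w with hwA | ⟨c, hcA, rfl⟩
      · exact (hSA w hw hwA).elim
      · rcases Q1 c hcA hw with h | h | h | h
        · left; rw [h, mul_one]
        · right; left; rw [h, ← htinv]
        · right; right; left; rw [h]
        · right; right; right; rw [h, ← hyinv]
    · rintro (rfl | rfl | rfl | rfl)
      · exact htS
      · exact htinvS
      · exact hyS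
      · rw [hyinv]; exact hSinv_t y hyA hyS
  have hy2 : y ^ 2 = a := by rw [pow_two]; exact Q2
  have hy2ne : y ^ 2 ≠ 1 := by rw [hy2]; exact ha1
  have hy4 : y ^ 4 = 1 := by
    rw [show (4 : ℕ) = 2 * 2 from rfl, pow_mul, hy2, pow_two, hsq]
  have hordy : orderOf y = 4 := by
    have h := orderOf_eq_prime_pow (x := y) (p := 2) (n := 1)
      (by rw [pow_one]; exact hy2ne) (by norm_num; exact hy4)
    norm_num at h
    exact h
  -- powers of y
  have hpowA : ∀ k : ℕ, y ^ k ∈ A := fun k => pow_mem hyA k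
  have hmod : ∀ k : ℕ, y ^ (k % 4) = y ^ k := by
    intro k
    conv_rhs => rw [← Nat.div_add_mod k 4]
    rw [pow_add, pow_mul, hy4, one_pow, one_mul]
  have hinvpow : ∀ i : ℕ, i ≤ 4 → (y ^ i)⁻¹ = y ^ (4 - i) := by
    intro i hi
    apply inv_eq_of_mul_eq_one_right
    rw [← pow_add, show i + (4 - i) = 4 from by omega, hy4]
  have hy3 : y ^ 3 = y⁻¹ := by
    rw [show (3 : ℕ) = 2 + 1 from rfl, pow_add, pow_one, hy2, hcomm a haA y hyA, ← hyinv]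
  have hStY : ∀ k : ℕ, t * y ^ k ∈ S := by
    intro k
    rw [← hmod k]
    have h4 : k % 4 < 4 := Nat.mod_lt _ (by norm_num)
    rw [hQ4]
    simp only [Set.mem_insert_iff, Set.mem_singleton_iff]
    rcases (by omega : k % 4 = 0 ∨ k % 4 = 1 ∨ k % 4 = 2 ∨ k % 4 = 3) with h | h | h | h <;> rw [h]
    · left; rw [pow_zero, mul_one]
    · right; right; left; rw [pow_one]
    · right; left; rw [hy2, ← htinv]
    · right; right; right; rw [hy3]
  have hSiff : ∀ g, g ∈ S → ∃ k : ℕ, g = t * y ^ k := by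
    intro g hg
    rw [hQ4] at hg
    simp only [Set.mem_insert_iff, Set.mem_singleton_iff] at hg
    rcases hg with rfl | rfl | rfl | rfl
    · exact ⟨0, by rw [pow_zero, mul_one]⟩
    · exact ⟨2, by rw [hy2, ← htinv]⟩
    · exact ⟨1, by rw [pow_one]⟩
    · exact ⟨3, by rw [hy3]⟩
  -- the bijection
  set f : (Fin 4) ⊕ (Fin 4) → G :=
    Sum.elim (fun i => y ^ (i : ℕ)) (fun i => t * y ^ (i : ℕ)) with hfdef
  have hpow_inj : ∀ i j : Fin 4, y ^ (i : ℕ) = y ^ (j : ℕ) → i = j := by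
    intro i j h
    have h2 := pow_eq_pow_iff_modEq.mp h
    rw [hordy] at h2
    have h3 : (i : ℕ) % 4 = (j : ℕ) % 4 := h2
    rw [Nat.mod_eq_of_lt i.isLt, Nat.mod_eq_of_lt j.isLt] at h3
    exact Fin.ext h3
  have htpow : ∀ i j : ℕ, y ^ i ≠ t * y ^ j := by
    intro i j h
    apply htA
    rw [show t = y ^ i * (y ^ j)⁻¹ from by rw [h]; group]
    exact A.mul_mem (hpowA i) (A.inv_mem (hpowA j))
  have hinj : Function.Injective f := by
    rintro (i | i) (j | j) h <;> simp only [hfdef, Sum.elim_inl, Sum.elim_inr] at h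
    · rw [hpow_inj i j h]
    · exact (htpow _ _ h).elim
    · exact (htpow _ _ h.symm).elim
    · rw [hpow_inj i j (mul_left_cancel h)]
  have hstep : ∀ u w : G, (∃ p, f p = u) → (cayleyGraph G S).Adj u w → ∃ q, f q = w := by
    rintro u w ⟨p, rfl⟩ hadj
    have hm := (adjS2 (f p) w).mp hadj
    obtain ⟨k, hk⟩ := hSiff _ hm
    have hw : w = f p * (t * y ^ k) := by rw [← hk]; group
    rcases p with i | i
    · refine ⟨Sum.inr ⟨((4 - (i : ℕ)) + k) % 4, Nat.mod_lt _ (by norm_num)⟩, ?_⟩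
      simp only [hfdef, Sum.elim_inl, Sum.elim_inr] at hw ⊢
      rw [hw, r4 (y ^ (i : ℕ)) (hpowA _) (y ^ k), hinvpow (i : ℕ) (le_of_lt i.isLt),
        ← pow_add]
      congr 1
      exact hmod _
    · refine ⟨Sum.inl ⟨(2 + ((4 - (i : ℕ)) + k)) % 4, Nat.mod_lt _ (by norm_num)⟩, ?_⟩
      simp only [hfdef, Sum.elim_inl, Sum.elim_inr] at hw ⊢
      rw [hw, r3 (y ^ (i : ℕ)) (hpowA _) (y ^ k), hinvpow (i : ℕ) (le_of_lt i.isLt),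
        ← pow_add, ← hy2, ← pow_add]
      exact hmod _
  have hsurj : Function.Surjective f := by
    have hwalk : ∀ (u v : G), (cayleyGraph G S).Walk u v → (∃ p, f p = u) → ∃ q, f q = v := by
      intro u v p
      induction p with
      | nil => exact id
      | cons h p ih => intro hu; exact ih (hstep _ _ hu h)
    intro g
    obtain ⟨p⟩ := hconn.preconnected 1 g
    exact hwalk 1 g p ⟨Sum.inl ⟨0, by norm_num⟩, by simp [hfdef]⟩
  have hAdjf : ∀ p q, (cayleyGraph G S).Adj (f p) (f q) ↔
      (completeBipartiteGraph (Fin 4) (Fin 4)).Adj p q := by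
    rintro (i | i) (j | j)
    · apply iff_of_false
      · intro hadj
        have hm := (adjS2 _ _).mp hadj
        simp only [hfdef, Sum.elim_inl] at hm
        exact hSA _ hm (A.mul_mem (A.inv_mem (hpowA _)) (hpowA _))
      · simp [completeBipartiteGraph]
    · apply iff_of_true
      · apply (adjS2 _ _).mpr
        simp only [hfdef, Sum.elim_inl, Sum.elim_inr]
        rw [show (y ^ (i : ℕ))⁻¹ * (t * y ^ (j : ℕ)) = t * (y ^ (i : ℕ) * y ^ (j : ℕ)) from by
          rw [r4 ((y ^ (i : ℕ))⁻¹) (A.inv_mem (hpowA _)) (y ^ (j : ℕ)), inv_inv], ← pow_add]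
        exact hStY _
      · simp [completeBipartiteGraph]
    · apply iff_of_true
      · apply (adjS2 _ _).mpr
        simp only [hfdef, Sum.elim_inl, Sum.elim_inr]
        have hA2 : (y ^ (i : ℕ) * a) * y ^ (j : ℕ) = y ^ ((i : ℕ) + 2 + (j : ℕ)) := by
          rw [← hy2, ← pow_add, ← pow_add]
        rw [show (t * y ^ (i : ℕ))⁻¹ * y ^ (j : ℕ) = t * y ^ ((i : ℕ) + 2 + (j : ℕ)) from by
          rw [r2 _ (hpowA _), mul_assoc, hA2]]
        exact hStY _
      · simp [completeBipartiteGraph]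
    · apply iff_of_false
      · intro hadj
        have hm := (adjS2 _ _).mp hadj
        simp only [hfdef, Sum.elim_inr] at hm
        rw [show (t * y ^ (i : ℕ))⁻¹ * (t * y ^ (j : ℕ))
            = a * ((y ^ (i : ℕ) * a)⁻¹ * y ^ (j : ℕ)) from by
          rw [r2 _ (hpowA _), r3 _ (A.mul_mem (hpowA _) haA)]] at hm
        exact hSA _ hm (A.mul_mem haA (A.mul_mem (A.inv_mem (A.mul_mem (hpowA _) haA)) (hpowA _)))
      · simp [completeBipartiteGraph]
  -- assemble
  refine ⟨?_, ?_, ⟨y, hyA, ?_, hordy, hQ4⟩, ?_⟩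
  · rw [← haDef]; exact hanS
  · exact Set.eq_empty_iff_forall_notMem.mpr (fun w hw => hSA w hw.1 hw.2)
  · rw [hy2, haDef]
  · have iso : completeBipartiteGraph (Fin 4) (Fin 4) ≃g cayleyGraph G S :=
      { toEquiv := Equiv.ofBijective f ⟨hinj, hsurj⟩, map_rel_iff' := @fun p q => hAdjf p q }
    exact ⟨iso.symm⟩
end

section
/- Let G be a generalized dicyclic group generated by A and t, and let S be an inverse-closed subset of G∖{1} with ⟨S⟩ = G, t ∈ S, and H = ⟨S∖{t,t⁻¹}⟩ ≠ G. If t² = a ∉ H, then the Cayley graph Cay(G,S) is not distance-regular. -/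
open SimpleGraph Pointwise

section Aux

variable {G : Type*} [Group G]

lemma aux_adj (S : Set G) (hS1 : (1:G) ∉ S) {s : G} (hs : s ∈ S) (g : G) :
    (cayleyGraph G S).Adj g (g * s) := by
  have hne : g ≠ g * s := by
    intro he
    have h1 : g * s = g * 1 := by rw [mul_one]; exact he.symm
    have hs1 : s = 1 := mul_left_cancel h1
    exact hS1 (hs1 ▸ hs)
  exact ⟨hne, Or.inr (by rw [inv_mul_cancel_left]; exact hs)⟩

lemma aux_walk_of_list (S : Set G) (hS1 : (1:G) ∉ S) :
    ∀ (l : List G) (g h : G), (∀ x ∈ l, x ∈ S) → g * l.prod = h →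
      ∃ w : (cayleyGraph G S).Walk g h, w.length = l.length := by
  intro l
  induction l with
  | nil =>
    intro g h _ hgh
    rw [List.prod_nil, mul_one] at hgh
    subst hgh
    exact ⟨SimpleGraph.Walk.nil, rfl⟩
  | cons x l ih =>
    intro g h hl hgh
    have hx : x ∈ S := hl x (by simp)
    obtain ⟨w, hw⟩ := ih (g * x) h (fun y hy => hl y (by simp [hy]))
      (by rw [List.prod_cons, ← mul_assoc] at hgh; exact hgh)
    exact ⟨SimpleGraph.Walk.cons (aux_adj S hS1 hx g) w, by simp [hw]⟩

lemma aux_dist_le (S : Set G) (hS1 : (1:G) ∉ S) (l : List G) (h : G)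
    (hl : ∀ x ∈ l, x ∈ S) (hprod : l.prod = h) :
    (cayleyGraph G S).dist 1 h ≤ l.length := by
  obtain ⟨w, hw⟩ := aux_walk_of_list S hS1 l 1 h hl (by rw [one_mul, hprod])
  exact hw ▸ SimpleGraph.dist_le w

lemma aux_reachable (S : Set G) (hS1 : (1:G) ∉ S) (l : List G) (h : G)
    (hl : ∀ x ∈ l, x ∈ S) (hprod : l.prod = h) :
    (cayleyGraph G S).Reachable 1 h := by
  obtain ⟨w, _⟩ := aux_walk_of_list S hS1 l 1 h hl (by rw [one_mul, hprod])
  exact ⟨w⟩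

lemma aux_list_of_walk (S : Set G) (hSinv : ∀ x ∈ S, x⁻¹ ∈ S) :
    ∀ {g h : G} (w : (cayleyGraph G S).Walk g h),
      ∃ l : List G, (∀ x ∈ l, x ∈ S) ∧ g * l.prod = h ∧ l.length = w.length := by
  intro g h w
  induction w with
  | nil => exact ⟨[], by simp, by simp, rfl⟩
  | @cons u v _ hadj w ih =>
    obtain ⟨l, hl, hprod, hlen⟩ := ih
    have hs : u⁻¹ * v ∈ S := by
      rcases hadj.2 with h1 | h1
      · have := hSinv _ h1
        rwa [mul_inv_rev, inv_inv] at this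
      · exact h1
    refine ⟨(u⁻¹ * v) :: l, ?_, ?_, by simp [hlen]⟩
    · intro x hx
      rcases List.mem_cons.mp hx with rfl | hx
      · exact hs
      · exact hl x hx
    · rw [List.prod_cons, ← mul_assoc, mul_inv_cancel_left, hprod]

lemma aux_nbr (S : Set G) (hSinv : ∀ x ∈ S, x⁻¹ ∈ S) {v w : G}
    (hadj : (cayleyGraph G S).Adj v w) : ∃ s ∈ S, w = v * s := by
  have hs : v⁻¹ * w ∈ S := by
    rcases hadj.2 with h1 | h1
    · have := hSinv _ h1
      rwa [mul_inv_rev, inv_inv] at this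
    · exact h1
  exact ⟨v⁻¹ * w, hs, by rw [mul_inv_cancel_left]⟩

lemma aux_t_conj (t : G) (A : Set G) (hc : ∀ x ∈ A, t * x = x⁻¹ * t) :
    ∀ (l : List G), (∀ x ∈ l, x ∈ A) → t * l.prod = (l.map (·⁻¹)).prod * t := by
  intro l
  induction l with
  | nil => simp
  | cons x l ih =>
    intro hl
    have hx := hl x (by simp)
    rw [List.prod_cons, ← mul_assoc, hc x hx, mul_assoc, ih (fun y hy => hl y (by simp [hy])),
      List.map_cons, List.prod_cons, mul_assoc]

lemma aux_rewrite (S : Set G) (t : G) (A : Subgroup G)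
    (hSinv : ∀ x ∈ S, x⁻¹ ∈ S)
    (hS0A : ∀ s ∈ S, s ≠ t → s ≠ t⁻¹ → s ∈ A)
    (hc : ∀ x ∈ (A : Set G), t * x = x⁻¹ * t)
    (hc' : ∀ x ∈ (A : Set G), t⁻¹ * x = x⁻¹ * t⁻¹) :
    ∀ l : List G, (∀ x ∈ l, x ∈ S) →
      ∃ (l₀ : List G) (c : ℤ), (∀ x ∈ l₀, x ∈ S ∧ x ≠ t ∧ x ≠ t⁻¹) ∧
        l.prod = l₀.prod * t ^ c ∧ l₀.length + c.natAbs ≤ l.length := by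
  intro l
  induction l with
  | nil => exact fun _ => ⟨[], 0, by simp, by simp, by simp⟩
  | cons x l ih =>
    intro hl
    obtain ⟨l₀, c, hl₀, hprod, hlen⟩ := ih (fun y hy => hl y (by simp [hy]))
    have hxS : x ∈ S := hl x (by simp)
    have hmap : ∀ y ∈ l₀.map (·⁻¹), y ∈ S ∧ y ≠ t ∧ y ≠ t⁻¹ := by
      intro y hy
      obtain ⟨z, hz, rfl⟩ := List.mem_map.mp hy
      obtain ⟨hz1, hz2, hz3⟩ := hl₀ z hz
      refine ⟨hSinv z hz1, fun he => hz3 ?_, fun he => hz2 ?_⟩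
      · rw [← inv_inv z, he]
      · rw [← inv_inv z, he, inv_inv]
    have hl₀A : ∀ y ∈ l₀, y ∈ (A : Set G) := fun y hy =>
      hS0A y (hl₀ y hy).1 (hl₀ y hy).2.1 (hl₀ y hy).2.2
    by_cases hx1 : x = t
    · subst hx1
      refine ⟨l₀.map (·⁻¹), 1 + c, hmap, ?_, ?_⟩
      · rw [List.prod_cons, hprod, ← mul_assoc, aux_t_conj x (A : Set G) hc l₀ hl₀A,
          mul_assoc, ← zpow_one_add]
      · rw [List.length_map, List.length_cons]
        have := Int.natAbs_add_le 1 c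
        simp only [Int.natAbs_one] at this
        omega
    · by_cases hx2 : x = t⁻¹
      · subst hx2
        refine ⟨l₀.map (·⁻¹), -1 + c, hmap, ?_, ?_⟩
        · rw [List.prod_cons, hprod, ← mul_assoc,
            aux_t_conj t⁻¹ (A : Set G) hc' l₀ hl₀A, mul_assoc]
          rw [show (t⁻¹ : G) = t ^ (-1 : ℤ) by simp, ← zpow_add]
        · rw [List.length_map, List.length_cons]
          have := Int.natAbs_add_le (-1) c
          simp only [Int.natAbs_neg, Int.natAbs_one] at this
          omega
      · refine ⟨x :: l₀, c, ?_, ?_, ?_⟩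
        · intro y hy
          rcases List.mem_cons.mp hy with rfl | hy
          · exact ⟨hxS, hx1, hx2⟩
          · exact hl₀ y hy
        · rw [List.prod_cons, List.prod_cons, hprod, mul_assoc]
        · simp only [List.length_cons]; omega

end Aux

/-- Case B: if `t² = a ∉ H`, then the Cayley graph is not distance-regular. -/
theorem caseB
    {G : Type*} [Group G] (A : Subgroup G) (t : G) (hG : IsGenDicyclic A t)
    (S : Set G) (hS1 : (1 : G) ∉ S) (hSinv : ∀ x ∈ S, x⁻¹ ∈ S)
    (hSgen : Subgroup.closure S = ⊤) (htS : t ∈ S)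
    (H : Subgroup G) (hHdef : H = Subgroup.closure (S \ {t, t⁻¹})) (hH : H ≠ ⊤)
    (haH : t ^ 2 ∉ H) :
    ¬ (cayleyGraph G S).IsDistRegular := by
  intro hDRG
  obtain ⟨hconn, hpar⟩ := hDRG
  -- basic facts about t and A
  have tnA : t ∉ A := by
    intro htA
    have h1 := hG.conj t htA
    have h2 : t ^ 2 = 1 := by
      have : t = t⁻¹ := by calc t = t⁻¹ * t * t := by group
                                _ = t⁻¹ := h1
      rw [pow_two]; nth_rewrite 2 [this]; simp
    have h3 := hG.t_sq_order
    rw [h2, orderOf_one] at h3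
    omega
  have conj' : ∀ x ∈ A, t * x * t⁻¹ = x⁻¹ := by
    intro x hx
    have h1 : t⁻¹ * x⁻¹ * t = x := by rw [hG.conj x⁻¹ (A.inv_mem hx), inv_inv]
    calc t * x * t⁻¹ = t * (t⁻¹ * x⁻¹ * t) * t⁻¹ := by rw [h1]
      _ = x⁻¹ := by group
  have tx : ∀ x ∈ (A : Set G), t * x = x⁻¹ * t := by
    intro x hx
    calc t * x = (t * x * t⁻¹) * t := by group
      _ = x⁻¹ * t := by rw [conj' x hx]
  have t'x : ∀ x ∈ (A : Set G), t⁻¹ * x = x⁻¹ * t⁻¹ := by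
    intro x hx
    calc t⁻¹ * x = (t⁻¹ * x * t) * t⁻¹ := by group
      _ = x⁻¹ * t⁻¹ := by rw [hG.conj x hx]
  have xt : ∀ x ∈ A, x * t = t * x⁻¹ := by
    intro x hx
    calc x * t = t * (t⁻¹ * x * t) := by group
      _ = t * x⁻¹ := by rw [hG.conj x hx]
  -- G = A ∪ At
  have hB : ∀ g : G, g ∈ A ∨ g * t⁻¹ ∈ A := by
    let B : Subgroup G :=
      { carrier := {g | g ∈ A ∨ g * t⁻¹ ∈ A}
        one_mem' := Or.inl A.one_mem
        mul_mem' := by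
          rintro x y (hx | hx) (hy | hy)
          · exact Or.inl (A.mul_mem hx hy)
          · refine Or.inr ?_
            have h1 : x * y * t⁻¹ = x * (y * t⁻¹) := by group
            rw [h1]; exact A.mul_mem hx hy
          · refine Or.inr ?_
            have h1 : x * y * t⁻¹ = (x * t⁻¹) * (t * y * t⁻¹) := by group
            rw [h1, conj' y hy]; exact A.mul_mem hx (A.inv_mem hy)
          · refine Or.inl ?_
            have h1 : x * y = (x * t⁻¹) * (t * (y * t⁻¹) * t⁻¹) * t ^ 2 := by group
            rw [h1, conj' _ hy]
            exact A.mul_mem (A.mul_mem hx (A.inv_mem hy)) hG.t_sq_mem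
        inv_mem' := by
          rintro x (hx | hx)
          · exact Or.inl (A.inv_mem hx)
          · refine Or.inr ?_
            have h1 : x⁻¹ * t⁻¹ = (t⁻¹ * (x * t⁻¹)⁻¹ * t) * (t ^ 2)⁻¹ := by group
            rw [h1, hG.conj _ (A.inv_mem hx), inv_inv]
            exact A.mul_mem hx (A.inv_mem hG.t_sq_mem) }
    have hle : Subgroup.closure ((A : Set G) ∪ {t}) ≤ B := by
      rw [Subgroup.closure_le]
      rintro x (hx | hx)
      · exact Or.inl hx
      · rw [Set.mem_singleton_iff] at hx
        subst hx
        exact Or.inr (by simp [A.one_mem])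
    intro g
    exact hle (hG.gen ▸ Subgroup.mem_top g)
  -- G is finite
  have hAfin : Finite (A : Subgroup G) := by
    obtain ⟨n, hn, hcard⟩ := hG.card
    have h0 : Nat.card A ≠ 0 := by omega
    exact (Nat.card_ne_zero.mp h0).2
  haveI hGfin : Finite G := by
    have hsurj : Function.Surjective
        (fun p : A × Bool => if p.2 then (p.1 : G) * t else (p.1 : G)) := by
      intro g
      rcases hB g with hg | hg
      · exact ⟨(⟨g, hg⟩, false), rfl⟩
      · exact ⟨(⟨g * t⁻¹, hg⟩, true), by simp⟩
    exact Finite.of_surjective _ hsurj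
  -- squares outside A
  have hsq : ∀ g : G, g ∉ A → g * g = t ^ 2 := by
    intro g hg
    rcases hB g with h | h
    · exact absurd h hg
    · have h1 : g * g = (g * t⁻¹) * (t * (g * t⁻¹) * t⁻¹) * t ^ 2 := by group
      rw [h1, conj' _ h]
      group
  -- the connection set away from t
  have hS0H : ∀ s, s ∈ S → s ≠ t → s ≠ t⁻¹ → s ∈ H := by
    intro s hs h1 h2
    rw [hHdef]
    refine Subgroup.subset_closure ⟨hs, ?_⟩
    simp only [Set.mem_insert_iff, Set.mem_singleton_iff]
    push_neg
    exact ⟨h1, h2⟩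
  have hS0A : ∀ s, s ∈ S → s ≠ t → s ≠ t⁻¹ → s ∈ A := by
    intro s hs h1 h2
    by_contra hsA
    refine haH ?_
    have h3 : s * s = t ^ 2 := hsq s hsA
    have h4 : s * s ∈ H := H.mul_mem (hS0H s hs h1 h2) (hS0H s hs h1 h2)
    rwa [h3] at h4
  have hHA : ∀ x ∈ H, x ∈ A := by
    intro x hx
    rw [hHdef] at hx
    refine (Subgroup.closure_le A).mpr ?_ hx
    rintro s ⟨hs1, hs2⟩
    simp only [Set.mem_insert_iff, Set.mem_singleton_iff] at hs2
    push_neg at hs2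
    exact hS0A s hs1 hs2.1 hs2.2
  -- powers of t
  have ht4 : t ^ (4 : ℕ) = 1 := by
    have h := pow_orderOf_eq_one (t ^ 2)
    rw [hG.t_sq_order, ← pow_mul] at h
    exact h
  have tz : ∀ c : ℤ, t ^ c = t ^ (c % 4) := by
    intro c
    conv_lhs => rw [show c = 4 * (c / 4) + c % 4 by omega]
    rw [zpow_add, zpow_mul, show (4 : ℤ) = ((4 : ℕ) : ℤ) from rfl, zpow_natCast, ht4,
      one_zpow, one_mul]
  have t3nA : t ^ 2 * t ∉ A := by
    intro h
    refine tnA ?_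
    have h2 : (t ^ 2)⁻¹ * (t ^ 2 * t) ∈ A := A.mul_mem (A.inv_mem hG.t_sq_mem) h
    rwa [inv_mul_cancel_left] at h2
  have tcH : ∀ c : ℤ, t ^ c ∈ H → c % 4 = 0 ∧ t ^ c = 1 := by
    intro c hc
    have h04 : c % 4 = 0 ∨ c % 4 = 1 ∨ c % 4 = 2 ∨ c % 4 = 3 := by omega
    rcases h04 with h | h | h | h
    · refine ⟨h, ?_⟩
      rw [tz c, h, zpow_zero]
    · exfalso
      rw [tz c, h, zpow_one] at hc
      exact tnA (hHA _ hc)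
    · exfalso
      rw [tz c, h, show (2 : ℤ) = ((2 : ℕ) : ℤ) from rfl, zpow_natCast] at hc
      exact haH hc
    · exfalso
      rw [tz c, h, show (3 : ℤ) = ((3 : ℕ) : ℤ) from rfl, zpow_natCast, pow_succ] at hc
      exact t3nA (hHA _ hc)
  -- products of lists from S₀ lie in H
  have hprodH : ∀ l₀ : List G, (∀ x ∈ l₀, x ∈ S ∧ x ≠ t ∧ x ≠ t⁻¹) → l₀.prod ∈ H := by
    intro l₀ h
    exact H.list_prod_mem fun x hx => hS0H x (h x hx).1 (h x hx).2.1 (h x hx).2.2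
  -- every element of H is a word in S₀
  have hword : ∀ h ∈ H, ∃ l : List G, (∀ x ∈ l, x ∈ S ∧ x ≠ t ∧ x ≠ t⁻¹) ∧ l.prod = h := by
    intro h hh
    rw [hHdef] at hh
    have hh' : h ∈ Submonoid.closure ((S \ {t, t⁻¹}) ∪ (S \ {t, t⁻¹})⁻¹) := by
      rw [← Subgroup.closure_toSubmonoid]
      exact hh
    obtain ⟨l, hl, hprod⟩ := Submonoid.exists_list_of_mem_closure hh'
    refine ⟨l, ?_, hprod⟩
    intro x hx
    rcases hl x hx with hx1 | hx1
    · obtain ⟨h1, h2⟩ := hx1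
      simp only [Set.mem_insert_iff, Set.mem_singleton_iff] at h2
      push_neg at h2
      exact ⟨h1, h2.1, h2.2⟩
    · rw [Set.mem_inv] at hx1
      obtain ⟨h1, h2⟩ := hx1
      simp only [Set.mem_insert_iff, Set.mem_singleton_iff] at h2
      push_neg at h2
      refine ⟨by simpa using hSinv _ h1, ?_, ?_⟩
      · intro he; exact h2.2 (by rw [he])
      · intro he; refine h2.1 ?_
        rw [he, inv_inv]
  -- optimal words for elements of H
  have key0 : ∀ h ∈ H, ∃ l₀ : List G, (∀ x ∈ l₀, x ∈ S ∧ x ≠ t ∧ x ≠ t⁻¹) ∧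
      l₀.prod = h ∧ l₀.length = (cayleyGraph G S).dist 1 h := by
    intro h hh
    obtain ⟨lw, hlw, hlwp⟩ := hword h hh
    have hreach : (cayleyGraph G S).Reachable 1 h :=
      aux_reachable S hS1 lw h (fun x hx => (hlw x hx).1) hlwp
    obtain ⟨w, hwlen⟩ := hreach.exists_walk_length_eq_dist
    obtain ⟨l, hl, hlp, hllen⟩ := aux_list_of_walk S hSinv w
    rw [one_mul] at hlp
    obtain ⟨l₀, c, hl₀, hprod, hlen⟩ := aux_rewrite S t A hSinv hS0A tx t'x l hl
    have htc : t ^ c ∈ H := by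
      have h1 : t ^ c = (l₀.prod)⁻¹ * h := by
        rw [← hlp, hprod]; group
      rw [h1]
      exact H.mul_mem (H.inv_mem (hprodH l₀ hl₀)) hh
    obtain ⟨hc0, hc1⟩ := tcH c htc
    have hp : l₀.prod = h := by
      rw [← hlp, hprod, hc1, mul_one]
    have h1 : (cayleyGraph G S).dist 1 h ≤ l₀.length :=
      aux_dist_le S hS1 l₀ h (fun x hx => (hl₀ x hx).1) hp
    have h2 : l₀.length ≤ (cayleyGraph G S).dist 1 h := by
      rw [← hwlen, ← hllen]; omega
    exact ⟨l₀, hl₀, hp, le_antisymm h2 h1⟩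
  -- distance is inversion invariant on H
  have dinv : ∀ h ∈ H, (cayleyGraph G S).dist 1 h⁻¹ = (cayleyGraph G S).dist 1 h := by
    have aux : ∀ h ∈ H, (cayleyGraph G S).dist 1 h⁻¹ ≤ (cayleyGraph G S).dist 1 h := by
      intro h hh
      obtain ⟨l₀, hl₀, hp, hlen⟩ := key0 h hh
      have hpr : ((l₀.map (·⁻¹)).reverse).prod = h⁻¹ := by
        rw [← List.prod_inv_reverse, hp]
      refine le_trans (aux_dist_le S hS1 _ _ ?_ hpr) ?_
      · intro x hx
        rw [List.mem_reverse] at hx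
        obtain ⟨z, hz, rfl⟩ := List.mem_map.mp hx
        exact hSinv z (hl₀ z hz).1
      · simp [hlen]
    intro h hh
    refine le_antisymm (aux h hh) ?_
    have h2 := aux h⁻¹ (H.inv_mem hh)
    rwa [inv_inv] at h2
  -- step bound
  have dmul : ∀ h ∈ H, ∀ s ∈ S, (cayleyGraph G S).dist 1 (h * s) ≤ (cayleyGraph G S).dist 1 h + 1 := by
    intro h hh s hs
    obtain ⟨l₀, hl₀, hp, hlen⟩ := key0 h hh
    refine le_trans (aux_dist_le S hS1 (l₀ ++ [s]) (h * s) ?_ ?_) ?_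
    · intro y hy
      rcases List.mem_append.mp hy with hy | hy
      · exact (hl₀ y hy).1
      · rw [List.mem_singleton] at hy
        exact hy ▸ hs
    · rw [List.prod_append, List.prod_singleton, hp]
    · simp [hlen]
  -- generators are at distance 1
  have dS : ∀ s ∈ S, (cayleyGraph G S).dist 1 s = 1 := by
    intro s hs
    have h1 : (cayleyGraph G S).dist 1 s ≤ 1 := by
      have := aux_dist_le S hS1 [s] s (by simpa using hs) (by simp)
      simpa using this
    have hreach : (cayleyGraph G S).Reachable 1 s := aux_reachable S hS1 [s] s (by simpa using hs) (by simp)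
    have h0 : (cayleyGraph G S).dist 1 s ≠ 0 := by
      intro h0
      rcases SimpleGraph.dist_eq_zero_iff_eq_or_not_reachable.mp h0 with h | h
      · exact hS1 (h ▸ hs)
      · exact h hreach
    omega
  -- distance zero on H
  have dzero : ∀ h ∈ H, (cayleyGraph G S).dist 1 h = 0 → h = 1 := by
    intro h hh h0
    obtain ⟨l₀, hl₀, hp, hlen⟩ := key0 h hh
    rw [h0, List.length_eq_zero_iff] at hlen
    rw [hlen, List.prod_nil] at hp
    exact hp.symm
  -- distance to the coset tH
  have key1 : ∀ h ∈ H, (cayleyGraph G S).dist 1 (t * h) = (cayleyGraph G S).dist 1 h + 1 := by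
    intro h hh
    obtain ⟨l₀, hl₀, hp, hlen⟩ := key0 h hh
    have hmem : ∀ x ∈ t :: l₀, x ∈ S := by
      intro x hx
      rcases List.mem_cons.mp hx with rfl | hx
      · exact htS
      · exact (hl₀ x hx).1
    have hpr : (t :: l₀).prod = t * h := by rw [List.prod_cons, hp]
    have hub : (cayleyGraph G S).dist 1 (t * h) ≤ (cayleyGraph G S).dist 1 h + 1 := by
      have := aux_dist_le S hS1 (t :: l₀) (t * h) hmem hpr
      simpa [hlen] using this
    have hreach : (cayleyGraph G S).Reachable 1 (t * h) := aux_reachable S hS1 (t :: l₀) (t * h) hmem hpr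
    obtain ⟨w, hwlen⟩ := hreach.exists_walk_length_eq_dist
    obtain ⟨l, hl, hlp, hllen⟩ := aux_list_of_walk S hSinv w
    rw [one_mul] at hlp
    obtain ⟨l₀', c, hl₀', hprod, hlen'⟩ := aux_rewrite S t A hSinv hS0A tx t'x l hl
    have hPH : l₀'.prod ∈ H := hprodH l₀' hl₀'
    have h2 : l₀'.prod * t ^ c = t * h := by rw [← hprod, hlp]
    have htc : t ^ (c - 1) ∈ H := by
      have h3 : t ^ (c - 1) = (l₀'.prod)⁻¹ * (t * h * t⁻¹) := by
        rw [zpow_sub, zpow_one, ← h2]; group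
      rw [h3, conj' h (hHA h hh)]
      exact H.mul_mem (H.inv_mem hPH) (H.inv_mem hh)
    obtain ⟨hc0, hc1⟩ := tcH _ htc
    have htc1 : t ^ c = t := by
      have h4 : t ^ c = t ^ (c - 1) * t := by
        rw [← zpow_add_one]; norm_num
      rw [h4, hc1, one_mul]
    have hP : l₀'.prod = h⁻¹ := by
      rw [htc1] at h2
      have h4 : l₀'.prod = t * h * t⁻¹ := by rw [← h2]; group
      rw [h4, conj' h (hHA h hh)]
    have hlow : (cayleyGraph G S).dist 1 h + 1 ≤ (cayleyGraph G S).dist 1 (t * h) := by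
      have d1 : (cayleyGraph G S).dist 1 h⁻¹ ≤ l₀'.length :=
        aux_dist_le S hS1 l₀' h⁻¹ (fun x hx => (hl₀' x hx).1) hP
      have d2 := dinv h hh
      have d3 : 1 ≤ c.natAbs := by omega
      omega
    omega
  -- distance to the coset t⁻¹H
  have key1' : ∀ h ∈ H, (cayleyGraph G S).dist 1 (t⁻¹ * h) = (cayleyGraph G S).dist 1 h + 1 := by
    intro h hh
    obtain ⟨l₀, hl₀, hp, hlen⟩ := key0 h hh
    have hmem : ∀ x ∈ t⁻¹ :: l₀, x ∈ S := by
      intro x hx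
      rcases List.mem_cons.mp hx with rfl | hx
      · exact hSinv t htS
      · exact (hl₀ x hx).1
    have hpr : (t⁻¹ :: l₀).prod = t⁻¹ * h := by rw [List.prod_cons, hp]
    have hub : (cayleyGraph G S).dist 1 (t⁻¹ * h) ≤ (cayleyGraph G S).dist 1 h + 1 := by
      have := aux_dist_le S hS1 (t⁻¹ :: l₀) (t⁻¹ * h) hmem hpr
      simpa [hlen] using this
    have hreach : (cayleyGraph G S).Reachable 1 (t⁻¹ * h) := aux_reachable S hS1 (t⁻¹ :: l₀) (t⁻¹ * h) hmem hpr
    obtain ⟨w, hwlen⟩ := hreach.exists_walk_length_eq_dist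
    obtain ⟨l, hl, hlp, hllen⟩ := aux_list_of_walk S hSinv w
    rw [one_mul] at hlp
    obtain ⟨l₀', c, hl₀', hprod, hlen'⟩ := aux_rewrite S t A hSinv hS0A tx t'x l hl
    have hPH : l₀'.prod ∈ H := hprodH l₀' hl₀'
    have h2 : l₀'.prod * t ^ c = t⁻¹ * h := by rw [← hprod, hlp]
    have htc : t ^ (c + 1) ∈ H := by
      have h3 : t ^ (c + 1) = (l₀'.prod)⁻¹ * (t⁻¹ * h * t) := by
        rw [zpow_add_one, ← h2]; group
      rw [h3, hG.conj h (hHA h hh)]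
      exact H.mul_mem (H.inv_mem hPH) (H.inv_mem hh)
    obtain ⟨hc0, hc1⟩ := tcH _ htc
    have htc1 : t ^ c = t⁻¹ := by
      have h4 : t ^ c = t ^ (c + 1) * t⁻¹ := by
        rw [zpow_add_one]; group
      rw [h4, hc1, one_mul]
    have hP : l₀'.prod = h⁻¹ := by
      rw [htc1] at h2
      have h4 : l₀'.prod = t⁻¹ * h * t := by rw [← h2]; group
      rw [h4, hG.conj h (hHA h hh)]
    have hlow : (cayleyGraph G S).dist 1 h + 1 ≤ (cayleyGraph G S).dist 1 (t⁻¹ * h) := by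
      have d1 : (cayleyGraph G S).dist 1 h⁻¹ ≤ l₀'.length :=
        aux_dist_le S hS1 l₀' h⁻¹ (fun x hx => (hl₀' x hx).1) hP
      have d2 := dinv h hh
      have d3 : 1 ≤ c.natAbs := by omega
      omega
    omega
  -- distance to the coset t²H
  have key2 : ∀ h ∈ H, (cayleyGraph G S).dist 1 (t ^ 2 * h) = (cayleyGraph G S).dist 1 h + 2 := by
    intro h hh
    obtain ⟨l₀, hl₀, hp, hlen⟩ := key0 h hh
    have hmem : ∀ x ∈ t :: t :: l₀, x ∈ S := by
      intro x hx
      rcases List.mem_cons.mp hx with rfl | hx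
      · exact htS
      rcases List.mem_cons.mp hx with rfl | hx
      · exact htS
      · exact (hl₀ x hx).1
    have hpr : (t :: t :: l₀).prod = t ^ 2 * h := by
      rw [List.prod_cons, List.prod_cons, hp, ← mul_assoc, ← pow_two]
    have hub : (cayleyGraph G S).dist 1 (t ^ 2 * h) ≤ (cayleyGraph G S).dist 1 h + 2 := by
      have := aux_dist_le S hS1 (t :: t :: l₀) (t ^ 2 * h) hmem hpr
      simp only [List.length_cons, hlen] at this
      omega
    have hreach : (cayleyGraph G S).Reachable 1 (t ^ 2 * h) := aux_reachable S hS1 _ _ hmem hpr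
    obtain ⟨w, hwlen⟩ := hreach.exists_walk_length_eq_dist
    obtain ⟨l, hl, hlp, hllen⟩ := aux_list_of_walk S hSinv w
    rw [one_mul] at hlp
    obtain ⟨l₀', c, hl₀', hprod, hlen'⟩ := aux_rewrite S t A hSinv hS0A tx t'x l hl
    have hPH : l₀'.prod ∈ H := hprodH l₀' hl₀'
    have h2 : l₀'.prod * t ^ c = t ^ 2 * h := by rw [← hprod, hlp]
    have hcomm : t ^ 2 * h * (t ^ 2)⁻¹ = h := by
      rw [hG.comm (t ^ 2) hG.t_sq_mem h (hHA h hh)]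
      group
    have htc : t ^ (c - 2) ∈ H := by
      have h3 : t ^ (c - 2) = (l₀'.prod)⁻¹ * (t ^ 2 * h * (t ^ 2)⁻¹) := by
        rw [zpow_sub, ← h2, show (2:ℤ) = ((2:ℕ):ℤ) from rfl, zpow_natCast]
        group
      rw [h3, hcomm]
      exact H.mul_mem (H.inv_mem hPH) hh
    obtain ⟨hc0, hc1⟩ := tcH _ htc
    have htc1 : t ^ c = t ^ 2 := by
      have h4 : t ^ c = t ^ (c - 2) * t ^ (2:ℤ) := by
        rw [← zpow_add]; norm_num
      rw [h4, hc1, one_mul, show (2:ℤ) = ((2:ℕ):ℤ) from rfl, zpow_natCast]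
    have hP : l₀'.prod = h := by
      rw [htc1] at h2
      have h4 : l₀'.prod = t ^ 2 * h * (t ^ 2)⁻¹ := by rw [← h2]; group
      rw [h4, hcomm]
    have hlow : (cayleyGraph G S).dist 1 h + 2 ≤ (cayleyGraph G S).dist 1 (t ^ 2 * h) := by
      have d1 : (cayleyGraph G S).dist 1 h ≤ l₀'.length :=
        aux_dist_le S hS1 l₀' h (fun x hx => (hl₀' x hx).1) hP
      have d3 : 2 ≤ c.natAbs := by omega
      omega
    omega
  -- no "horizontal" edges inside H at any positive level
  have main : ∀ i : ℕ, ∀ h ∈ H, ∀ s : G, s ∈ S → s ≠ t → s ≠ t⁻¹ →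
      1 ≤ i → (cayleyGraph G S).dist 1 h = i → (cayleyGraph G S).dist 1 (h * s) = i → False := by
    intro i
    induction i using Nat.strong_induction_on with
    | _ i ih =>
    intro h hhH s hsS hst hst' hi1 hdh hdhs
    obtain ⟨cc, aa, bb, hcab⟩ := hpar i
    have hsH : s ∈ H := hS0H s hsS hst hst'
    -- the vertex h*s witnesses aa ≥ 1
    have hmem : h * s ∈ (cayleyGraph G S).neighborSet h ∩ {w | (cayleyGraph G S).dist 1 w = i} :=
      ⟨aux_adj S hS1 hsS h, hdhs⟩
    have ha1 : 1 ≤ aa := by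
      have hcount := (hcab 1 h hdh).2.1
      have hpos : 0 < ((cayleyGraph G S).neighborSet h ∩
          {w | (cayleyGraph G S).dist 1 w = i}).ncard := by
        rw [Set.ncard_pos (Set.toFinite _)]
        exact ⟨h * s, hmem⟩
      omega
    rcases Nat.eq_or_lt_of_le hi1 with hi | hi2
    · -- i = 1 : the vertex t has no neighbours at distance 1
      have hdt : (cayleyGraph G S).dist 1 t = 1 := dS t htS
      have hcount := (hcab 1 t (by rw [hdt, hi])).2.1
      have hempty : (cayleyGraph G S).neighborSet t ∩
          {w | (cayleyGraph G S).dist 1 w = i} = ∅ := by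
        rw [Set.eq_empty_iff_forall_notMem]
        rintro w ⟨hw1, hw2⟩
        rw [SimpleGraph.mem_neighborSet] at hw1
        obtain ⟨s', hs', rfl⟩ := aux_nbr S hSinv hw1
        rw [Set.mem_setOf_eq] at hw2
        by_cases h1 : s' = t
        · rw [h1] at hw2
          have hd2 : (cayleyGraph G S).dist 1 (t * t) = 2 := by
            have he : t * t = t ^ 2 * 1 := by rw [mul_one, pow_two]
            rw [he, key2 1 H.one_mem, SimpleGraph.dist_self]
          omega
        · by_cases h2 : s' = t⁻¹
          · rw [h2, mul_inv_cancel, SimpleGraph.dist_self] at hw2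
            omega
          · have hs'H : s' ∈ H := hS0H s' hs' h1 h2
            rw [key1 s' hs'H, dS s' hs'] at hw2
            omega
      rw [hempty, Set.ncard_empty] at hcount
      omega
    · -- 2 ≤ i : descend to level i - 1
      obtain ⟨l₀, hl₀, hp, hlen⟩ := key0 h hhH
      have hne : l₀ ≠ [] := by
        intro he
        rw [he] at hlen
        simp only [List.length_nil] at hlen
        omega
      obtain ⟨l', x, hcat⟩ := (List.eq_nil_or_concat l₀).resolve_left hne
      rw [List.concat_eq_append] at hcat
      subst hcat
      have hx := hl₀ x (by simp)
      have hl' : ∀ y ∈ l', y ∈ S ∧ y ≠ t ∧ y ≠ t⁻¹ := fun y hy => hl₀ y (by simp [hy])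
      have hh₂H : l'.prod ∈ H := hprodH l' hl'
      have hph : l'.prod * x = h := by
        rw [← hp, List.prod_append, List.prod_singleton]
      have hlen' : l'.length + 1 = i := by
        rw [← hdh, ← hlen]
        simp
      have hd2a : (cayleyGraph G S).dist 1 l'.prod ≤ l'.length :=
        aux_dist_le S hS1 l' l'.prod (fun y hy => (hl' y hy).1) rfl
      have hd2b : (cayleyGraph G S).dist 1 h ≤ (cayleyGraph G S).dist 1 l'.prod + 1 := by
        rw [← hph]
        exact dmul l'.prod hh₂H x hx.1
      have hd2 : (cayleyGraph G S).dist 1 l'.prod = l'.length := by omega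
      have hdth₂ : (cayleyGraph G S).dist 1 (t * l'.prod) = i := by
        rw [key1 l'.prod hh₂H, hd2]
        omega
      have hcount := (hcab 1 (t * l'.prod) hdth₂).2.1
      have hnon : ((cayleyGraph G S).neighborSet (t * l'.prod) ∩
          {w | (cayleyGraph G S).dist 1 w = i}).Nonempty := by
        rw [← Set.ncard_pos (Set.toFinite _)]
        omega
      obtain ⟨w, hw1, hw2⟩ := hnon
      rw [SimpleGraph.mem_neighborSet] at hw1
      obtain ⟨s', hs', rfl⟩ := aux_nbr S hSinv hw1
      rw [Set.mem_setOf_eq] at hw2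
      by_cases h1 : s' = t
      · rw [h1] at hw2
        have he : t * l'.prod * t = t ^ 2 * (l'.prod)⁻¹ := by
          rw [mul_assoc, xt l'.prod (hHA _ hh₂H), ← mul_assoc, ← pow_two]
        rw [he, key2 _ (H.inv_mem hh₂H), dinv _ hh₂H, hd2] at hw2
        omega
      · by_cases h2 : s' = t⁻¹
        · rw [h2] at hw2
          have he : t * l'.prod * t⁻¹ = (l'.prod)⁻¹ := conj' l'.prod (hHA _ hh₂H)
          rw [he, dinv _ hh₂H, hd2] at hw2
          omega
        · have hs'H : s' ∈ H := hS0H s' hs' h1 h2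
          have he : t * l'.prod * s' = t * (l'.prod * s') := by group
          rw [he, key1 _ (H.mul_mem hh₂H hs'H)] at hw2
          exact ih l'.length (by omega) l'.prod hh₂H s' hs' h1 h2 (by omega) hd2 (by omega)
  -- S contains an element besides t, t⁻¹
  have hexS0 : ∃ s : G, s ∈ S ∧ s ≠ t ∧ s ≠ t⁻¹ := by
    by_contra hno
    push_neg at hno
    have hsub : ∀ s ∈ S, s ∈ Subgroup.zpowers t := by
      intro s hs
      by_cases h1 : s = t
      · rw [h1]; exact Subgroup.mem_zpowers t
      · rw [hno s hs h1]
        exact (Subgroup.zpowers t).inv_mem (Subgroup.mem_zpowers t)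
    have hle : Subgroup.closure S ≤ Subgroup.zpowers t := (Subgroup.closure_le _).mpr hsub
    obtain ⟨n, hn1, hcard⟩ := hG.card
    have hex : ∃ x ∈ A, x ≠ 1 ∧ x ≠ t ^ 2 := by
      by_contra hxa
      push_neg at hxa
      have hsub2 : (A : Set G) ⊆ {1, t ^ 2} := by
        intro x hx
        by_cases h1 : x = 1
        · exact Or.inl h1
        · exact Or.inr (hxa x hx h1)
      have hle2 := Set.ncard_le_ncard hsub2 (Set.toFinite _)
      have h2 : ({1, t ^ 2} : Set G).ncard ≤ 2 := by
        refine le_trans (Set.ncard_insert_le _ _) ?_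
        simp [Set.ncard_singleton]
      have h3 : (A : Set G).ncard = 2 * n := by
        rw [← Nat.card_coe_set_eq]
        exact hcard
      omega
    obtain ⟨x, hxA, hx1, hx2⟩ := hex
    have hxt : x ∈ Subgroup.zpowers t := hle (hSgen ▸ Subgroup.mem_top x)
    obtain ⟨k, hk⟩ := Subgroup.mem_zpowers_iff.mp hxt
    have h04 : k % 4 = 0 ∨ k % 4 = 1 ∨ k % 4 = 2 ∨ k % 4 = 3 := by omega
    rw [tz k] at hk
    rcases h04 with h | h | h | h
    · rw [h, zpow_zero] at hk
      exact hx1 hk.symm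
    · rw [h, zpow_one] at hk
      exact tnA (hk ▸ hxA)
    · rw [h, show (2:ℤ) = ((2:ℕ):ℤ) from rfl, zpow_natCast] at hk
      exact hx2 hk.symm
    · rw [h, show (3:ℤ) = ((3:ℕ):ℤ) from rfl, zpow_natCast, pow_succ] at hk
      exact t3nA (hk ▸ hxA)
  obtain ⟨sb, hsbS, hsbt, hsbt'⟩ := hexS0
  have hsbH : sb ∈ H := hS0H sb hsbS hsbt hsbt'
  have hm0 : orderOf sb ≠ 0 := (orderOf_pos sb).ne'
  -- the order of sb is odd
  have hmodd : orderOf sb % 2 = 1 := by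
    by_contra hpar2
    have h2 : 2 ∣ orderOf sb := by omega
    obtain ⟨k, hk⟩ := h2
    have hk0 : k ≠ 0 := by omega
    have hgcd : Nat.gcd (orderOf sb) k = k := by
      rw [hk, Nat.gcd_comm]
      exact Nat.gcd_eq_left (dvd_mul_left k 2)
    have hord : orderOf (sb ^ k) = 2 := by
      rw [orderOf_pow, hgcd, hk, Nat.mul_div_cancel _ (Nat.pos_of_ne_zero hk0)]
    have huniq := hG.unique_involution (sb ^ k)
      (A.pow_mem (hHA sb hsbH) k) hord
    refine haH ?_
    rw [← huniq]
    exact H.pow_mem hsbH k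
  -- parity of distances along the cycle of sb
  have parity : ∀ j : ℕ, (cayleyGraph G S).dist 1 (sb ^ j) % 2 = j % 2 := by
    intro j
    induction j with
    | zero => simp [SimpleGraph.dist_self]
    | succ j ihj =>
      have hjH : sb ^ j ∈ H := H.pow_mem hsbH j
      have hjH' : sb ^ (j + 1) ∈ H := H.pow_mem hsbH (j + 1)
      have hstep : sb ^ (j + 1) = sb ^ j * sb := pow_succ sb j
      have hub : (cayleyGraph G S).dist 1 (sb ^ (j + 1)) ≤
          (cayleyGraph G S).dist 1 (sb ^ j) + 1 := by
        rw [hstep]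
        exact dmul _ hjH sb hsbS
      have hlb : (cayleyGraph G S).dist 1 (sb ^ j) ≤
          (cayleyGraph G S).dist 1 (sb ^ (j + 1)) + 1 := by
        have he : sb ^ j = sb ^ (j + 1) * sb⁻¹ := by rw [hstep]; group
        rw [he]
        exact dmul _ hjH' sb⁻¹ (hSinv sb hsbS)
      have hne2 : (cayleyGraph G S).dist 1 (sb ^ (j + 1)) ≠
          (cayleyGraph G S).dist 1 (sb ^ j) := by
        intro heq
        rcases Nat.eq_zero_or_pos ((cayleyGraph G S).dist 1 (sb ^ j)) with h0 | hpos
        · have e1 : sb ^ j = 1 := dzero _ hjH h0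
          have e2 : sb ^ (j + 1) = 1 := dzero _ hjH' (by omega)
          have e3 : sb = 1 := by
            rw [hstep, e1, one_mul] at e2
            exact e2
          exact hS1 (e3 ▸ hsbS)
        · exact main ((cayleyGraph G S).dist 1 (sb ^ j)) (sb ^ j) hjH sb hsbS hsbt hsbt'
            hpos rfl (by rw [← hstep, heq])
      omega
  have hfin := parity (orderOf sb)
  rw [pow_orderOf_eq_one, SimpleGraph.dist_self] at hfin
  omega
end

section
/- Let G be a generalized dicyclic group generated by A and t, let S be an inverse-closed subset of G∖{1} with ⟨S⟩ = G, let s ∈ S ∩ A be such that H = ⟨S∖{s,s⁻¹}⟩ ≠ G. Then G is the disjoint union of the left cosets sⁱH for 0 ≤ i ≤ [G:H] − 1, and the index [G:H] divides the order of s. -/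
open SimpleGraph Pointwise

/-- `G` is the disjoint union of the cosets `sⁱH`, `0 ≤ i ≤ [G:H] - 1`, and
`[G:H]` divides `o(s)`. -/
theorem coset_decomposition
    {G : Type*} [Group G] (A : Subgroup G) (t : G) (hG : IsGenDicyclic A t)
    (S : Set G) (hS1 : (1 : G) ∉ S) (hSinv : ∀ x ∈ S, x⁻¹ ∈ S)
    (hSgen : Subgroup.closure S = ⊤)
    (s : G) (hsS : s ∈ S) (hsA : s ∈ A)
    (H : Subgroup G) (hHdef : H = Subgroup.closure (S \ {s, s⁻¹})) (hH : H ≠ ⊤) :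
    (∀ g : G, ∃! i : ℕ, i < H.index ∧ g ∈ (s ^ i) • (H : Set G)) ∧
      H.index ∣ orderOf s := by
  classical
  -- t * x * t⁻¹ = x⁻¹ for x ∈ A
  have htconj : ∀ x ∈ A, t * x * t⁻¹ = x⁻¹ := by
    intro x hx
    have h := hG.conj x⁻¹ (A.inv_mem hx)
    rw [inv_inv] at h
    calc t * x * t⁻¹ = t * (t⁻¹ * x⁻¹ * t) * t⁻¹ := by rw [h]
    _ = x⁻¹ := by group
  -- every element of G lies in A or A·t
  have hcover : ∀ g : G, g ∈ A ∨ g * t⁻¹ ∈ A := by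
    let K : Subgroup G :=
      { carrier := {g | g ∈ A ∨ g * t⁻¹ ∈ A}
        one_mem' := Or.inl A.one_mem
        mul_mem' := by
          rintro g₁ g₂ (h1 | h1) (h2 | h2)
          · exact Or.inl (A.mul_mem h1 h2)
          · refine Or.inr ?_
            rw [mul_assoc]
            exact A.mul_mem h1 h2
          · refine Or.inr ?_
            have e : g₁ * g₂ * t⁻¹ = (g₁ * t⁻¹) * (t * g₂ * t⁻¹) := by group
            rw [e, htconj g₂ h2]
            exact A.mul_mem h1 (A.inv_mem h2)
          · refine Or.inl ?_
            have e : g₁ * g₂ = (g₁ * t⁻¹) * (t * (g₂ * t⁻¹) * t⁻¹) * t ^ 2 := by group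
            rw [e, htconj _ h2]
            exact A.mul_mem (A.mul_mem h1 (A.inv_mem h2)) hG.t_sq_mem
        inv_mem' := by
          rintro g (h | h)
          · exact Or.inl (A.inv_mem h)
          · refine Or.inr ?_
            have e : g⁻¹ * t⁻¹ = (t⁻¹ * (g * t⁻¹)⁻¹ * t) * (t ^ 2)⁻¹ := by group
            rw [e, hG.conj _ (A.inv_mem h), inv_inv]
            exact A.mul_mem h (A.inv_mem hG.t_sq_mem) }
    have hle : Subgroup.closure ((A : Set G) ∪ {t}) ≤ K := by
      rw [Subgroup.closure_le]
      rintro x (hx | hx)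
      · exact Or.inl hx
      · rcases hx with rfl
        exact Or.inr (by rw [mul_inv_cancel]; exact A.one_mem)
    intro g
    exact hle (by rw [hG.gen]; trivial)
  -- conjugation by any element outside A inverts A
  have hconj' : ∀ g : G, g ∉ A → ∀ x ∈ A, g⁻¹ * x * g = x⁻¹ := by
    intro g hg x hx
    rcases hcover g with h | h
    · exact absurd h hg
    have h1 : (g * t⁻¹)⁻¹ * x * (g * t⁻¹) = x := by
      have hc := hG.comm x hx (g * t⁻¹) h
      calc (g * t⁻¹)⁻¹ * x * (g * t⁻¹) = (g * t⁻¹)⁻¹ * (x * (g * t⁻¹)) := by group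
      _ = (g * t⁻¹)⁻¹ * ((g * t⁻¹) * x) := by rw [hc]
      _ = x := by group
    calc g⁻¹ * x * g = t⁻¹ * ((g * t⁻¹)⁻¹ * x * (g * t⁻¹)) * t := by group
    _ = t⁻¹ * x * t := by rw [h1]
    _ = x⁻¹ := hG.conj x hx
  -- every element of G either commutes with all powers of s or inverts them
  have key : ∀ h : G, (∀ j : ℤ, h * s ^ j = s ^ j * h) ∨ (∀ j : ℤ, h * s ^ j = s ^ (-j) * h) := by
    intro h
    by_cases hh : h ∈ A
    · exact Or.inl fun j => hG.comm h hh (s ^ j) (A.zpow_mem hsA j)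
    · refine Or.inr fun j => ?_
      have h1 : h⁻¹ * s * h = s⁻¹ := hconj' h hh s hsA
      have h2 : (h⁻¹ * s * (h⁻¹)⁻¹) ^ (-j) = h⁻¹ * s ^ (-j) * (h⁻¹)⁻¹ := conj_zpow
      rw [inv_inv] at h2
      have h3 : h⁻¹ * s ^ (-j) * h = s ^ j := by
        rw [← h2, h1, inv_zpow, ← zpow_neg, neg_neg]
      calc h * s ^ j = h * (h⁻¹ * s ^ (-j) * h) := by rw [h3]
      _ = s ^ (-j) * h := by group
  -- every g ∈ G is of the form s^i * h with h ∈ H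
  have hform : ∀ g : G, ∃ i : ℤ, (s ^ i)⁻¹ * g ∈ H := by
    let K2 : Subgroup G :=
      { carrier := {g | ∃ i : ℤ, (s ^ i)⁻¹ * g ∈ H}
        one_mem' := ⟨0, by simpa using H.one_mem⟩
        mul_mem' := by
          rintro g₁ g₂ ⟨i, hi⟩ ⟨j, hj⟩
          have g1e : s ^ i * ((s ^ i)⁻¹ * g₁) = g₁ := by group
          have g2e : s ^ j * ((s ^ j)⁻¹ * g₂) = g₂ := by group
          rcases key ((s ^ i)⁻¹ * g₁) with hc | hc
          · refine ⟨i + j, ?_⟩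
            have e : (s ^ (i + j))⁻¹ * (g₁ * g₂)
                = ((s ^ i)⁻¹ * g₁) * ((s ^ j)⁻¹ * g₂) := by
              calc (s ^ (i + j))⁻¹ * (g₁ * g₂)
                  = (s ^ (i + j))⁻¹ * ((s ^ i * ((s ^ i)⁻¹ * g₁)) * (s ^ j * ((s ^ j)⁻¹ * g₂))) := by
                    rw [g1e, g2e]
                _ = (s ^ (i + j))⁻¹ * (s ^ i * (((s ^ i)⁻¹ * g₁) * s ^ j) * ((s ^ j)⁻¹ * g₂)) := by
                    group
                _ = (s ^ (i + j))⁻¹ * (s ^ i * (s ^ j * ((s ^ i)⁻¹ * g₁)) * ((s ^ j)⁻¹ * g₂)) := by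
                    rw [hc j]
                _ = ((s ^ i)⁻¹ * g₁) * ((s ^ j)⁻¹ * g₂) := by group
            rw [e]; exact H.mul_mem hi hj
          · refine ⟨i + (-j), ?_⟩
            have e : (s ^ (i + (-j)))⁻¹ * (g₁ * g₂)
                = ((s ^ i)⁻¹ * g₁) * ((s ^ j)⁻¹ * g₂) := by
              calc (s ^ (i + (-j)))⁻¹ * (g₁ * g₂)
                  = (s ^ (i + (-j)))⁻¹ * ((s ^ i * ((s ^ i)⁻¹ * g₁)) * (s ^ j * ((s ^ j)⁻¹ * g₂))) := by
                    rw [g1e, g2e]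
                _ = (s ^ (i + (-j)))⁻¹ * (s ^ i * (((s ^ i)⁻¹ * g₁) * s ^ j) * ((s ^ j)⁻¹ * g₂)) := by
                    group
                _ = (s ^ (i + (-j)))⁻¹ * (s ^ i * (s ^ (-j) * ((s ^ i)⁻¹ * g₁)) * ((s ^ j)⁻¹ * g₂)) := by
                    rw [hc j]
                _ = ((s ^ i)⁻¹ * g₁) * ((s ^ j)⁻¹ * g₂) := by group
            rw [e]; exact H.mul_mem hi hj
        inv_mem' := by
          rintro g ⟨i, hi⟩
          have g1e : s ^ i * ((s ^ i)⁻¹ * g) = g := by group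
          rcases key ((s ^ i)⁻¹ * g)⁻¹ with hc | hc
          · refine ⟨-i, ?_⟩
            have e : (s ^ (-i : ℤ))⁻¹ * g⁻¹ = ((s ^ i)⁻¹ * g)⁻¹ := by
              calc (s ^ (-i : ℤ))⁻¹ * g⁻¹
                  = (s ^ (-i : ℤ))⁻¹ * (s ^ i * ((s ^ i)⁻¹ * g))⁻¹ := by rw [g1e]
                _ = s ^ i * (((s ^ i)⁻¹ * g)⁻¹ * s ^ (-i)) := by group
                _ = s ^ i * (s ^ (-i) * ((s ^ i)⁻¹ * g)⁻¹) := by rw [hc (-i)]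
                _ = ((s ^ i)⁻¹ * g)⁻¹ := by group
            rw [e]; exact H.inv_mem hi
          · refine ⟨i, ?_⟩
            have e : (s ^ i)⁻¹ * g⁻¹ = ((s ^ i)⁻¹ * g)⁻¹ := by
              calc (s ^ i)⁻¹ * g⁻¹
                  = (s ^ i)⁻¹ * (s ^ i * ((s ^ i)⁻¹ * g))⁻¹ := by rw [g1e]
                _ = (s ^ i)⁻¹ * (((s ^ i)⁻¹ * g)⁻¹ * s ^ (-i)) := by group
                _ = (s ^ i)⁻¹ * (s ^ (- -i) * ((s ^ i)⁻¹ * g)⁻¹) := by rw [hc (-i)]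
                _ = ((s ^ i)⁻¹ * g)⁻¹ := by group
            rw [e]; exact H.inv_mem hi }
    have hle : Subgroup.closure S ≤ K2 := by
      rw [Subgroup.closure_le]
      intro x hx
      by_cases hx1 : x = s
      · exact ⟨1, by rw [hx1]; simpa using H.one_mem⟩
      by_cases hx2 : x = s⁻¹
      · exact ⟨-1, by rw [hx2]; simpa using H.one_mem⟩
      · exact ⟨0, by
          simpa using hHdef ▸ Subgroup.subset_closure ⟨hx, by simp [hx1, hx2]⟩⟩
    intro g
    exact hle (by rw [hSgen]; trivial)
  -- exponents landing in H form a subgroup of ℤ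
  let D : AddSubgroup ℤ :=
    { carrier := {i | s ^ i ∈ H}
      zero_mem' := by simpa using H.one_mem
      add_mem' := by
        intro a b ha hb
        simpa [zpow_add] using H.mul_mem ha hb
      neg_mem' := by
        intro a ha
        simpa [zpow_neg] using H.inv_mem ha }
  obtain ⟨a, ha⟩ := Int.subgroup_cyclic D
  set d : ℕ := a.natAbs with hd
  have hdm : ∀ i : ℤ, s ^ i ∈ H ↔ (d : ℤ) ∣ i := by
    intro i
    have h0 : s ^ i ∈ H ↔ i ∈ AddSubgroup.closure {a} := by rw [← ha]; exact Iff.rfl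
    rw [h0, AddSubgroup.mem_closure_singleton]
    constructor
    · rintro ⟨n, rfl⟩
      exact (Int.natAbs_dvd).2 ⟨n, by rw [smul_eq_mul]; ring⟩
    · intro hdvd
      obtain ⟨n, rfl⟩ := (Int.natAbs_dvd).1 hdvd
      exact ⟨n, by rw [smul_eq_mul]; ring⟩
  haveI hAfin : Finite A := by
    obtain ⟨n, hn1, hcA⟩ := hG.card
    exact Nat.finite_of_card_ne_zero (by omega)
  have hmpos : 0 < orderOf s := by
    have e := Subgroup.orderOf_coe (⟨s, hsA⟩ : A)
    rw [show ((⟨s, hsA⟩ : A) : G) = s from rfl] at e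
    rw [e]
    exact orderOf_pos _
  have hdvd : d ∣ orderOf s := by
    have h1 : s ^ ((orderOf s : ℤ)) ∈ H := by
      rw [zpow_natCast, pow_orderOf_eq_one]; exact H.one_mem
    exact_mod_cast (hdm _).1 h1
  have hdpos : 0 < d := by
    rcases Nat.eq_zero_or_pos d with h0 | h0
    · rw [h0] at hdvd
      exact absurd (Nat.eq_zero_of_zero_dvd hdvd) hmpos.ne'
    · exact h0
  have hcos : ∀ (i : ℕ) (g : G), g ∈ (s ^ i) • (H : Set G) ↔ s ^ (-(i : ℤ)) * g ∈ H := by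
    intro i g
    rw [mem_leftCoset_iff, ← zpow_natCast s i, ← zpow_neg]
    exact Iff.rfl
  have main : ∀ g : G, ∃! i : ℕ, i < d ∧ g ∈ (s ^ i) • (H : Set G) := by
    intro g
    obtain ⟨i, hi⟩ := hform g
    set r : ℕ := (i % d).toNat with hr
    have hrd : (r : ℤ) = i % d :=
      Int.toNat_of_nonneg (Int.emod_nonneg i (by exact_mod_cast hdpos.ne'))
    have hrlt : r < d := by
      have h1 := Int.emod_lt_of_pos i (show (0:ℤ) < d by exact_mod_cast hdpos)
      omega
    have hri : s ^ (-(r : ℤ)) * g ∈ H := by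
      have e : s ^ (-(r : ℤ)) * g = s ^ (i - r) * ((s ^ i)⁻¹ * g) := by group
      rw [e]
      refine H.mul_mem ((hdm _).2 ⟨i / d, ?_⟩) hi
      have h2 := Int.mul_ediv_add_emod i (d : ℤ)
      rw [hrd]; linarith
    refine ⟨r, ⟨hrlt, (hcos r g).2 hri⟩, ?_⟩
    rintro j ⟨hjd, hjmem⟩
    rw [hcos] at hjmem
    have h3 : s ^ ((j : ℤ) - r) ∈ H := by
      have e : s ^ ((j : ℤ) - r) = (s ^ (-(r : ℤ)) * g) * (s ^ (-(j : ℤ)) * g)⁻¹ := by group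
      rw [e]; exact H.mul_mem hri (H.inv_mem hjmem)
    have h4 := Int.eq_zero_of_abs_lt_dvd ((hdm _).1 h3) (by rw [abs_lt]; omega)
    omega
  have hind : H.index = d := by
    have hbij : Function.Bijective (fun i : Fin d => ((s ^ (i : ℕ) : G) : G ⧸ H)) := by
      constructor
      · intro i j hij
        simp only [QuotientGroup.eq] at hij
        have h3 : s ^ ((j : ℤ) - (i : ℤ)) ∈ H := by
          have e : s ^ ((j : ℤ) - (i : ℤ)) = (s ^ (i : ℕ))⁻¹ * s ^ (j : ℕ) := by
            rw [← zpow_natCast s (i : ℕ), ← zpow_natCast s (j : ℕ)]; group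
          rw [e]; exact hij
        have h4 := Int.eq_zero_of_abs_lt_dvd ((hdm _).1 h3)
          (by rw [abs_lt]; constructor <;> [omega; omega])
        have := i.isLt; have := j.isLt
        apply Fin.ext; omega
      · intro q
        obtain ⟨g, rfl⟩ := QuotientGroup.mk_surjective q
        obtain ⟨r, ⟨hrlt, hmem⟩, -⟩ := main g
        refine ⟨⟨r, hrlt⟩, ?_⟩
        show ((s ^ r : G) : G ⧸ H) = (g : G ⧸ H)
        rw [QuotientGroup.eq]
        exact (mem_leftCoset_iff _).1 hmem
    rw [Subgroup.index_eq_card, ← Nat.card_eq_of_bijective _ hbij, Nat.card_eq_fintype_card,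
      Fintype.card_fin]
  constructor
  · rw [hind]; exact main
  · rw [hind]; exact hdvd
end

section
/- Let G be a generalized dicyclic group generated by A and t, let S be an inverse-closed subset of G∖{1} with ⟨S⟩ = G, let s ∈ S ∩ A be such that H = ⟨S∖{s,s⁻¹}⟩ ≠ G. Then in the Cayley graph Cay(G,S), for each h ∈ H and each 0 ≤ i ≤ [G:H] − 1, the vertex sⁱh ∈ sⁱH has exactly two neighbors outside the coset sⁱH, namely s^{i−1}h ∈ s^{i−1}H and s^{i+1}h ∈ s^{i+1}H (these are distinct since the order of s exceeds 2); moreover, s^{i−1}H = s^{i+1}H if and only if [G:H] = 2 and the order of s is at least 4. -/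
open SimpleGraph Pointwise

section aux
variable {G : Type*} [Group G] {A : Subgroup G} {t : G}

lemma gdc_t_not_mem (hG : IsGenDicyclic A t) : t ∉ A := by
  intro ht
  have h1 := hG.conj t ht
  have ht2 : t ^ 2 = 1 := by
    have h2 : t = t⁻¹ := by
      calc t = t⁻¹ * t * t := by group
        _ = t⁻¹ := h1
    rw [pow_two]; nth_rewrite 1 [h2]; exact inv_mul_cancel t
  have := hG.t_sq_order
  rw [ht2, orderOf_one] at this
  norm_num at this

lemma gdc_cover (hG : IsGenDicyclic A t) (g : G) : g ∈ A ∨ g * t ∈ A := by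
  have ht2A : t * t ∈ A := by have := hG.t_sq_mem; rwa [pow_two] at this
  have hg : g ∈ Subgroup.closure ((A : Set G) ∪ {t}) := by rw [hG.gen]; exact Subgroup.mem_top g
  induction hg using Subgroup.closure_induction with
  | mem x hx =>
    rcases hx with hx | hx
    · exact Or.inl hx
    · right; rw [Set.mem_singleton_iff] at hx; rw [hx]; exact ht2A
  | one => exact Or.inl A.one_mem
  | mul x y hx' hy' ihx ihy =>
    rcases ihx with hx | hx
    · rcases ihy with hy | hy
      · exact Or.inl (A.mul_mem hx hy)
      · right; rw [mul_assoc]; exact A.mul_mem hx hy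
    · rcases ihy with hy | hy
      · right
        have e : x * y * t = (x * t) * (t⁻¹ * y * t) := by group
        rw [e, hG.conj y hy]
        exact A.mul_mem hx (A.inv_mem hy)
      · left
        have e : x * y = (x * t) * (t⁻¹ * (y * t) * t) * (t * t)⁻¹ := by group
        rw [e, hG.conj (y * t) hy]
        exact A.mul_mem (A.mul_mem hx (A.inv_mem hy)) (A.inv_mem ht2A)
  | inv x hx' ihx =>
    rcases ihx with hx | hx
    · exact Or.inl (A.inv_mem hx)
    · right
      have e : x⁻¹ * t = (t * t) * (t⁻¹ * (x * t)⁻¹ * t) := by group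
      rw [e, hG.conj (x * t)⁻¹ (A.inv_mem hx), inv_inv]
      exact A.mul_mem ht2A hx

lemma gdc_comm (hG : IsGenDicyclic A t) {s : G} (hsA : s ∈ A) (g : G) :
    g * s = s * g ∨ g * s = s⁻¹ * g := by
  rcases gdc_cover hG g with hg | hg
  · exact Or.inl (hG.comm g hg s hsA)
  · right
    calc g * s = (g * t) * (t⁻¹ * s * t) * t⁻¹ := by group
      _ = (g * t) * s⁻¹ * t⁻¹ := by rw [hG.conj s hsA]
      _ = s⁻¹ * (g * t) * t⁻¹ := by rw [hG.comm (g * t) hg s⁻¹ (A.inv_mem hsA)]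
      _ = s⁻¹ * g := by group

lemma gdc_sq (hG : IsGenDicyclic A t) {g : G} (hg : g ∉ A) : g * g = t ^ 2 := by
  have hgt : g * t ∈ A := (gdc_cover hG g).resolve_left hg
  have e : g * g = (g * t) * (t⁻¹ * (g * t) * t) * (t * t)⁻¹ := by group
  rw [hG.conj (g * t) hgt] at e
  have e2 : g * g = (t * t)⁻¹ := by rw [e]; group
  have h4 : t ^ 2 * t ^ 2 = 1 := by
    have := pow_orderOf_eq_one (t ^ 2)
    rwa [hG.t_sq_order, pow_two] at this
  rw [e2, ← pow_two]
  exact inv_eq_of_mul_eq_one_left h4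

lemma gdc_index_two_aux (hG : IsGenDicyclic A t) {s : G} (hsA : s ∈ A)
    {H : Subgroup G} (hs2 : s * s ∈ H) {S : Set G} (hSgen : Subgroup.closure S = ⊤)
    (hSK : ∀ x ∈ S, x ∈ H ∨ x * s ∈ H) (g : G) : g ∈ H ∨ g * s ∈ H := by
  let K : Subgroup G :=
    { carrier := {g : G | g ∈ H ∨ g * s ∈ H}
      one_mem' := Or.inl H.one_mem
      mul_mem' := by
        rintro a b (ha | ha) (hb | hb)
        · exact Or.inl (H.mul_mem ha hb)
        · right; rw [mul_assoc]; exact H.mul_mem ha hb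
        · rcases gdc_comm hG hsA b with hc | hc
          · right; rw [mul_assoc, hc, ← mul_assoc]; exact H.mul_mem ha hb
          · right
            have e : a * b * s = ((a * s) * (s * s)⁻¹) * b := by
              rw [mul_assoc a b s, hc]; group
            rw [e]; exact H.mul_mem (H.mul_mem ha (H.inv_mem hs2)) hb
        · rcases gdc_comm hG hsA b with hc | hc
          · left
            have e2 : s⁻¹ * b = b * s⁻¹ := by
              calc s⁻¹ * b = s⁻¹ * (b * s) * s⁻¹ := by group
                _ = s⁻¹ * (s * b) * s⁻¹ := by rw [hc]
                _ = b * s⁻¹ := by group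
            have e : a * b = (a * s) * ((b * s) * (s * s)⁻¹) := by
              have e3 : a * b = (a * s) * (s⁻¹ * b) := by group
              rw [e3, e2]; group
            rw [e]; exact H.mul_mem ha (H.mul_mem hb (H.inv_mem hs2))
          · left
            have e : a * b = (a * s) * (b * s) := by
              have e3 : a * b = (a * s) * (s⁻¹ * b) := by group
              rw [e3, ← hc]
            rw [e]; exact H.mul_mem ha hb
      inv_mem' := by
        rintro a (ha | ha)
        · exact Or.inl (H.inv_mem ha)
        · right
          have e : a⁻¹ * s = s * ((a * s)⁻¹ * s) := by group
          rcases gdc_comm hG hsA (a * s)⁻¹ with hc | hc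
          · rw [e, hc]
            have e2 : s * (s * (a * s)⁻¹) = (s * s) * (a * s)⁻¹ := by group
            rw [e2]; exact H.mul_mem hs2 (H.inv_mem ha)
          · rw [e, hc]
            have e2 : s * (s⁻¹ * (a * s)⁻¹) = (a * s)⁻¹ := by group
            rw [e2]; exact H.inv_mem ha }
  have hle : (⊤ : Subgroup G) ≤ K := by
    rw [← hSgen]; exact (Subgroup.closure_le K).mpr hSK
  exact hle (Subgroup.mem_top g)
end aux

/-- Lemma 2.3(i): every vertex `sⁱh ∈ sⁱH` has exactly two neighbours outside
`sⁱH`, namely `s^(i-1)h ∈ s^(i-1)H` and `s^(i+1)h ∈ s^(i+1)H` (distinct since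
`o(s) > 2`); moreover `s^(i-1)H = s^(i+1)H` iff `[G:H] = 2` and `o(s) ≥ 4`. -/
theorem neighbors_outside_coset_case_s
    {G : Type*} [Group G] (A : Subgroup G) (t : G) (hG : IsGenDicyclic A t)
    (S : Set G) (hS1 : (1 : G) ∉ S) (hSinv : ∀ x ∈ S, x⁻¹ ∈ S)
    (hSgen : Subgroup.closure S = ⊤)
    (s : G) (hsS : s ∈ S) (hsA : s ∈ A)
    (H : Subgroup G) (hHdef : H = Subgroup.closure (S \ {s, s⁻¹})) (hH : H ≠ ⊤)
    (h : G) (hh : h ∈ H) (i : ℤ) (hi0 : 0 ≤ i) (hi : i ≤ (H.index : ℤ) - 1) :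
    (cayleyGraph G S).neighborSet (s ^ i * h) ∩ {y | y ∉ (s ^ i) • (H : Set G)}
        = {s ^ (i - 1) * h, s ^ (i + 1) * h}
      ∧ s ^ (i - 1) * h ≠ s ^ (i + 1) * h
      ∧ s ^ (i - 1) * h ∈ (s ^ (i - 1)) • (H : Set G)
      ∧ s ^ (i + 1) * h ∈ (s ^ (i + 1)) • (H : Set G)
      ∧ ((s ^ (i - 1)) • (H : Set G) = (s ^ (i + 1)) • (H : Set G)
          ↔ H.index = 2 ∧ 4 ≤ orderOf s) := by
  have hsne1 : s ≠ 1 := fun e => hS1 (e ▸ hsS)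
  have hsinvA : s⁻¹ ∈ A := A.inv_mem hsA
  -- S \ {s, s⁻¹} ⊆ H
  have hSH : ∀ x ∈ S, x ≠ s → x ≠ s⁻¹ → x ∈ H := by
    intro x hx h1 h2
    rw [hHdef]
    exact Subgroup.subset_closure ⟨hx, by simp [h1, h2]⟩
  -- s ∉ H
  have hsH : s ∉ H := by
    intro hs
    apply hH
    rw [eq_top_iff, ← hSgen]
    refine (Subgroup.closure_le H).mpr ?_
    intro x hx
    by_cases hx1 : x = s
    · rw [hx1]; exact hs
    by_cases hx2 : x = s⁻¹
    · rw [hx2]; exact H.inv_mem hs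
    · exact hSH x hx hx1 hx2
  -- t² ∈ H
  have ht2H : t ^ 2 ∈ H := by
    have hu : ∃ u ∈ S, u ∉ A := by
      by_contra hc
      push_neg at hc
      have hle : (⊤ : Subgroup G) ≤ A := by
        rw [← hSgen]; exact (Subgroup.closure_le A).mpr hc
      exact gdc_t_not_mem hG (hle (Subgroup.mem_top t))
    obtain ⟨u, huS, huA⟩ := hu
    have h1 : u ∈ H := hSH u huS (fun e => huA (e ▸ hsA)) (fun e => huA (e ▸ hsinvA))
    have h2 := gdc_sq hG huA
    exact h2 ▸ H.mul_mem h1 h1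
  have hs2ne : s * s ≠ 1 := by
    intro he
    have hord : orderOf s = 2 := orderOf_eq_prime (by rwa [pow_two]) hsne1
    exact hsH (hG.unique_involution s hsA hord ▸ ht2H)
  have hAfin : Finite A := by
    obtain ⟨n, hn, hcard⟩ := hG.card
    exact Nat.finite_of_card_ne_zero (by omega)
  have hordpos : 0 < orderOf s := by
    have e := orderOf_injective A.subtype A.subtype_injective ⟨s, hsA⟩
    rw [Subgroup.coe_subtype] at e
    calc 0 < orderOf (⟨s, hsA⟩ : A) := orderOf_pos _
      _ = orderOf s := e.symm
  -- the two neighbours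
  have hpair : (s ^ i * h * s = s ^ (i + 1) * h ∧ s ^ i * h * s⁻¹ = s ^ (i - 1) * h)
      ∨ (s ^ i * h * s = s ^ (i - 1) * h ∧ s ^ i * h * s⁻¹ = s ^ (i + 1) * h) := by
    rcases gdc_comm hG hsA h with hc | hc
    · left
      have hc' : h * s⁻¹ = s⁻¹ * h := by
        calc h * s⁻¹ = s⁻¹ * (s * h) * s⁻¹ := by group
          _ = s⁻¹ * (h * s) * s⁻¹ := by rw [hc]
          _ = s⁻¹ * h := by group
      constructor
      · rw [mul_assoc, hc, ← mul_assoc, ← zpow_add_one]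
      · rw [mul_assoc, hc', ← mul_assoc, ← zpow_sub_one]
    · right
      have hc' : h * s⁻¹ = s * h := by
        calc h * s⁻¹ = s * (s⁻¹ * h) * s⁻¹ := by group
          _ = s * (h * s) * s⁻¹ := by rw [← hc]
          _ = s * h := by group
      constructor
      · rw [mul_assoc, hc, ← mul_assoc, ← zpow_sub_one]
      · rw [mul_assoc, hc', ← mul_assoc, ← zpow_add_one]
  -- the intersection in terms of g*s, g*s⁻¹
  have hmain : ∀ y : G, ((cayleyGraph G S).Adj (s ^ i * h) y ∧ y ∉ (s ^ i) • (H : Set G))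
      ↔ (y = s ^ i * h * s ∨ y = s ^ i * h * s⁻¹) := by
    intro y
    constructor
    · rintro ⟨⟨hne, hadj⟩, hout⟩
      have hx : (s ^ i * h)⁻¹ * y ∈ S := by
        rcases hadj with h1 | h2
        · have := hSinv _ h1; rwa [mul_inv_rev, inv_inv] at this
        · exact h2
      have hy : y = s ^ i * h * ((s ^ i * h)⁻¹ * y) := by group
      by_cases hx1 : (s ^ i * h)⁻¹ * y = s
      · left; rw [hy, hx1]
      by_cases hx2 : (s ^ i * h)⁻¹ * y = s⁻¹
      · right; rw [hy, hx2]
      · exfalso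
        apply hout
        have hxH : (s ^ i * h)⁻¹ * y ∈ H := hSH _ hx hx1 hx2
        refine Set.mem_smul_set.mpr ⟨h * ((s ^ i * h)⁻¹ * y), H.mul_mem hh hxH, ?_⟩
        rw [smul_eq_mul]; group
    · have hadjfwd : ∀ z, z ∈ S → z ∉ H → ((cayleyGraph G S).Adj (s ^ i * h) (s ^ i * h * z)
          ∧ s ^ i * h * z ∉ (s ^ i) • (H : Set G)) := by
        intro z hz hznH
        have hzne1 : z ≠ 1 := fun e => hS1 (e ▸ hz)
        refine ⟨⟨fun e => hzne1 (left_eq_mul.mp e), Or.inr ?_⟩, ?_⟩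
        · have e : (s ^ i * h)⁻¹ * (s ^ i * h * z) = z := by group
          rw [e]; exact hz
        · intro hmem
          obtain ⟨w, hw, hw2⟩ := Set.mem_smul_set.mp hmem
          rw [smul_eq_mul] at hw2
          have hwz : w = h * z := by
            apply mul_left_cancel (a := s ^ i)
            rw [hw2, mul_assoc]
          apply hznH
          have e2 : z = h⁻¹ * w := by rw [hwz]; group
          rw [e2]; exact H.mul_mem (H.inv_mem hh) hw
      rintro (rfl | rfl)
      · exact hadjfwd s hsS hsH
      · exact hadjfwd s⁻¹ (hSinv s hsS) (fun hc => hsH (by simpa using H.inv_mem hc))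
  refine ⟨?_, ?_, ?_, ?_, ?_⟩
  · -- the set equality
    ext y
    simp only [Set.mem_inter_iff, SimpleGraph.mem_neighborSet, Set.mem_setOf_eq,
      Set.mem_insert_iff, Set.mem_singleton_iff]
    rw [hmain y]
    rcases hpair with ⟨e1, e2⟩ | ⟨e1, e2⟩
    · rw [e1, e2]; exact or_comm
    · rw [e1, e2]
  · -- distinctness
    intro he
    have h1 : s ^ (i - 1) = s ^ (i + 1) := mul_right_cancel he
    have h2 : (s ^ (i - 1))⁻¹ * s ^ (i + 1) = 1 := by rw [← h1]; simp
    have h3 : (s ^ (i - 1))⁻¹ * s ^ (i + 1) = s * s := by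
      rw [← zpow_neg, ← zpow_add, show -(i - 1) + (i + 1) = 2 by ring, zpow_two]
    exact hs2ne (h3 ▸ h2)
  · exact Set.mem_smul_set.mpr ⟨h, hh, by rw [smul_eq_mul]⟩
  · exact Set.mem_smul_set.mpr ⟨h, hh, by rw [smul_eq_mul]⟩
  · constructor
    · intro hEq
      have hs2H : s * s ∈ H := by
        have h1 : s ^ (i - 1) ∈ (s ^ (i - 1)) • (H : Set G) :=
          Set.mem_smul_set.mpr ⟨1, H.one_mem, by rw [smul_eq_mul, mul_one]⟩
        rw [hEq] at h1
        obtain ⟨z, hz, hz2⟩ := Set.mem_smul_set.mp h1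
        rw [smul_eq_mul] at hz2
        have hz3 : z = (s * s)⁻¹ := by
          have e : z = (s ^ (i + 1))⁻¹ * s ^ (i - 1) := by rw [← hz2]; group
          rw [e, ← zpow_neg, ← zpow_add, show -(i + 1) + (i - 1) = -2 by ring,
            zpow_neg, zpow_two]
        have := H.inv_mem hz
        rwa [hz3, inv_inv] at this
      have hSK : ∀ x ∈ S, x ∈ H ∨ x * s ∈ H := by
        intro x hx
        by_cases hx1 : x = s
        · right; rw [hx1]; exact hs2H
        by_cases hx2 : x = s⁻¹
        · right; rw [hx2]; simpa using H.one_mem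
        · exact Or.inl (hSH x hx hx1 hx2)
      refine ⟨?_, ?_⟩
      · rw [Subgroup.index_eq_two_iff]
        refine ⟨s, fun b => ?_⟩
        rcases gdc_index_two_aux hG hsA hs2H hSgen hSK b with hb | hb
        · refine Or.inr ⟨hb, fun hbs => hsH ?_⟩
          have e : s = b⁻¹ * (b * s) := by group
          rw [e]; exact H.mul_mem (H.inv_mem hb) hbs
        · refine Or.inl ⟨hb, fun hbH => hsH ?_⟩
          have e : s = b⁻¹ * (b * s) := by group
          rw [e]; exact H.mul_mem (H.inv_mem hbH) hb
      · by_contra hlt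
        push_neg at hlt
        have hcase : orderOf s = 1 ∨ orderOf s = 2 ∨ orderOf s = 3 := by omega
        rcases hcase with h1 | h2 | h3
        · exact hsne1 (orderOf_eq_one_iff.mp h1)
        · apply hs2ne
          have := pow_orderOf_eq_one s
          rwa [h2, pow_two] at this
        · have hcube : s * s * s = 1 := by
            have := pow_orderOf_eq_one s
            rwa [h3, pow_succ, pow_two] at this
          have e : s * s = s⁻¹ := eq_inv_of_mul_eq_one_left hcube
          have hsi : s⁻¹ ∈ H := by rw [← e]; exact hs2H
          exact hsH (by simpa using H.inv_mem hsi)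
    · rintro ⟨hidx, -⟩
      have hs2H : s * s ∈ H := (Subgroup.mul_mem_iff_of_index_two hidx).mpr Iff.rfl
      ext y
      simp only [Set.mem_smul_set, smul_eq_mul]
      constructor
      · rintro ⟨z, hz, rfl⟩
        refine ⟨(s * s)⁻¹ * z, H.mul_mem (H.inv_mem hs2H) hz, ?_⟩
        rw [← mul_assoc]
        congr 1
        rw [← zpow_two, ← zpow_neg, ← zpow_add, show i + 1 + -2 = i - 1 by ring]
      · rintro ⟨z, hz, rfl⟩
        refine ⟨(s * s) * z, H.mul_mem hs2H hz, ?_⟩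
        rw [← mul_assoc]
        congr 1
        rw [← zpow_two, ← zpow_add, show i - 1 + 2 = i + 1 by ring]
end

section
/- Let G be a generalized dicyclic group generated by A and t, let S be an inverse-closed subset of G∖{1} with ⟨S⟩ = G, let s ∈ S ∩ A be such that ⟨S∖{s,s⁻¹}⟩ ≠ G. Then there exist vertices u,v of the Cayley graph Cay(G,S) at distance 2 having at least two common neighbors; in particular, if Cay(G,S) is distance-regular, then its intersection number c₂ satisfies c₂ ≥ 2. -/
open SimpleGraph Pointwise

/-- Lemma 2.3(ii): there are vertices at distance 2 with at least two common
neighbours; in particular `c₂ ≥ 2` if the Cayley graph is distance-regular. -/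
theorem c2_ge_two
    {G : Type*} [Group G] (A : Subgroup G) (t : G) (hG : IsGenDicyclic A t)
    (S : Set G) (hS1 : (1 : G) ∉ S) (hSinv : ∀ x ∈ S, x⁻¹ ∈ S)
    (hSgen : Subgroup.closure S = ⊤)
    (s : G) (hsS : s ∈ S) (hsA : s ∈ A)
    (hmin : Subgroup.closure (S \ {s, s⁻¹}) ≠ ⊤) :
    (∃ u v : G, (cayleyGraph G S).dist u v = 2 ∧
        2 ≤ ((cayleyGraph G S).neighborSet u ∩ (cayleyGraph G S).neighborSet v).ncard)
      ∧ ((cayleyGraph G S).IsDistRegular →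
          ∀ c2 : ℕ, (∀ u v : G, (cayleyGraph G S).dist u v = 2 →
              ((cayleyGraph G S).neighborSet u ∩ (cayleyGraph G S).neighborSet v).ncard = c2) →
            2 ≤ c2) := by
  classical
  obtain ⟨n, hn1, hcardA⟩ := hG.card
  -- basic commutation rule: y * t = t * y⁻¹ for y ∈ A
  have hyt : ∀ y ∈ A, y * t = t * y⁻¹ := by
    intro y hy
    have h := hG.conj y hy
    have : t * (t⁻¹ * y * t) = t * y⁻¹ := by rw [h]
    calc y * t = t * (t⁻¹ * y * t) := by group
      _ = t * y⁻¹ := this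
  have hty : ∀ y ∈ A, t * y = y⁻¹ * t := by
    intro y hy
    have h := hyt y hy
    calc t * y = y⁻¹ * (y * t * y) := by group
      _ = y⁻¹ * (t * y⁻¹ * y) := by rw [h]
      _ = y⁻¹ * t := by group
  -- decomposition G = A ∪ A t
  have hdecomp : ∀ g : G, g ∈ A ∨ ∃ x ∈ A, g = x * t := by
    intro g
    have hg : g ∈ Subgroup.closure ((A : Set G) ∪ {t}) := by
      rw [hG.gen]; trivial
    induction hg using Subgroup.closure_induction with
    | mem x hx =>
      rcases hx with hx | hx
      · exact Or.inl hx
      · exact Or.inr ⟨1, A.one_mem, by simp at hx; simp [hx]⟩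
    | one => exact Or.inl A.one_mem
    | mul x y hx hy ihx ihy =>
      rcases ihx with hxA | ⟨a, haA, rfl⟩ <;> rcases ihy with hyA | ⟨b, hbA, rfl⟩
      · exact Or.inl (A.mul_mem hxA hyA)
      · exact Or.inr ⟨x * b, A.mul_mem hxA hbA, by group⟩
      · refine Or.inr ⟨a * y⁻¹, A.mul_mem haA (A.inv_mem hyA), ?_⟩
        calc a * t * y = a * (t * y) := by group
          _ = a * (y⁻¹ * t) := by rw [hty y hyA]
          _ = a * y⁻¹ * t := by group
      · refine Or.inl ?_
        have heq : a * t * (b * t) = a * b⁻¹ * t ^ 2 := by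
          calc a * t * (b * t) = a * (t * b) * t := by group
            _ = a * (b⁻¹ * t) * t := by rw [hty b hbA]
            _ = a * b⁻¹ * t ^ 2 := by simp [pow_two, mul_assoc]
        rw [heq]
        exact A.mul_mem (A.mul_mem haA (A.inv_mem hbA)) hG.t_sq_mem
    | inv x hx ihx =>
      rcases ihx with hxA | ⟨a, haA, rfl⟩
      · exact Or.inl (A.inv_mem hxA)
      · refine Or.inr ⟨a * (t ^ 2)⁻¹, A.mul_mem haA (A.inv_mem hG.t_sq_mem), ?_⟩
        have := hyt a haA
        calc (a * t)⁻¹ = (t * a⁻¹)⁻¹ := by rw [this]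
          _ = a * (t ^ 2)⁻¹ * t := by group
  -- t ∉ A
  have htA : t ∉ A := by
    intro ht
    have hsq : ∀ x ∈ A, x * x = 1 := by
      intro x hx
      have h1 := hG.conj x hx
      have h2 := hG.comm x hx t ht
      have : x = x⁻¹ := by
        calc x = t⁻¹ * (t * x) := by group
          _ = t⁻¹ * (x * t) := by rw [← h2]
          _ = x⁻¹ := by rw [← h1]; group
      calc x * x = x * x⁻¹ := by rw [← this]
        _ = 1 := mul_inv_cancel x
    have hsub : (A : Set G) ⊆ {1, t ^ 2} := by
      intro x hx
      rcases eq_or_ne x 1 with h | h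
      · exact Or.inl h
      · refine Or.inr (hG.unique_involution x hx ?_)
        exact orderOf_eq_prime (by rw [pow_two]; exact hsq x hx) h
    have hle : Nat.card A ≤ 2 := by
      have hrw : Nat.card A = (A : Set G).ncard := Nat.card_coe_set_eq _
      rw [hrw]
      calc (A : Set G).ncard ≤ ({1, t ^ 2} : Set G).ncard :=
            Set.ncard_le_ncard hsub ((Set.finite_singleton _).insert _)
        _ ≤ 2 := by
            refine le_trans (Set.ncard_insert_le _ _) ?_
            simp
    omega
  -- A is finite, hence G is finite
  have hAfin : Finite A := by
    have : Nat.card A ≠ 0 := by omega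
    exact (Nat.card_ne_zero.mp this).2
  have hGfin : Finite G := by
    have hAfin' : (A : Set G).Finite := A.carrier.toFinite
    have : (Set.univ : Set G).Finite := by
      refine Set.Finite.subset (hAfin'.union (hAfin'.image (fun x => x * t))) ?_
      intro g _
      rcases hdecomp g with h | ⟨x, hx, rfl⟩
      · exact Or.inl h
      · exact Or.inr ⟨x, hx, rfl⟩
    exact Set.finite_univ_iff.mp this
  -- s ∉ H := closure (S \ {s, s⁻¹})
  set H := Subgroup.closure (S \ {s, s⁻¹}) with hH
  have hsubH : S \ {s, s⁻¹} ⊆ (H : Set G) := Subgroup.subset_closure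
  have hsH : s ∉ H := by
    intro hs
    apply hmin
    rw [eq_top_iff, ← hSgen]
    apply Subgroup.closure_le H |>.mpr
    intro x hx
    by_cases hx' : x ∈ ({s, s⁻¹} : Set G)
    · rcases hx' with rfl | hx'
      · exact hs
      · simp only [Set.mem_singleton_iff] at hx'
        subst hx'
        exact H.inv_mem hs
    · exact hsubH ⟨hx, hx'⟩
  -- pick q ∈ S \ A
  have hSA : ¬ S ⊆ (A : Set G) := by
    intro hsub
    exact htA (by
      have : Subgroup.closure S ≤ A := (Subgroup.closure_le A).mpr hsub
      rw [hSgen] at this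
      exact this trivial)
  obtain ⟨q, hqS, hqA⟩ := Set.not_subset.mp hSA
  have hs1 : s ≠ 1 := fun h => hS1 (h ▸ hsS)
  have hq1 : q ≠ 1 := fun h => hS1 (h ▸ hqS)
  have hsinvA : s⁻¹ ∈ A := A.inv_mem hsA
  have hqne : q ∉ ({s, s⁻¹} : Set G) := by
    rintro (rfl | hq)
    · exact hqA hsA
    · simp only [Set.mem_singleton_iff] at hq
      exact hqA (hq ▸ hsinvA)
  have hqH : q ∈ H := hsubH ⟨hqS, hqne⟩
  -- q⁻¹ * s * q = s⁻¹
  obtain ⟨x, hxA, hqx⟩ : ∃ x ∈ A, q = x * t := (hdecomp q).resolve_left hqA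
  have hconjq : q⁻¹ * s * q = s⁻¹ := by
    have h1 : x⁻¹ * s * x = s := by
      have h := hG.comm x hxA s hsA
      calc x⁻¹ * s * x = x⁻¹ * (s * x) := by group
        _ = x⁻¹ * (x * s) := by rw [← h]
        _ = s := by group
    calc q⁻¹ * s * q = t⁻¹ * (x⁻¹ * s * x) * t := by rw [hqx]; group
      _ = t⁻¹ * s * t := by rw [h1]
      _ = s⁻¹ := hG.conj s hsA
  -- s * q ∉ S
  have hsqA : s * q ∉ A := fun h => hqA (by
    have : s⁻¹ * (s * q) ∈ A := A.mul_mem hsinvA h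
    simpa using this)
  have hsqS : s * q ∉ S := by
    intro hmem
    apply hsH
    have hsqH : s * q ∈ H := by
      refine hsubH ⟨hmem, ?_⟩
      rintro (h | h)
      · exact hsqA (by rw [h]; exact hsA)
      · simp only [Set.mem_singleton_iff] at h
        exact hsqA (by rw [h]; exact hsinvA)
    have : (s * q) * q⁻¹ ∈ H := H.mul_mem hsqH (H.inv_mem hqH)
    simpa using this
  have hsq1 : s * q ≠ 1 := by
    intro h
    apply hqA
    have hq' : q = s⁻¹ := eq_inv_of_mul_eq_one_right h
    rw [hq']
    exact hsinvA
  have hsqne1' : (1 : G) ≠ s * q := fun h => hsq1 h.symm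
  set Γ := cayleyGraph G S with hΓ
  -- adjacencies
  have hadj_1s : Γ.Adj 1 s := ⟨fun h => hs1 h.symm, Or.inr (by simpa using hsS)⟩
  have hadj_1q : Γ.Adj 1 q := ⟨fun h => hq1 h.symm, Or.inr (by simpa using hqS)⟩
  have hadj_s_sq : Γ.Adj s (s * q) :=
    ⟨fun h => hq1 (left_eq_mul.mp h), Or.inr (by simpa using hqS)⟩
  have hadj_sq_s : Γ.Adj (s * q) s := hadj_s_sq.symm
  have hadj_sq_q : Γ.Adj (s * q) q := by
    refine ⟨?_, Or.inl ?_⟩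
    · intro h
      exact hs1 (mul_eq_right.mp h)
    · have : q⁻¹ * (s * q) = s⁻¹ := by rw [← hconjq]; group
      rw [this]
      exact hSinv s hsS
  have hnadj : ¬ Γ.Adj 1 (s * q) := by
    rintro ⟨-, h | h⟩
    · apply hsqS
      have : ((s * q)⁻¹ * 1)⁻¹ ∈ S := hSinv _ h
      simpa using this
    · exact hsqS (by simpa using h)
  -- distance is 2
  have hwalk : Γ.Walk 1 (s * q) := Walk.cons hadj_1s (Walk.cons hadj_s_sq Walk.nil)
  have hdle : Γ.dist 1 (s * q) ≤ 2 := by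
    have h := SimpleGraph.dist_le (Walk.cons hadj_1s (Walk.cons hadj_s_sq Walk.nil))
    simpa using h
  have hd0 : Γ.dist 1 (s * q) ≠ 0 := by
    rw [Ne, SimpleGraph.dist_eq_zero_iff_eq_or_not_reachable]
    push_neg
    exact ⟨hsqne1', ⟨hwalk⟩⟩
  have hd1 : Γ.dist 1 (s * q) ≠ 1 := by
    rw [Ne, SimpleGraph.dist_eq_one_iff_adj]
    exact hnadj
  have hdist : Γ.dist 1 (s * q) = 2 := by omega
  -- two common neighbours
  have hmem_s : s ∈ Γ.neighborSet 1 ∩ Γ.neighborSet (s * q) := ⟨hadj_1s, hadj_sq_s⟩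
  have hmem_q : q ∈ Γ.neighborSet 1 ∩ Γ.neighborSet (s * q) := ⟨hadj_1q, hadj_sq_q⟩
  have hne_sq : s ≠ q := fun h => hqA (h ▸ hsA)
  have hcard2 : 2 ≤ (Γ.neighborSet 1 ∩ Γ.neighborSet (s * q)).ncard := by
    have hfin : (Γ.neighborSet 1 ∩ Γ.neighborSet (s * q)).Finite := Set.toFinite _
    have := (Set.one_lt_ncard_iff hfin).mpr ⟨s, q, hmem_s, hmem_q, hne_sq⟩
    omega
  refine ⟨⟨1, s * q, hdist, hcard2⟩, ?_⟩
  intro _ c2 hc2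
  rw [← hc2 1 (s * q) hdist]
  exact hcard2
end
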